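/- arXiv:2012.06970 — 8 statements merged into one kernel-verified Lean document; each statement's English description precedes it below -/
import Mathlib

section
/- Let Γ be an m-regular graph and let u be an eigenvector of the adjacency matrix of Γ with eigenvalue θ taking exactly two distinct values a₀ and a₁ on the vertex set, with associated partition {C, C̄}. Then every vertex of C has the same number β₀ of neighbors in C̄, and every vertex of C̄ has the same number γ₁ of neighbors in C; i.e., C is a completely regular code with covering radius 1. -/
/-!
Count the neighbours of a vertex `v` by value: if `n₀` of them carry `a₀` and `n₁` carry `a₁`,
the eigenvalue equation and regularity give `n₀ a₀ + n₁ a₁ = θ u(v)` and `n₀ + n₁ = m`.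
Eliminating `n₀` yields `n₁ (a₁ - a₀) = (θ - m) a₀` when `u(v) = a₀`, so `n₁` does not depend on
`v`; symmetrically for the vertices carrying `a₁`.
-/

open Set

theorem finsum_mem_eq_ncard_mul {α R : Type*} [NonAssocSemiring R] {s : Set α} {f : α → R}
    {c : R} (hs : s.Finite) (hf : ∀ x ∈ s, f x = c) : ∑ᶠ x ∈ s, f x = s.ncard * c := by
  rw [finsum_mem_congr rfl hf, finsum_mem_eq_finite_toFinset_sum _ hs, Finset.sum_const,
    nsmul_eq_mul, ncard_eq_toFinset_card s hs]

theorem ncard_eq_mul_sub_of_forall_eq_or_eq {α : Type*} {s : Set α} {f : α → ℝ}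
    {a₀ a₁ : ℝ} (hs : s.Finite) (hf : ∀ x ∈ s, f x = a₀ ∨ f x = a₁) :
    ({x | x ∈ s ∧ f x = a₁}.ncard : ℝ) * (a₁ - a₀) = ∑ᶠ x ∈ s, f x - s.ncard * a₀ := by
  set t : Set α := {x | f x = a₁}
  have hsum₁ : ∑ᶠ x ∈ s ∩ t, f x = (s ∩ t).ncard * a₁ :=
    finsum_mem_eq_ncard_mul (hs.inter_of_left t) fun x hx => hx.2
  have hsum₀ : ∑ᶠ x ∈ s \ t, f x = (s \ t).ncard * a₀ :=
    finsum_mem_eq_ncard_mul hs.sdiff fun x hx => (hf x hx.1).resolve_right hx.2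
  have hcard : ((s ∩ t).ncard : ℝ) + (s \ t).ncard = s.ncard := by
    exact_mod_cast ncard_inter_add_ncard_sdiff_eq_ncard s t hs
  rw [← finsum_mem_inter_add_sdiff t hs, hsum₁, hsum₀, ← hcard]
  change ((s ∩ t).ncard : ℝ) * (a₁ - a₀) = _
  ring

theorem ncard_adj_eq_div_of_eigenvector {V : Type*} [Finite V] (G : SimpleGraph V) (m : ℕ)
    (hreg : ∀ v : V, {w | G.Adj v w}.ncard = m) (θ a₀ a₁ : ℝ) (ha : a₀ ≠ a₁) (u : V → ℝ)
    (heig : ∀ v : V, ∑ᶠ w ∈ {w | G.Adj v w}, u w = θ * u v)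
    (hval : ∀ v : V, u v = a₀ ∨ u v = a₁) (v : V) (hv : u v = a₀) :
    ({w | G.Adj v w ∧ u w = a₁}.ncard : ℝ) = (θ - m) * a₀ / (a₁ - a₀) := by
  have h := ncard_eq_mul_sub_of_forall_eq_or_eq (toFinite {w | G.Adj v w}) fun w _ => hval w
  rw [heig, hv, hreg] at h
  rw [eq_div_iff (sub_ne_zero.mpr ha.symm)]
  exact h.trans (by ring)

theorem stmt0_general {V : Type*} [Fintype V] (G : SimpleGraph V) (m : ℕ)
    (hreg : ∀ v : V, {w | G.Adj v w}.ncard = m)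
    (θ a₀ a₁ : ℝ) (ha : a₀ ≠ a₁) (u : V → ℝ)
    (heig : ∀ v : V, ∑ᶠ w ∈ {w | G.Adj v w}, u w = θ * u v)
    (hval : ∀ v : V, u v = a₀ ∨ u v = a₁) :
    ∃ β₀ γ₁ : ℕ,
      (∀ v : V, u v = a₀ → {w | G.Adj v w ∧ u w = a₁}.ncard = β₀) ∧
      (∀ v : V, u v = a₁ → {w | G.Adj v w ∧ u w = a₀}.ncard = γ₁) := by
  refine ⟨⌊(θ - m) * a₀ / (a₁ - a₀)⌋₊, ⌊(θ - m) * a₁ / (a₀ - a₁)⌋₊, fun v hv => ?_, fun v hv => ?_⟩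
  · rw [← ncard_adj_eq_div_of_eigenvector G m hreg θ a₀ a₁ ha u heig hval v hv, Nat.floor_natCast]
  · rw [← ncard_adj_eq_div_of_eigenvector G m hreg θ a₁ a₀ ha.symm u heig
      (fun w => (hval w).symm) v hv, Nat.floor_natCast]

/-- In an `m`-regular graph, if an eigenvector `u` with eigenvalue `θ`
takes exactly two distinct values `a₀`, `a₁`, then the associated two-part partition
is equitable: every vertex with value `a₀` has the same number `β₀` of neighbors with
value `a₁`, and every vertex with value `a₁` has the same number `γ₁` of neighbors
with value `a₀`. -/
theorem stmt0 {V : Type*} [Fintype V] (G : SimpleGraph V) (m : ℕ)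
    (hreg : ∀ v : V, {w | G.Adj v w}.ncard = m)
    (θ a₀ a₁ : ℝ) (ha : a₀ ≠ a₁) (u : V → ℝ)
    (heig : ∀ v : V, ∑ᶠ w ∈ {w | G.Adj v w}, u w = θ * u v)
    (hval : ∀ v : V, u v = a₀ ∨ u v = a₁)
    (h0 : ∃ v, u v = a₀) (h1 : ∃ v, u v = a₁) :
    ∃ β₀ γ₁ : ℕ,
      (∀ v : V, u v = a₀ → {w | G.Adj v w ∧ u w = a₁}.ncard = β₀) ∧
      (∀ v : V, u v = a₁ → {w | G.Adj v w ∧ u w = a₀}.ncard = γ₁) :=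
  stmt0_general G m hreg θ a₀ a₁ ha u heig hval
end

section
/- Let Γ be an m-regular graph, u an eigenvector of Γ with eigenvalue θ taking exactly three values a₀, a₁, a₂, with associated partition {C⁰, C¹, C²}. Suppose there are no edges between C⁰ and C², and every vertex of C¹ is adjacent to exactly β₁ vertices of C². Then: every vertex of C⁰ has the same number of neighbors in C¹; every vertex of C¹ has the same number of neighbors in C⁰ and the same number in C¹; and every vertex of C² has the same number of neighbors in C¹. In particular C⁰ is a completely regular code in Γ. -/
/-!
Split the neighbourhood of a vertex `v` by the values of `u`: with `nᵢ(v)` the number of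
neighbours in `Cⁱ`, regularity gives `n₀ + n₁ + n₂ = m` and the eigenvalue equation gives
`a₀ n₀ + a₁ n₁ + a₂ n₂ = θ u(v)`. For two vertices of the same class these two linear
equations have the same right-hand sides, so once one of the counts is known to agree (it is
`0` on `C⁰` and `C²` because there are no `C⁰`–`C²` edges, and `β₁` on `C¹`), the other two
agree as well: the remaining 2×2 system has determinant the difference of two distinct
values.
-/

open Finset

namespace Set

theorem ncard_sep_finset_coe {α : Type*} (s : Finset α) (p : α → Prop) [DecidablePred p] :
    {x ∈ (s : Set α) | p x}.ncard = #{x ∈ s | p x} := by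
  rw [← ncard_coe_finset, coe_filter]; rfl

theorem ncard_eq_sum_ncard_fiberwise {α M : Type*} {s : Set α} {t : Finset M}
    {f : α → M} (hs : s.Finite) (hf : MapsTo f s t) :
    s.ncard = ∑ b ∈ t, {x ∈ s | f x = b}.ncard := by
  classical
  obtain ⟨s, rfl⟩ := hs.exists_finset_coe
  simp only [ncard_coe_finset, ncard_sep_finset_coe]
  exact card_eq_sum_card_fiberwise hf

theorem finsum_mem_eq_sum_ncard_fiberwise_nsmul {α M : Type*} [AddCommMonoid M]
    {s : Set α} {t : Finset M} {f : α → M} (hs : s.Finite) (hf : MapsTo f s t) :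
    ∑ᶠ x ∈ s, f x = ∑ b ∈ t, {x ∈ s | f x = b}.ncard • b := by
  classical
  obtain ⟨s, rfl⟩ := hs.exists_finset_coe
  simp only [finsum_mem_coe_finset, ncard_sep_finset_coe, ← sum_const]
  exact (sum_fiberwise_of_maps_to' hf id).symm

theorem ncard_fiber_eq_of_ncard_eq_of_finsum_eq {α K : Type*} [Field K] [CharZero K]
    {s s' : Set α} {f : α → K} {A : Finset K} (hs : s.Finite) (hs' : s'.Finite)
    (hf : MapsTo f s A) (hf' : MapsTo f s' A) {b c : K} (hbc : b ≠ c)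
    (hcard : s.ncard = s'.ncard) (hsum : ∑ᶠ x ∈ s, f x = ∑ᶠ x ∈ s', f x)
    (hrest : ∀ a ∈ A, a ≠ b → a ≠ c → {x ∈ s | f x = a}.ncard = {x ∈ s' | f x = a}.ncard) :
    {x ∈ s | f x = c}.ncard = {x ∈ s' | f x = c}.ncard := by
  classical
  set t := insert b (insert c A)
  have hAt : (A : Set K) ⊆ t := fun a ha => by simp [t, ha]
  set δ : K → K := fun a => ({x ∈ s | f x = a}.ncard : K) - {x ∈ s' | f x = a}.ncard
  have hδ : ∀ a ∈ t, a ≠ b ∧ a ≠ c → δ a = 0 := by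
    rintro a ha ⟨hab, hac⟩
    simp only [t, Finset.mem_insert, hab, hac, false_or] at ha
    simp [δ, hrest a ha hab hac]
  have hcount : δ b + δ c = 0 := by
    rw [← Finset.sum_eq_add b c hbc hδ (by simp [t]) (by simp [t])]
    simp only [δ, Finset.sum_sub_distrib, ← Nat.cast_sum,
      ← ncard_eq_sum_ncard_fiberwise hs (hf.mono_right hAt),
      ← ncard_eq_sum_ncard_fiberwise hs' (hf'.mono_right hAt), hcard, sub_self]
  have hweight : b * δ b + c * δ c = 0 := by
    rw [← Finset.sum_eq_add (s := t) (f := fun a => a * δ a) b c hbc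
      (fun a ha h => by simp [hδ a ha h]) (by simp [t]) (by simp [t])]
    simp only [δ, mul_sub, Finset.sum_sub_distrib, mul_comm _ (Nat.cast _), ← nsmul_eq_mul,
      ← finsum_mem_eq_sum_ncard_fiberwise_nsmul hs (hf.mono_right hAt),
      ← finsum_mem_eq_sum_ncard_fiberwise_nsmul hs' (hf'.mono_right hAt), hsum, sub_self]
  have hδc : (c - b) * δ c = 0 := by linear_combination hweight - b * hcount
  exact_mod_cast sub_eq_zero.mp ((mul_eq_zero.mp hδc).resolve_left (sub_ne_zero.mpr hbc.symm))

end Set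

theorem exists_forall_eq_of_forall_eq {α β : Type*} [Nonempty β] {p : α → Prop} {f : α → β}
    (h : ∀ x y, p x → p y → f x = f y) : ∃ c, ∀ x, p x → f x = c := by
  by_cases hp : ∃ x, p x
  · obtain ⟨x, hx⟩ := hp
    exact ⟨f x, fun y hy => h y x hy hx⟩
  · exact ⟨Classical.arbitrary β, fun x hx => (hp ⟨x, hx⟩).elim⟩

theorem stmt1_general {V : Type*} [Fintype V] (G : SimpleGraph V) (m : ℕ)
    (hreg : ∀ v : V, {w | G.Adj v w}.ncard = m)
    (θ a₀ a₁ a₂ : ℝ) (h01 : a₀ ≠ a₁) (h12 : a₁ ≠ a₂)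
    (u : V → ℝ)
    (heig : ∀ v : V, ∑ᶠ w ∈ {w | G.Adj v w}, u w = θ * u v)
    (hval : ∀ v : V, u v = a₀ ∨ u v = a₁ ∨ u v = a₂)
    (hnoedge : ∀ v w : V, u v = a₀ → u w = a₂ → ¬ G.Adj v w)
    (β₁ : ℕ)
    (hβ₁ : ∀ v : V, u v = a₁ → {w | G.Adj v w ∧ u w = a₂}.ncard = β₁) :
    (∃ β₀ : ℕ, ∀ v : V, u v = a₀ → {w | G.Adj v w ∧ u w = a₁}.ncard = β₀) ∧
    (∃ γ₁ : ℕ, ∀ v : V, u v = a₁ → {w | G.Adj v w ∧ u w = a₀}.ncard = γ₁) ∧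
    (∃ α₁ : ℕ, ∀ v : V, u v = a₁ → {w | G.Adj v w ∧ u w = a₁}.ncard = α₁) ∧
    (∃ γ₂ : ℕ, ∀ v : V, u v = a₂ → {w | G.Adj v w ∧ u w = a₁}.ncard = γ₂) := by
  set A : Finset ℝ := {a₀, a₁, a₂}
  have fiber_eq : ∀ {b c : ℝ} {v v' : V}, b ≠ c → u v = u v' →
      (∀ a ∈ A, a ≠ b → a ≠ c →
        {w | G.Adj v w ∧ u w = a}.ncard = {w | G.Adj v' w ∧ u w = a}.ncard) →
      {w | G.Adj v w ∧ u w = c}.ncard = {w | G.Adj v' w ∧ u w = c}.ncard :=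
    fun hbc hvv' hrest => Set.ncard_fiber_eq_of_ncard_eq_of_finsum_eq
      (s := {w | G.Adj _ w}) (s' := {w | G.Adj _ w}) (Set.toFinite _) (Set.toFinite _)
      (fun w _ => by simpa [A] using hval w) (fun w _ => by simpa [A] using hval w) hbc
      (by rw [hreg, hreg]) (by rw [heig, heig, hvv']) hrest
  have no_a₂ : ∀ v, u v = a₀ → {w | G.Adj v w ∧ u w = a₂}.ncard = 0 := fun v hv =>
    (Set.ncard_eq_zero).mpr (Set.eq_empty_of_forall_notMem fun w ⟨hvw, hw⟩ =>
      hnoedge v w hv hw hvw)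
  have no_a₀ : ∀ v, u v = a₂ → {w | G.Adj v w ∧ u w = a₀}.ncard = 0 := fun v hv =>
    (Set.ncard_eq_zero).mpr (Set.eq_empty_of_forall_notMem fun w ⟨hvw, hw⟩ =>
      hnoedge w v hw hv hvw.symm)
  refine ⟨?_, ?_, ?_, ?_⟩ <;> apply exists_forall_eq_of_forall_eq <;> intro v v' hv hv'
  · refine fiber_eq h01 (hv.trans hv'.symm) fun a ha ha₀ ha₁ => ?_
    obtain rfl : a = a₂ := by simpa [A, ha₀, ha₁] using ha
    rw [no_a₂ v hv, no_a₂ v' hv']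
  · refine fiber_eq h01.symm (hv.trans hv'.symm) fun a ha ha₁ ha₀ => ?_
    obtain rfl : a = a₂ := by simpa [A, ha₀, ha₁] using ha
    rw [hβ₁ v hv, hβ₁ v' hv']
  · refine fiber_eq h01 (hv.trans hv'.symm) fun a ha ha₀ ha₁ => ?_
    obtain rfl : a = a₂ := by simpa [A, ha₀, ha₁] using ha
    rw [hβ₁ v hv, hβ₁ v' hv']
  · refine fiber_eq h12.symm (hv.trans hv'.symm) fun a ha ha₂ ha₁ => ?_
    obtain rfl : a = a₀ := by simpa [A, ha₂, ha₁] using ha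
    rw [no_a₀ v hv, no_a₀ v' hv']

/-- In an `m`-regular graph, let `u` be an eigenvector with eigenvalue `θ`
taking exactly three values `a₀, a₁, a₂` with level sets `C⁰, C¹, C²`. If there are no
edges between `C⁰` and `C²` and every vertex of `C¹` has exactly `β₁` neighbors in `C²`,
then each vertex of `C⁰` has a constant number of neighbors in `C¹`, each vertex of `C¹`
has constant numbers of neighbors in `C⁰` and in `C¹`, and each vertex of `C²` has a
constant number of neighbors in `C¹`; in particular `C⁰` is completely regular. -/
theorem stmt1 {V : Type*} [Fintype V] (G : SimpleGraph V) (m : ℕ)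
    (hreg : ∀ v : V, {w | G.Adj v w}.ncard = m)
    (θ a₀ a₁ a₂ : ℝ) (h01 : a₀ ≠ a₁) (h02 : a₀ ≠ a₂) (h12 : a₁ ≠ a₂)
    (u : V → ℝ)
    (heig : ∀ v : V, ∑ᶠ w ∈ {w | G.Adj v w}, u w = θ * u v)
    (hval : ∀ v : V, u v = a₀ ∨ u v = a₁ ∨ u v = a₂)
    (h0 : ∃ v, u v = a₀) (h1 : ∃ v, u v = a₁) (h2 : ∃ v, u v = a₂)
    (hnoedge : ∀ v w : V, u v = a₀ → u w = a₂ → ¬ G.Adj v w)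
    (β₁ : ℕ)
    (hβ₁ : ∀ v : V, u v = a₁ → {w | G.Adj v w ∧ u w = a₂}.ncard = β₁) :
    (∃ β₀ : ℕ, ∀ v : V, u v = a₀ → {w | G.Adj v w ∧ u w = a₁}.ncard = β₀) ∧
    (∃ γ₁ : ℕ, ∀ v : V, u v = a₁ → {w | G.Adj v w ∧ u w = a₀}.ncard = γ₁) ∧
    (∃ α₁ : ℕ, ∀ v : V, u v = a₁ → {w | G.Adj v w ∧ u w = a₁}.ncard = α₁) ∧
    (∃ γ₂ : ℕ, ∀ v : V, u v = a₂ → {w | G.Adj v w ∧ u w = a₁}.ncard = γ₂) :=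
  stmt1_general G m hreg θ a₀ a₁ a₂ h01 h12 u heig hval hnoedge β₁ hβ₁
end

section
/- Let Q be the Steiner quadruple system of weight-4 codewords of the extended Hamming code of length n. Let C⁰ and C² be the sets of 6-subsets of {1,…,n} containing respectively 0 and 3 blocks of Q. Then no vertex of C⁰ is adjacent in the Johnson graph J(n,6) to a vertex of C² (i.e., |x ∩ y| ≤ 4 for x ∈ C⁰, y ∈ C²). -/
/-!
Two distinct blocks `B₁, B₂` inside the 6-set `y` meet in at most two points (three common points
lie in a unique block) and in at least two (their union fits in `y`). Hence `B₁ ∆ B₂` is a third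
block inside `y`, and no point lies in all three blocks. If `|x ∩ y| ≥ 5`, then `y \ x` has at most
one point, so one of the three blocks avoids it and lies in `x`.
-/

namespace Finset

variable {α : Type*} [DecidableEq α]

theorem card_add_card_le_card_add_card_inter {s t u : Finset α} (hs : s ⊆ u) (ht : t ⊆ u) :
    #s + #t ≤ #u + #(s ∩ t) := by
  rw [← card_union_add_card_inter]
  exact Nat.add_le_add_right (card_le_card (union_subset hs ht)) _

theorem inter_inter_symmDiff_eq_empty (s t : Finset α) : s ∩ t ∩ symmDiff s t = ∅ := by
  ext a
  simp only [mem_inter, mem_symmDiff, notMem_empty, iff_false]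
  tauto

theorem exists_subset_of_card_sdiff_le_one {x y s₁ s₂ s₃ : Finset α} (hyx : #(y \ x) ≤ 1)
    (h₁ : s₁ ⊆ y) (h₂ : s₂ ⊆ y) (h₃ : s₃ ⊆ y) (hempty : s₁ ∩ s₂ ∩ s₃ = ∅) :
    s₁ ⊆ x ∨ s₂ ⊆ x ∨ s₃ ⊆ x := by
  have outside {s : Finset α} (hs : s ⊆ y) (hsx : ¬ s ⊆ x) : ∃ a ∈ s, a ∈ y \ x := by
    obtain ⟨a, has, hax⟩ := not_subset.mp hsx
    exact ⟨a, has, mem_sdiff.mpr ⟨hs has, hax⟩⟩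
  by_contra! h
  obtain ⟨a₁, ha₁, ha₁'⟩ := outside h₁ h.1
  obtain ⟨a₂, ha₂, ha₂'⟩ := outside h₂ h.2.1
  obtain ⟨a₃, ha₃, ha₃'⟩ := outside h₃ h.2.2
  obtain rfl := card_le_one.mp hyx a₁ ha₁' a₂ ha₂'
  obtain rfl := card_le_one.mp hyx a₁ ha₁' a₃ ha₃'
  simpa [hempty] using mem_inter.mpr ⟨mem_inter.mpr ⟨ha₁, ha₂⟩, ha₃⟩

end Finset

open Finset

theorem card_inter_le_two_of_steiner {α : Type*} [DecidableEq α] {Q : Set (Finset α)}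
    (hSQS : ∀ s : Finset α, s.card = 3 → ∃! B, B ∈ Q ∧ s ⊆ B)
    {B₁ B₂ : Finset α} (hB₁ : B₁ ∈ Q) (hB₂ : B₂ ∈ Q) (hne : B₁ ≠ B₂) : #(B₁ ∩ B₂) ≤ 2 := by
  by_contra! h
  obtain ⟨s, hs, hs3⟩ := exists_subset_card_eq (show 3 ≤ #(B₁ ∩ B₂) by omega)
  exact hne <| (hSQS s hs3).unique ⟨hB₁, hs.trans inter_subset_left⟩
    ⟨hB₂, hs.trans inter_subset_right⟩

theorem stmt6_general (n : ℕ) (Q : Set (Finset (Fin n)))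
    (hQ4 : ∀ B ∈ Q, B.card = 4)
    (hSQS : ∀ s : Finset (Fin n), s.card = 3 → ∃! B, B ∈ Q ∧ s ⊆ B)
    (hclosed : ∀ B ∈ Q, ∀ B' ∈ Q, (B ∩ B').card = 2 → symmDiff B B' ∈ Q)
    (x y : Finset (Fin n)) (hy6 : y.card = 6)
    (hx0 : {B ∈ Q | B ⊆ x}.ncard = 0)
    (hy3 : {B ∈ Q | B ⊆ y}.ncard = 3) :
    (x ∩ y).card ≤ 4 := by
  by_contra! hxy
  have hyx : #(y \ x) ≤ 1 := by
    have := card_sdiff_add_card_inter y x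
    rw [inter_comm] at this
    omega
  have hnone : ∀ B ∈ Q, ¬ B ⊆ x := fun B hB hBx =>
    ((Set.ncard_eq_zero (Set.toFinite _)).mp hx0).subset ⟨hB, hBx⟩
  obtain ⟨B₁, B₂, ⟨hB₁, hB₁y⟩, ⟨hB₂, hB₂y⟩, hne⟩ :=
    (Set.one_lt_ncard_iff (Set.toFinite _)).mp (show 1 < {B ∈ Q | B ⊆ y}.ncard by omega)
  have hinter : #(B₁ ∩ B₂) = 2 := by
    have := card_add_card_le_card_add_card_inter hB₁y hB₂y
    have := card_inter_le_two_of_steiner hSQS hB₁ hB₂ hne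
    rw [hQ4 B₁ hB₁, hQ4 B₂ hB₂, hy6] at *
    omega
  have hB₃y : symmDiff B₁ B₂ ⊆ y := symmDiff_le_sup.trans (union_subset hB₁y hB₂y)
  rcases exists_subset_of_card_sdiff_le_one hyx hB₁y hB₂y hB₃y
      (inter_inter_symmDiff_eq_empty B₁ B₂) with h | h | h
  · exact hnone B₁ hB₁ h
  · exact hnone B₂ hB₂ h
  · exact hnone _ (hclosed B₁ hB₁ B₂ hB₂ hinter) h

/-- Let `Q` be the Steiner quadruple system of the extended Hamming code
(a 3-(n,4,1) design closed under symmetric difference of blocks meeting in 2 points).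
If the 6-subset `x` contains no block of `Q` and the 6-subset `y` contains 3 blocks of
`Q`, then `x` and `y` are not adjacent in the Johnson graph `J(n,6)`,
i.e. `|x ∩ y| ≤ 4`. -/
theorem stmt6 (n : ℕ) (Q : Set (Finset (Fin n)))
    (hQ4 : ∀ B ∈ Q, B.card = 4)
    (hSQS : ∀ s : Finset (Fin n), s.card = 3 → ∃! B, B ∈ Q ∧ s ⊆ B)
    (hclosed : ∀ B ∈ Q, ∀ B' ∈ Q, (B ∩ B').card = 2 → symmDiff B B' ∈ Q)
    (x y : Finset (Fin n)) (hx6 : x.card = 6) (hy6 : y.card = 6)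
    (hx0 : {B ∈ Q | B ⊆ x}.ncard = 0)
    (hy3 : {B ∈ Q | B ⊆ y}.ncard = 3) :
    (x ∩ y).card ≤ 4 :=
  stmt6_general n Q hQ4 hSQS hclosed x y hy6 hx0 hy3
end

section
/- Let Q be the Steiner quadruple system of the extended Hamming code of length n, and let C¹ be the set of 6-subsets of {1,…,n} containing exactly one block of Q, and C² the set of 6-subsets containing exactly 3 blocks. Then every vertex of C¹ is adjacent in the Johnson graph J(n,6) to exactly 6 vertices of C². -/
/-!
In a 6-set `z`, two distinct blocks `B₁, B₂` of a Steiner quadruple system meet in exactly two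
points (three common points would force `B₁ = B₂`), so `B₁ ∪ B₂ = z`. Every further block of `z`
contains `(z \ B₁) ∪ (z \ B₂) = z \ (B₁ ∩ B₂)`, a 4-set; by closure this is the block `B₁ ∆ B₂`.
Hence a 6-set contains 0, 1 or 3 blocks, and when it contains 3, every point of `z` avoids one of
them.

Let `B₀` be the only block in `y`. A neighbour `z` of `y` with three blocks contains a block
avoiding the point of `z \ y`, i.e. a block of `y`, so `B₀ ⊆ z` and `z = B₀ ∪ D` for a second
block `D` meeting `B₀` in two points; replacing `D` by `B₀ ∆ D` if necessary, `D` passes through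
a fixed `a ∈ B₀`. So `z` is determined by the point `t ∈ y \ B₀` of `D` and the second point
`w ∈ B₀ \ {a}` of `D ∩ B₀`, and conversely every such pair `(t, w)` gives a neighbour
`B₀ ∪ D(t, a, w)` with three blocks. This gives `2 * 3 = 6` neighbours.
-/

open Finset

variable {α : Type*}

structure IsSteinerQuadrupleSystem (Q : Set (Finset α)) : Prop where
  card_eq : ∀ B ∈ Q, B.card = 4
  existsUnique : ∀ s : Finset α, s.card = 3 → ∃! B, B ∈ Q ∧ s ⊆ B

noncomputable def blockThrough (Q : Set (Finset α)) (s : Finset α) : Finset α :=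
  Classical.epsilon fun B => B ∈ Q ∧ s ⊆ B

def IsClosedUnderSymmDiff [DecidableEq α] (Q : Set (Finset α)) : Prop :=
  ∀ B ∈ Q, ∀ B' ∈ Q, (B ∩ B').card = 2 → symmDiff B B' ∈ Q

theorem card_triple_eq_three [DecidableEq α] {s : Finset α} {a t w : α} (ht : t ∉ s) (ha : a ∈ s)
    (hw : w ∈ s.erase a) : ({t, a, w} : Finset α).card = 3 :=
  card_eq_three.mpr ⟨t, a, w, fun h => ht (h ▸ ha), fun h => ht (h ▸ mem_of_mem_erase hw),
    fun h => ne_of_mem_erase hw h.symm, rfl⟩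

namespace IsSteinerQuadrupleSystem

variable {Q : Set (Finset α)} {s y z B B' B₀ B₁ B₂ : Finset α}

theorem nonempty (hQ : IsSteinerQuadrupleSystem Q) (hB : B ∈ Q) : B.Nonempty :=
  card_pos.mp (by rw [hQ.card_eq B hB]; norm_num)

theorem blockThrough_spec (hQ : IsSteinerQuadrupleSystem Q) (hs : s.card = 3) :
    blockThrough Q s ∈ Q ∧ s ⊆ blockThrough Q s :=
  Classical.epsilon_spec (hQ.existsUnique s hs).exists

theorem eq_blockThrough (hQ : IsSteinerQuadrupleSystem Q) (hs : s.card = 3) (hB : B ∈ Q)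
    (hsB : s ⊆ B) : B = blockThrough Q s :=
  (hQ.existsUnique s hs).unique ⟨hB, hsB⟩ (hQ.blockThrough_spec hs)

variable [DecidableEq α]

theorem eq_of_three_le_card_inter (hQ : IsSteinerQuadrupleSystem Q) (hB : B ∈ Q) (hB' : B' ∈ Q)
    (h : 3 ≤ (B ∩ B').card) : B = B' := by
  obtain ⟨s, hs, hs3⟩ := exists_subset_card_eq h
  exact (hQ.existsUnique s hs3).unique ⟨hB, hs.trans inter_subset_left⟩
    ⟨hB', hs.trans inter_subset_right⟩

theorem card_inter_eq_two (hQ : IsSteinerQuadrupleSystem Q) (hz : z.card = 6) (hB : B ∈ Q)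
    (hB' : B' ∈ Q) (hBz : B ⊆ z) (hB'z : B' ⊆ z) (hne : B ≠ B') : (B ∩ B').card = 2 := by
  have hlt : (B ∩ B').card < 3 := by
    by_contra! h
    exact hne (hQ.eq_of_three_le_card_inter hB hB' h)
  have hle := hz ▸ card_le_card (union_subset hBz hB'z)
  have hsum := card_union_add_card_inter B B'
  rw [hQ.card_eq B hB, hQ.card_eq B' hB'] at hsum
  omega

theorem union_eq (hQ : IsSteinerQuadrupleSystem Q) (hz : z.card = 6) (hB : B ∈ Q)
    (hB' : B' ∈ Q) (hBz : B ⊆ z) (hB'z : B' ⊆ z) (hne : B ≠ B') : B ∪ B' = z := by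
  have hinter := hQ.card_inter_eq_two hz hB hB' hBz hB'z hne
  have hsum := card_union_add_card_inter B B'
  rw [hQ.card_eq B hB, hQ.card_eq B' hB'] at hsum
  exact eq_of_subset_of_card_le (union_subset hBz hB'z) (by omega)

theorem eq_sdiff_inter (hQ : IsSteinerQuadrupleSystem Q) (hz : z.card = 6) (hB₁ : B₁ ∈ Q)
    (hB₂ : B₂ ∈ Q) (hB : B ∈ Q) (hB₁z : B₁ ⊆ z) (hB₂z : B₂ ⊆ z) (hBz : B ⊆ z) (h₁₂ : B₁ ≠ B₂)
    (hne₁ : B ≠ B₁) (hne₂ : B ≠ B₂) : B = z \ (B₁ ∩ B₂) := by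
  have hsub : z \ (B₁ ∩ B₂) ⊆ B := by
    rw [sdiff_inter_distrib_right]
    refine union_subset (sdiff_le_iff.mpr ?_) (sdiff_le_iff.mpr ?_)
    · exact (hQ.union_eq hz hB₁ hB hB₁z hBz hne₁.symm).ge
    · exact (hQ.union_eq hz hB₂ hB hB₂z hBz hne₂.symm).ge
  refine (eq_of_subset_of_card_le hsub ?_).symm
  rw [hQ.card_eq B hB, card_sdiff_of_subset (inter_subset_left.trans hB₁z), hz,
    hQ.card_inter_eq_two hz hB₁ hB₂ hB₁z hB₂z h₁₂]

theorem symmDiff_ne_left (hQ : IsSteinerQuadrupleSystem Q) (hB₂ : B₂ ∈ Q) :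
    symmDiff B₁ B₂ ≠ B₁ :=
  fun h => (hQ.nonempty hB₂).ne_empty (symmDiff_eq_left.mp h)

theorem symmDiff_ne_right (hQ : IsSteinerQuadrupleSystem Q) (hB₁ : B₁ ∈ Q) :
    symmDiff B₁ B₂ ≠ B₂ :=
  fun h => (hQ.nonempty hB₁).ne_empty (symmDiff_eq_right.mp h)

theorem symmDiff_mem (hQ : IsSteinerQuadrupleSystem Q) (hclosed : IsClosedUnderSymmDiff Q)
    (hz : z.card = 6) (hB₁ : B₁ ∈ Q) (hB₂ : B₂ ∈ Q) (hB₁z : B₁ ⊆ z) (hB₂z : B₂ ⊆ z)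
    (h₁₂ : B₁ ≠ B₂) : symmDiff B₁ B₂ ∈ Q :=
  hclosed B₁ hB₁ B₂ hB₂ (hQ.card_inter_eq_two hz hB₁ hB₂ hB₁z hB₂z h₁₂)

theorem blocks_subset_eq (hQ : IsSteinerQuadrupleSystem Q) (hclosed : IsClosedUnderSymmDiff Q)
    (hz : z.card = 6) (hB₁ : B₁ ∈ Q) (hB₂ : B₂ ∈ Q) (hB₁z : B₁ ⊆ z) (hB₂z : B₂ ⊆ z)
    (h₁₂ : B₁ ≠ B₂) :
    {B ∈ Q | B ⊆ z} = {B₁, B₂, symmDiff B₁ B₂} := by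
  have hB₃ := hQ.symmDiff_mem hclosed hz hB₁ hB₂ hB₁z hB₂z h₁₂
  have hB₃z : symmDiff B₁ B₂ ⊆ z := symmDiff_le_sup.trans (union_subset hB₁z hB₂z)
  ext B
  simp only [Set.mem_ofPred_eq, Set.mem_insert_iff, Set.mem_singleton_iff]
  constructor
  · rintro ⟨hB, hBz⟩
    by_contra! hne
    apply hne.2.2
    rw [hQ.eq_sdiff_inter hz hB₁ hB₂ hB hB₁z hB₂z hBz h₁₂ hne.1 hne.2.1,
      hQ.eq_sdiff_inter hz hB₁ hB₂ hB₃ hB₁z hB₂z hB₃z h₁₂ (hQ.symmDiff_ne_left hB₂)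
        (hQ.symmDiff_ne_right hB₁)]
  · rintro (rfl | rfl | rfl)
    exacts [⟨hB₁, hB₁z⟩, ⟨hB₂, hB₂z⟩, ⟨hB₃, hB₃z⟩]

theorem ncard_blocks_subset_eq_three (hQ : IsSteinerQuadrupleSystem Q)
    (hclosed : IsClosedUnderSymmDiff Q) (hz : z.card = 6)
    (hB₁ : B₁ ∈ Q) (hB₂ : B₂ ∈ Q) (hB₁z : B₁ ⊆ z) (hB₂z : B₂ ⊆ z) (h₁₂ : B₁ ≠ B₂) :
    {B ∈ Q | B ⊆ z}.ncard = 3 := by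
  rw [hQ.blocks_subset_eq hclosed hz hB₁ hB₂ hB₁z hB₂z h₁₂]
  exact Set.ncard_eq_three.mpr ⟨B₁, B₂, _, h₁₂, (hQ.symmDiff_ne_left hB₂).symm,
    (hQ.symmDiff_ne_right hB₁).symm, rfl⟩

theorem exists_mem_subset_notMem (hQ : IsSteinerQuadrupleSystem Q)
    (hclosed : IsClosedUnderSymmDiff Q) (hz : z.card = 6)
    (hB₁ : B₁ ∈ Q) (hB₂ : B₂ ∈ Q) (hB₁z : B₁ ⊆ z) (hB₂z : B₂ ⊆ z) (h₁₂ : B₁ ≠ B₂) (q : α) :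
    ∃ B ∈ Q, B ⊆ z ∧ q ∉ B := by
  by_cases hq₁ : q ∈ B₁
  · by_cases hq₂ : q ∈ B₂
    · refine ⟨symmDiff B₁ B₂, hQ.symmDiff_mem hclosed hz hB₁ hB₂ hB₁z hB₂z h₁₂,
        symmDiff_le_sup.trans (union_subset hB₁z hB₂z), ?_⟩
      simp [mem_symmDiff, hq₁, hq₂]
    · exact ⟨B₂, hB₂, hB₂z, hq₂⟩
  · exact ⟨B₁, hB₁, hB₁z, hq₁⟩

section Neighbour

variable {a t w : α}

theorem inter_blockThrough_eq (hQ : IsSteinerQuadrupleSystem Q)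
    (hy : ∀ B, B ∈ Q ∧ B ⊆ y ↔ B = B₀) (ht : t ∈ y \ B₀) (ha : a ∈ B₀) (hw : w ∈ B₀.erase a) :
    y ∩ blockThrough Q {t, a, w} = {t, a, w} := by
  have h3 := card_triple_eq_three (mem_sdiff.mp ht).2 ha hw
  obtain ⟨hD, htaw⟩ := hQ.blockThrough_spec h3
  have hB₀y := ((hy B₀).mpr rfl).2
  have hDy : ¬ blockThrough Q {t, a, w} ⊆ y := fun hDy =>
    (mem_sdiff.mp ht).2 ((hy _).mp ⟨hD, hDy⟩ ▸ htaw (by simp))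
  have htaw_y : ({t, a, w} : Finset α) ⊆ y := by
    simp only [insert_subset_iff, singleton_subset_iff]
    exact ⟨(mem_sdiff.mp ht).1, hB₀y ha, hB₀y (mem_of_mem_erase hw)⟩
  refine (eq_of_subset_of_card_le (subset_inter htaw_y htaw) ?_).symm
  have hlt := card_lt_card ⟨inter_subset_right, fun h => hDy (h.trans inter_subset_left)⟩
  rw [hQ.card_eq _ hD] at hlt
  omega

theorem blockThrough_inter_eq (hQ : IsSteinerQuadrupleSystem Q)
    (hy : ∀ B, B ∈ Q ∧ B ⊆ y ↔ B = B₀) (ht : t ∈ y \ B₀) (ha : a ∈ B₀) (hw : w ∈ B₀.erase a) :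
    blockThrough Q {t, a, w} ∩ B₀ = {a, w} := by
  have hB₀y := ((hy B₀).mpr rfl).2
  calc blockThrough Q {t, a, w} ∩ B₀ = (y ∩ blockThrough Q {t, a, w}) ∩ B₀ := by
        rw [inter_comm y, inter_assoc, inter_eq_right.mpr hB₀y]
    _ = {a, w} := by
        rw [hQ.inter_blockThrough_eq hy ht ha hw]
        ext x
        simp only [mem_inter, mem_insert, mem_singleton]
        constructor
        · rintro ⟨rfl | rfl | rfl, hx⟩
          exacts [absurd hx (mem_sdiff.mp ht).2, Or.inl rfl, Or.inr rfl]
        · rintro (rfl | rfl)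
          exacts [⟨Or.inr (Or.inl rfl), ha⟩, ⟨Or.inr (Or.inr rfl), mem_of_mem_erase hw⟩]

theorem card_union_blockThrough (hQ : IsSteinerQuadrupleSystem Q)
    (hy : ∀ B, B ∈ Q ∧ B ⊆ y ↔ B = B₀) (ht : t ∈ y \ B₀) (ha : a ∈ B₀) (hw : w ∈ B₀.erase a) :
    (B₀ ∪ blockThrough Q {t, a, w}).card = 6 := by
  have hsum := card_union_add_card_inter B₀ (blockThrough Q {t, a, w})
  rw [inter_comm, hQ.blockThrough_inter_eq hy ht ha hw, card_pair (ne_of_mem_erase hw).symm,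
    hQ.card_eq _ ((hy B₀).mpr rfl).1,
    hQ.card_eq _ (hQ.blockThrough_spec (card_triple_eq_three (mem_sdiff.mp ht).2 ha hw)).1]
    at hsum
  omega

theorem inter_union_blockThrough (hQ : IsSteinerQuadrupleSystem Q)
    (hy : ∀ B, B ∈ Q ∧ B ⊆ y ↔ B = B₀) (ht : t ∈ y \ B₀) (ha : a ∈ B₀) (hw : w ∈ B₀.erase a) :
    y ∩ (B₀ ∪ blockThrough Q {t, a, w}) = insert t B₀ := by
  rw [inter_union_distrib_left, inter_eq_right.mpr ((hy B₀).mpr rfl).2,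
    hQ.inter_blockThrough_eq hy ht ha hw]
  ext x
  simp only [mem_union, mem_insert, mem_singleton]
  constructor
  · rintro (hx | rfl | rfl | rfl)
    exacts [Or.inr hx, Or.inl rfl, Or.inr ha, Or.inr (mem_of_mem_erase hw)]
  · rintro (rfl | hx)
    exacts [Or.inr (Or.inl rfl), Or.inl hx]

theorem blockThrough_ne (hQ : IsSteinerQuadrupleSystem Q) (ht : t ∉ B₀) (ha : a ∈ B₀)
    (hw : w ∈ B₀.erase a) : blockThrough Q {t, a, w} ≠ B₀ := fun h =>
  ht (h ▸ (hQ.blockThrough_spec (card_triple_eq_three ht ha hw)).2 (mem_insert_self t _))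

theorem union_blockThrough_mem (hQ : IsSteinerQuadrupleSystem Q)
    (hclosed : IsClosedUnderSymmDiff Q) (hy : ∀ B, B ∈ Q ∧ B ⊆ y ↔ B = B₀) (ht : t ∈ y \ B₀)
    (ha : a ∈ B₀) (hw : w ∈ B₀.erase a) :
    (B₀ ∪ blockThrough Q {t, a, w}).card = 6 ∧
      {B ∈ Q | B ⊆ B₀ ∪ blockThrough Q {t, a, w}}.ncard = 3 ∧
      (y ∩ (B₀ ∪ blockThrough Q {t, a, w})).card = 5 := by
  have hD := (hQ.blockThrough_spec (card_triple_eq_three (mem_sdiff.mp ht).2 ha hw)).1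
  have hB₀ := ((hy B₀).mpr rfl).1
  have hz := hQ.card_union_blockThrough hy ht ha hw
  refine ⟨hz, hQ.ncard_blocks_subset_eq_three hclosed hz hB₀ hD subset_union_left
    subset_union_right (hQ.blockThrough_ne (mem_sdiff.mp ht).2 ha hw).symm, ?_⟩
  rw [hQ.inter_union_blockThrough hy ht ha hw, card_insert_of_notMem (mem_sdiff.mp ht).2,
    hQ.card_eq _ hB₀]

theorem injOn_union_blockThrough (hQ : IsSteinerQuadrupleSystem Q)
    (hy : ∀ B, B ∈ Q ∧ B ⊆ y ↔ B = B₀) (ha : a ∈ B₀) :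
    Set.InjOn (fun p : α × α => B₀ ∪ blockThrough Q {p.1, a, p.2})
      ↑((y \ B₀) ×ˢ B₀.erase a) := by
  rintro ⟨t, w⟩ hp ⟨t', w'⟩ hp' heq
  simp only [coe_product, Set.mem_prod, mem_coe] at hp hp'
  dsimp only at heq
  obtain rfl : t = t' := by
    have h := hQ.inter_union_blockThrough hy hp.1 ha hp.2
    rw [heq, hQ.inter_union_blockThrough hy hp'.1 ha hp'.2] at h
    exact ((insert_inj (mem_sdiff.mp hp'.1).2).mp h).symm
  have ht := (mem_sdiff.mp hp.1).2
  obtain ⟨hD, htaw⟩ := hQ.blockThrough_spec (card_triple_eq_three ht ha hp.2)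
  obtain ⟨hD', htaw'⟩ := hQ.blockThrough_spec (card_triple_eq_three ht ha hp'.2)
  -- A third block of `B₀ ∪ D` through `a` would be `(B₀ ∪ D) \ (B₀ ∩ D)`, which misses `a`.
  have hDD : blockThrough Q {t, a, w} = blockThrough Q {t, a, w'} := by
    by_contra hne
    have hD'eq := hQ.eq_sdiff_inter (hQ.card_union_blockThrough hy hp.1 ha hp.2)
      ((hy B₀).mpr rfl).1 hD hD' subset_union_left subset_union_right
      (heq ▸ subset_union_right) (hQ.blockThrough_ne ht ha hp.2).symm
      (hQ.blockThrough_ne ht ha hp'.2) (Ne.symm hne)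
    have haD' := htaw' (by simp : a ∈ ({t, a, w'} : Finset α))
    rw [hD'eq] at haD'
    exact (mem_sdiff.mp haD').2 (mem_inter.mpr ⟨ha, htaw (by simp)⟩)
  have hw' : w' ∈ blockThrough Q {t, a, w'} ∩ B₀ := by
    rw [hQ.blockThrough_inter_eq hy hp'.1 ha hp'.2]
    simp
  rw [← hDD, hQ.blockThrough_inter_eq hy hp.1 ha hp.2, mem_insert, mem_singleton] at hw'
  exact Prod.ext rfl (hw'.resolve_left (ne_of_mem_erase hp'.2)).symm

theorem subset_of_inter_card_eq_five (hQ : IsSteinerQuadrupleSystem Q)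
    (hclosed : IsClosedUnderSymmDiff Q) (hy : ∀ B, B ∈ Q ∧ B ⊆ y ↔ B = B₀) (hz : z.card = 6)
    (h5 : (y ∩ z).card = 5) (hB₁ : B₁ ∈ Q) (hB₂ : B₂ ∈ Q) (hB₁z : B₁ ⊆ z) (hB₂z : B₂ ⊆ z)
    (h₁₂ : B₁ ≠ B₂) : B₀ ⊆ z := by
  obtain ⟨q, hq⟩ : ∃ q, z \ y = {q} := card_eq_one.mp (by rw [card_sdiff, hz, h5])
  obtain ⟨C, hC, hCz, hqC⟩ := hQ.exists_mem_subset_notMem hclosed hz hB₁ hB₂ hB₁z hB₂z h₁₂ q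
  have hCy : C ⊆ y := fun e he => by
    by_contra hey
    have heq : e = q := mem_singleton.mp (hq ▸ mem_sdiff.mpr ⟨hCz he, hey⟩)
    exact hqC (heq ▸ he)
  exact (hy C).mp ⟨hC, hCy⟩ ▸ hCz

theorem exists_eq_union_blockThrough (hQ : IsSteinerQuadrupleSystem Q)
    (hclosed : IsClosedUnderSymmDiff Q) (hy : ∀ B, B ∈ Q ∧ B ⊆ y ↔ B = B₀) (ha : a ∈ B₀)
    (hz : z.card = 6)     (h3 : {B ∈ Q | B ⊆ z}.ncard = 3) (h5 : (y ∩ z).card = 5) :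
    ∃ t ∈ y \ B₀, ∃ w ∈ B₀.erase a, B₀ ∪ blockThrough Q {t, a, w} = z := by
  obtain ⟨B₁, B₂, ⟨hB₁, hB₁z⟩, ⟨hB₂, hB₂z⟩, h₁₂⟩ :=
    (Set.one_lt_ncard_iff (Set.finite_of_ncard_ne_zero (s := {B ∈ Q | B ⊆ z}) (by omega))).mp
      (by omega)
  obtain ⟨hB₀, -⟩ := (hy B₀).mpr rfl
  have hB₀z := hQ.subset_of_inter_card_eq_five hclosed hy hz h5 hB₁ hB₂ hB₁z hB₂z h₁₂
  obtain ⟨D, hD, hDz, hDB₀, haD⟩ : ∃ D ∈ Q, D ⊆ z ∧ D ≠ B₀ ∧ a ∈ D := by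
    obtain ⟨B, hB, hBz, hBB₀⟩ : ∃ B ∈ Q, B ⊆ z ∧ B ≠ B₀ := by
      by_cases h : B₁ = B₀
      · exact ⟨B₂, hB₂, hB₂z, h ▸ h₁₂.symm⟩
      · exact ⟨B₁, hB₁, hB₁z, h⟩
    by_cases haB : a ∈ B
    · exact ⟨B, hB, hBz, hBB₀, haB⟩
    · refine ⟨symmDiff B₀ B, hQ.symmDiff_mem hclosed hz hB₀ hB hB₀z hBz hBB₀.symm,
        symmDiff_le_sup.trans (union_subset hB₀z hBz), hQ.symmDiff_ne_left hB, ?_⟩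
      simp [mem_symmDiff, ha, haB]
  have hzD : B₀ ∪ D = z := hQ.union_eq hz hB₀ hD hB₀z hDz hDB₀.symm
  obtain ⟨w, hw, hwa⟩ := exists_mem_ne (s := D ∩ B₀)
    (by rw [hQ.card_inter_eq_two hz hD hB₀ hDz hB₀z hDB₀]; norm_num) a
  obtain ⟨t, ht, htB₀⟩ := exists_mem_notMem_of_card_lt_card (s := B₀) (t := y ∩ z)
    (by rw [h5, hQ.card_eq _ hB₀]; norm_num)
  have htD : t ∈ D := (mem_union.mp (hzD ▸ (mem_inter.mp ht).2)).resolve_left htB₀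
  have hw' : w ∈ B₀.erase a := mem_erase.mpr ⟨hwa, (mem_inter.mp hw).2⟩
  refine ⟨t, mem_sdiff.mpr ⟨(mem_inter.mp ht).1, htB₀⟩, w, hw', ?_⟩
  rw [← hQ.eq_blockThrough (card_triple_eq_three htB₀ ha hw') hD, hzD]
  simp only [insert_subset_iff, singleton_subset_iff]
  exact ⟨htD, haD, (mem_inter.mp hw).1⟩

theorem setOf_neighbour_eq_image (hQ : IsSteinerQuadrupleSystem Q)
    (hclosed : IsClosedUnderSymmDiff Q) (hy : ∀ B, B ∈ Q ∧ B ⊆ y ↔ B = B₀) (ha : a ∈ B₀) :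
    {z : Finset α | z.card = 6 ∧ {B ∈ Q | B ⊆ z}.ncard = 3 ∧ (y ∩ z).card = 5} =
      (fun p : α × α => B₀ ∪ blockThrough Q {p.1, a, p.2}) '' ↑((y \ B₀) ×ˢ B₀.erase a) := by
  ext z
  constructor
  · rintro ⟨hz, h3, h5⟩
    obtain ⟨t, ht, w, hw, rfl⟩ := hQ.exists_eq_union_blockThrough hclosed hy ha hz h3 h5
    exact ⟨(t, w), mem_coe.mpr (mem_product.mpr ⟨ht, hw⟩), rfl⟩
  · rintro ⟨⟨t, w⟩, hp, rfl⟩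
    obtain ⟨ht, hw⟩ := mem_product.mp (mem_coe.mp hp)
    exact hQ.union_blockThrough_mem hclosed hy ht ha hw

end Neighbour

end IsSteinerQuadrupleSystem

/-- Let `Q` be the Steiner quadruple system of the extended Hamming code
(a 3-(n,4,1) design closed under symmetric difference of blocks meeting in 2 points).
Every 6-subset `y` containing exactly one block of `Q` is adjacent in the Johnson graph
`J(n,6)` to exactly 6 of the 6-subsets containing exactly 3 blocks of `Q`. -/
theorem stmt7 (n : ℕ) (Q : Set (Finset (Fin n)))
    (hQ4 : ∀ B ∈ Q, B.card = 4)
    (hSQS : ∀ s : Finset (Fin n), s.card = 3 → ∃! B, B ∈ Q ∧ s ⊆ B)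
    (hclosed : ∀ B ∈ Q, ∀ B' ∈ Q, (B ∩ B').card = 2 → symmDiff B B' ∈ Q)
    (y : Finset (Fin n)) (hy6 : y.card = 6)
    (hy1 : {B ∈ Q | B ⊆ y}.ncard = 1) :
    {z : Finset (Fin n) | z.card = 6 ∧ {B ∈ Q | B ⊆ z}.ncard = 3 ∧
      (y ∩ z).card = 5}.ncard = 6 := by
  have hQ : IsSteinerQuadrupleSystem Q := ⟨hQ4, hSQS⟩
  obtain ⟨B₀, hB₀⟩ := Set.ncard_eq_one.mp hy1
  have hy : ∀ B, B ∈ Q ∧ B ⊆ y ↔ B = B₀ := fun B => Set.ext_iff.mp hB₀ B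
  obtain ⟨hB₀Q, hB₀y⟩ := (hy B₀).mpr rfl
  obtain ⟨a, ha⟩ := hQ.nonempty hB₀Q
  rw [hQ.setOf_neighbour_eq_image hclosed hy ha, (hQ.injOn_union_blockThrough hy ha).ncard_image,
    Set.ncard_coe_finset, card_product, card_sdiff_of_subset hB₀y, card_erase_of_mem ha, hy6,
    hQ.card_eq B₀ hB₀Q]
end

section
/- Let Q be the Steiner quadruple system of the extended Hamming code of length n ≥ 16. The code C⁰ of 6-subsets of {1,…,n} containing no block of Q is a completely regular code in the Johnson graph J(n,6) with covering radius 2 and intersection array {60, 6; 4(n−15), 6(n−8)}. -/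
/-!
`Q` is a Steiner quadruple system in which the symmetric difference of two blocks meeting in
two points is again a block (it is the sum of two codewords). In a 6-set, two distinct blocks then meet in two points and cover it, so a 6-set
contains 0, 1 or 3 blocks, three blocks always being of the form `B, B', B ∆ B'`.

Fix `x` and `a ∈ x`, and let `y = x.erase a`. Writing `K(z)` for the number of blocks inside
`z`, double counting triples of `y` against the blocks through them gives
`∑_{b ∉ y} K(y + b) + 4 K(y) = K(y) (n - 5) + C(5, 3)`. As `K(y) ≤ 1`, and a block in `y`
excludes neighbours `y + b` without blocks while no block in `y` excludes neighbours with three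
blocks, this identity determines how many neighbours `y + b` (`b ∉ x`) of `x` contain 0, 1 or 3
blocks; summing over `a` gives the intersection numbers.
-/

open Finset
open scoped symmDiff

variable {α : Type*}

structure IsSQS (Q : Set (Finset α)) : Prop where
  card_eq_four : ∀ B ∈ Q, #B = 4
  existsUnique : ∀ t : Finset α, #t = 3 → ∃! B, B ∈ Q ∧ t ⊆ B

structure IsBooleanSQS [DecidableEq α] (Q : Set (Finset α)) : Prop extends IsSQS Q where
  symmDiff_mem : ∀ B ∈ Q, ∀ B' ∈ Q, #(B ∩ B') = 2 → B ∆ B' ∈ Q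

open Classical in
noncomputable def blocksIn (Q : Set (Finset α)) (z : Finset α) : Finset (Finset α) :=
  {B ∈ z.powerset | B ∈ Q}

section blocksIn

variable {Q : Set (Finset α)} {z z' B : Finset α}

@[simp]
lemma mem_blocksIn : B ∈ blocksIn Q z ↔ B ∈ Q ∧ B ⊆ z := by
  classical
  simp [blocksIn, and_comm]

lemma ncard_setOf_mem_subset : {B ∈ Q | B ⊆ z}.ncard = #(blocksIn Q z) := by
  rw [← Set.ncard_coe_finset]
  congr 1
  ext
  simp

lemma blocksIn_mono (h : z ⊆ z') : blocksIn Q z ⊆ blocksIn Q z' :=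
  fun _ hB => mem_blocksIn.2 ⟨(mem_blocksIn.1 hB).1, (mem_blocksIn.1 hB).2.trans h⟩

lemma blocksIn_erase [DecidableEq α] {a : α} :
    blocksIn Q (z.erase a) = {B ∈ blocksIn Q z | a ∉ B} := by
  ext B
  simp [subset_erase, and_assoc]

end blocksIn

section Johnson

variable [DecidableEq α] {x z : Finset α} {a b : α} {k : ℕ}

lemma card_insert_erase (ha : a ∈ x) (hb : b ∉ x) : #(insert b (x.erase a)) = #x := by
  rw [card_insert_of_notMem (fun h => hb (mem_of_mem_erase h)), card_erase_add_one ha]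

lemma inter_insert_erase (hb : b ∉ x) : x ∩ insert b (x.erase a) = x.erase a := by
  rw [inter_insert_of_notMem hb, inter_eq_right.2 (erase_subset a x)]

lemma sdiff_insert_erase (ha : a ∈ x) (hb : b ∉ x) : x \ insert b (x.erase a) = {a} := by
  ext w
  by_cases hw : w = a <;> aesop

lemma insert_erase_sdiff (hb : b ∉ x) : insert b (x.erase a) \ x = {b} := by
  ext w
  by_cases hw : w = b <;> aesop

lemma exists_eq_insert_erase (hx : #x = k + 1) (hz : #z = k + 1) (hxz : #(x ∩ z) = k) :
    ∃ a ∈ x, ∃ b ∉ x, z = insert b (x.erase a) := by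
  obtain ⟨a, ha⟩ : ∃ a, x \ z = {a} := card_eq_one.1 (by
    have := card_inter_add_card_sdiff x z; omega)
  obtain ⟨b, hb⟩ : ∃ b, z \ x = {b} := card_eq_one.1 (by
    have := card_inter_add_card_sdiff z x; rw [inter_comm] at this; omega)
  have hax : a ∈ x \ z := ha ▸ mem_singleton_self a
  have hbz : b ∈ z \ x := hb ▸ mem_singleton_self b
  refine ⟨a, (mem_sdiff.1 hax).1, b, (mem_sdiff.1 hbz).2, ?_⟩
  rw [erase_eq, ← ha, sdiff_sdiff_self_left, insert_eq, ← hb, inter_comm, sdiff_union_inter]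

lemma ncard_setOf_neighbours [Fintype α] (P : Finset α → Prop) [DecidablePred P]
    (hx : #x = k + 1) :
    {z | #z = k + 1 ∧ P z ∧ #(x ∩ z) = k}.ncard =
      ∑ a ∈ x, #{b ∈ xᶜ | P (insert b (x.erase a))} := by
  have hset : {z | #z = k + 1 ∧ P z ∧ #(x ∩ z) = k} =
      ↑((x.sigma fun a => {b ∈ xᶜ | P (insert b (x.erase a))}).image
        (fun p => insert p.2 (x.erase p.1))) := by
    ext z
    simp only [Set.mem_ofPred_eq, coe_image, Set.mem_image, mem_coe, mem_sigma, mem_filter,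
      mem_compl, Sigma.exists]
    constructor
    · rintro ⟨hz, hP, hxz⟩
      obtain ⟨a, ha, b, hb, rfl⟩ := exists_eq_insert_erase hx hz hxz
      exact ⟨a, b, ⟨ha, hb, hP⟩, rfl⟩
    · rintro ⟨a, b, ⟨ha, hb, hP⟩, rfl⟩
      refine ⟨(card_insert_erase ha hb).trans hx, hP, ?_⟩
      rw [inter_insert_erase hb, card_erase_of_mem ha, hx, Nat.add_sub_cancel]
  rw [hset, Set.ncard_coe_finset, card_image_of_injOn, card_sigma]
  rintro ⟨a, b⟩ hab ⟨a', b'⟩ hab' h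
  simp only [mem_coe, mem_sigma, mem_filter, mem_compl] at hab hab'
  have h' : insert b (x.erase a) = insert b' (x.erase a') := h
  have hxa := sdiff_insert_erase hab.1 hab.2.1
  have hxb := insert_erase_sdiff (a := a) hab.2.1
  rw [h', sdiff_insert_erase hab'.1 hab'.2.1] at hxa
  rw [h', insert_erase_sdiff hab'.2.1] at hxb
  cases singleton_injective hxa
  cases singleton_injective hxb
  rfl

end Johnson

lemma card_filter_subset_insert_of_not_subset [Fintype α] [DecidableEq α] {B : Finset α}
    (y : Finset α) (hB : ¬B ⊆ y) :
    #{b ∈ yᶜ | B ⊆ insert b y} = if #(B \ y) = 1 then 1 else 0 := by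
  have key : ∀ b, B ⊆ insert b y ↔ B \ y = {b} := fun b => by
    rw [← (sdiff_nonempty.2 hB).subset_singleton_iff, insert_eq, union_comm]
    exact sdiff_le_iff.symm
  split_ifs with h1
  · obtain ⟨c, hc⟩ := card_eq_one.1 h1
    have hcy : c ∉ y := (mem_sdiff.1 (hc ▸ mem_singleton_self c)).2
    refine card_eq_one.2 ⟨c, ?_⟩
    ext b
    simp only [mem_filter, mem_compl, key, hc, singleton_inj, mem_singleton]
    exact ⟨fun h => h.2.symm, fun h => ⟨h ▸ hcy, h.symm⟩⟩
  · refine card_eq_zero.2 (filter_eq_empty_iff.2 fun b _ hb => h1 ?_)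
    rw [(key b).1 hb, card_singleton]

lemma sum_eq_card_filter_eq_one_add_three_mul {β : Type*} {s : Finset β} {f : β → ℕ}
    (hf : ∀ b ∈ s, f b = 0 ∨ f b = 1 ∨ f b = 3) :
    ∑ b ∈ s, f b = #{b ∈ s | f b = 1} + 3 * #{b ∈ s | f b = 3} := by
  rw [card_filter, card_filter, mul_sum, ← sum_add_distrib]
  refine sum_congr rfl fun b hb => ?_
  rcases hf b hb with h | h | h <;> simp [h]

lemma card_eq_card_filter_eq_zero_add_one_add_three {β : Type*} {s : Finset β} {f : β → ℕ}
    (hf : ∀ b ∈ s, f b = 0 ∨ f b = 1 ∨ f b = 3) :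
    #s = #{b ∈ s | f b = 0} + #{b ∈ s | f b = 1} + #{b ∈ s | f b = 3} := by
  rw [card_filter, card_filter, card_filter, card_eq_sum_ones, ← sum_add_distrib,
    ← sum_add_distrib]
  refine sum_congr rfl fun b hb => ?_
  rcases hf b hb with h | h | h <;> simp [h]

namespace IsSQS

variable {Q : Set (Finset α)} {t y B B' : Finset α}

lemma eq_of_subset_of_subset (hQ : IsSQS Q) (hB : B ∈ Q) (hB' : B' ∈ Q) (ht : #t = 3)
    (htB : t ⊆ B) (htB' : t ⊆ B') : B = B' :=
  (hQ.existsUnique t ht).unique ⟨hB, htB⟩ ⟨hB', htB'⟩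

variable [DecidableEq α]

lemma card_inter_le_two (hQ : IsSQS Q) (hB : B ∈ Q) (hB' : B' ∈ Q) (hne : B ≠ B') :
    #(B ∩ B') ≤ 2 := by
  by_contra! h
  obtain ⟨t, ht, htc⟩ := exists_subset_card_eq (show 3 ≤ #(B ∩ B') by omega)
  exact hne (hQ.eq_of_subset_of_subset hB hB' htc (ht.trans inter_subset_left)
    (ht.trans inter_subset_right))

lemma card_blocksIn_le_one (hQ : IsSQS Q) (hy : #y ≤ 5) : #(blocksIn Q y) ≤ 1 := by
  refine card_le_one.2 fun B hB B' hB' => ?_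
  rw [mem_blocksIn] at hB hB'
  by_contra hne
  have := hQ.card_inter_le_two hB.1 hB'.1 hne
  have := card_union_add_card_inter B B'
  have := card_le_card (union_subset hB.2 hB'.2)
  rw [hQ.card_eq_four B hB.1, hQ.card_eq_four B' hB'.1] at *
  omega

variable [Fintype α]

lemma card_filter_subset_eq_one (hQ : IsSQS Q) (ht : #t = 3) :
    #{B ∈ blocksIn Q univ | t ⊆ B} = 1 := by
  obtain ⟨B, hB, huniq⟩ := hQ.existsUnique t ht
  refine card_eq_one.2 ⟨B, ?_⟩
  ext B'
  simp only [mem_filter, mem_blocksIn, subset_univ, and_true, mem_singleton]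
  exact ⟨huniq B', fun h => h ▸ hB⟩

lemma sum_choose_card_inter (hQ : IsSQS Q) (y : Finset α) :
    ∑ B ∈ blocksIn Q univ, (#(B ∩ y)).choose 3 = (#y).choose 3 := by
  have hB : ∀ B : Finset α, (#(B ∩ y)).choose 3 = #{t ∈ y.powersetCard 3 | t ⊆ B} := by
    intro B
    rw [← card_powersetCard]
    congr 1
    ext t
    simp only [mem_powersetCard, mem_filter, subset_inter_iff]
    tauto
  simp_rw [hB]
  rw [← card_powersetCard, card_eq_sum_ones]
  refine (sum_card_bipartiteAbove_eq_sum_card_bipartiteBelow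
    (fun B t : Finset α => t ⊆ B)).trans ?_
  exact sum_congr rfl fun t ht => hQ.card_filter_subset_eq_one (mem_powersetCard.1 ht).2

lemma sum_card_blocksIn_insert (hQ : IsSQS Q) (y : Finset α) :
    ∑ b ∈ yᶜ, #(blocksIn Q (insert b y)) + 4 * #(blocksIn Q y) =
      #(blocksIn Q y) * #yᶜ + (#y).choose 3 := by
  have hswap : ∑ b ∈ yᶜ, #(blocksIn Q (insert b y)) =
      ∑ B ∈ blocksIn Q univ, #{b ∈ yᶜ | B ⊆ insert b y} := by
    refine Eq.trans ?_ (sum_card_bipartiteAbove_eq_sum_card_bipartiteBelow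
      (fun b (B : Finset α) => B ⊆ insert b y))
    refine sum_congr rfl fun b _ => congrArg card ?_
    ext B
    simp [bipartiteAbove]
  have hblock : ∀ B ∈ blocksIn Q univ,
      #{b ∈ yᶜ | B ⊆ insert b y} + (if B ⊆ y then 4 else 0) =
        (if B ⊆ y then #yᶜ else 0) + (#(B ∩ y)).choose 3 := by
    intro B hB
    have h4 := hQ.card_eq_four B (mem_blocksIn.1 hB).1
    by_cases hBy : B ⊆ y
    · rw [if_pos hBy, if_pos hBy, inter_eq_left.2 hBy, h4,
        filter_true_of_mem fun b _ => hBy.trans (subset_insert b y)]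
      rfl
    · rw [if_neg hBy, if_neg hBy, card_filter_subset_insert_of_not_subset y hBy]
      have := card_inter_add_card_sdiff B y
      have := (sdiff_nonempty.2 hBy).card_pos
      split_ifs with h1
      · rw [show #(B ∩ y) = 3 by omega]
        rfl
      · rw [Nat.choose_eq_zero_of_lt (by omega)]
  have hy : {B ∈ blocksIn Q univ | B ⊆ y} = blocksIn Q y := by
    ext B
    simp
  have hsum := sum_congr rfl hblock
  rw [sum_add_distrib, sum_add_distrib, ← hswap, hQ.sum_choose_card_inter, ← sum_filter,
    ← sum_filter, sum_const, sum_const, hy, smul_eq_mul, smul_eq_mul] at hsum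
  linarith

end IsSQS

namespace IsBooleanSQS

variable [DecidableEq α] {Q : Set (Finset α)} {z B B' D : Finset α} {w : α}

lemma card_inter_eq_two (hQ : IsBooleanSQS Q) (hz : #z = 6) (hB : B ∈ blocksIn Q z)
    (hB' : B' ∈ blocksIn Q z) (hne : B ≠ B') : #(B ∩ B') = 2 := by
  rw [mem_blocksIn] at hB hB'
  have := hQ.card_inter_le_two hB.1 hB'.1 hne
  have := card_union_add_card_inter B B'
  have := card_le_card (union_subset hB.2 hB'.2)
  rw [hQ.card_eq_four B hB.1, hQ.card_eq_four B' hB'.1] at *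
  omega

lemma union_eq (hQ : IsBooleanSQS Q) (hz : #z = 6) (hB : B ∈ blocksIn Q z)
    (hB' : B' ∈ blocksIn Q z) (hne : B ≠ B') : B ∪ B' = z := by
  have := hQ.card_inter_eq_two hz hB hB' hne
  have := card_union_add_card_inter B B'
  rw [mem_blocksIn] at hB hB'
  rw [hQ.card_eq_four B hB.1, hQ.card_eq_four B' hB'.1] at *
  exact eq_of_subset_of_card_le (union_subset hB.2 hB'.2) (by omega)

lemma symmDiff_mem_blocksIn (hQ : IsBooleanSQS Q) (hz : #z = 6) (hB : B ∈ blocksIn Q z)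
    (hB' : B' ∈ blocksIn Q z) (hne : B ≠ B') : B ∆ B' ∈ blocksIn Q z := by
  have h2 := hQ.card_inter_eq_two hz hB hB' hne
  rw [mem_blocksIn] at hB hB' ⊢
  exact ⟨hQ.symmDiff_mem B hB.1 B' hB'.1 h2, symmDiff_le_sup.trans (union_subset hB.2 hB'.2)⟩

lemma eq_symmDiff (hQ : IsBooleanSQS Q) (hz : #z = 6) (hB : B ∈ blocksIn Q z)
    (hB' : B' ∈ blocksIn Q z) (hne : B ≠ B') (hD : D ∈ blocksIn Q z) (hDB : D ≠ B)
    (hDB' : D ≠ B') : D = B ∆ B' := by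
  have hcover : ∀ {E}, E ∈ blocksIn Q z → E ≠ D → ∀ w ∈ z, w ∉ E → w ∈ D := by
    intro E hE hED w hw hwE
    rw [← hQ.union_eq hz hE hD hED] at hw
    exact (mem_union.1 hw).resolve_left hwE
  have hS := hQ.symmDiff_mem_blocksIn hz hB hB' hne
  refine (eq_of_subset_of_card_le (fun w hw => ?_) ?_).symm
  · rcases mem_symmDiff.1 hw with ⟨hwB, hwB'⟩ | ⟨hwB', hwB⟩
    · exact hcover hB' hDB'.symm w ((mem_blocksIn.1 hB).2 hwB) hwB'
    · exact hcover hB hDB.symm w ((mem_blocksIn.1 hB').2 hwB') hwB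
  · rw [hQ.card_eq_four D (mem_blocksIn.1 hD).1, hQ.card_eq_four _ (mem_blocksIn.1 hS).1]

lemma card_blocksIn_eq_three (hQ : IsBooleanSQS Q) (hz : #z = 6) (hB : B ∈ blocksIn Q z)
    (hB' : B' ∈ blocksIn Q z) (hne : B ≠ B') : #(blocksIn Q z) = 3 := by
  have hne_empty : ∀ {E}, E ∈ blocksIn Q z → E ≠ ∅ := fun hE h => by
    have := hQ.card_eq_four _ (mem_blocksIn.1 hE).1
    simp [h] at this
  have h1 : B ∆ B' ≠ B := fun h => hne_empty hB' (symmDiff_eq_left.1 h)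
  have h2 : B ∆ B' ≠ B' := fun h => hne_empty hB (symmDiff_eq_right.1 h)
  have hK : blocksIn Q z = {B, B', B ∆ B'} := by
    ext D
    simp only [mem_insert, mem_singleton]
    refine ⟨fun hD => ?_, ?_⟩
    · by_cases hDB : D = B
      · exact Or.inl hDB
      by_cases hDB' : D = B'
      · exact Or.inr (Or.inl hDB')
      exact Or.inr (Or.inr (hQ.eq_symmDiff hz hB hB' hne hD hDB hDB'))
    · rintro (rfl | rfl | rfl)
      exacts [hB, hB', hQ.symmDiff_mem_blocksIn hz hB hB' hne]
  rw [hK, card_insert_of_notMem (by simp [hne, h1.symm]), card_pair h2.symm]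

lemma card_blocksIn_eq_zero_or_one_or_three (hQ : IsBooleanSQS Q) (hz : #z = 6) :
    #(blocksIn Q z) = 0 ∨ #(blocksIn Q z) = 1 ∨ #(blocksIn Q z) = 3 := by
  by_contra! h
  obtain ⟨B, hB, B', hB', hne⟩ := one_lt_card.1 (by omega : 1 < #(blocksIn Q z))
  exact h.2.2 (hQ.card_blocksIn_eq_three hz hB hB' hne)

lemma exists_mem_blocksIn_notMem (hQ : IsBooleanSQS Q) (hz : #z = 6) (hB : B ∈ blocksIn Q z)
    (hB' : B' ∈ blocksIn Q z) (hne : B ≠ B') : ∃ D ∈ blocksIn Q z, w ∉ D := by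
  by_cases hwB : w ∈ B
  · by_cases hwB' : w ∈ B'
    · exact ⟨B ∆ B', hQ.symmDiff_mem_blocksIn hz hB hB' hne,
        by simp [mem_symmDiff, hwB, hwB']⟩
    · exact ⟨B', hB', hwB'⟩
  · exact ⟨B, hB, hwB⟩

lemma card_blocksIn_insert_ne_three (hQ : IsBooleanSQS Q) {y : Finset α} {b : α} (hy : #y = 5)
    (hb : b ∉ y) (h0 : blocksIn Q y = ∅) : #(blocksIn Q (insert b y)) ≠ 3 := by
  intro h3
  obtain ⟨B, hB, B', hB', hne⟩ := one_lt_card.1 (by omega : 1 < #(blocksIn Q (insert b y)))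
  obtain ⟨D, hD, hbD⟩ :=
    hQ.exists_mem_blocksIn_notMem (w := b) (by rw [card_insert_of_notMem hb, hy]) hB hB' hne
  have : D ∈ blocksIn Q y := mem_blocksIn.2
    ⟨(mem_blocksIn.1 hD).1, (subset_insert_iff_of_notMem hbD).1 (mem_blocksIn.1 hD).2⟩
  simp [h0] at this

lemma card_inter_ne_five_of_blocksIn_eq_empty (hQ : IsBooleanSQS Q) {x : Finset α} (hx : #x = 6)
    (h0 : blocksIn Q x = ∅) (hz : #z = 6) (h3 : #(blocksIn Q z) = 3) : #(x ∩ z) ≠ 5 := by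
  intro h5
  obtain ⟨a, ha, b, hb, rfl⟩ := exists_eq_insert_erase (k := 5) hx hz h5
  exact hQ.card_blocksIn_insert_ne_three (by rw [card_erase_of_mem ha, hx])
    (fun h => hb (mem_of_mem_erase h))
    (subset_empty.1 (h0 ▸ blocksIn_mono (erase_subset a x))) h3

end IsBooleanSQS

section neighbourCount

variable [Fintype α] [DecidableEq α] {Q : Set (Finset α)} {x B : Finset α} {a : α}

noncomputable def neighbourCount (Q : Set (Finset α)) (x : Finset α) (a : α) (k : ℕ) : ℕ :=
  #{b ∈ xᶜ | #(blocksIn Q (insert b (x.erase a))) = k}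

lemma ncard_neighbours_eq_sum_neighbourCount (Q : Set (Finset α)) (hx : #x = 6) (k : ℕ) :
    {z | #z = 6 ∧ #(blocksIn Q z) = k ∧ #(x ∩ z) = 5}.ncard =
      ∑ a ∈ x, neighbourCount Q x a k :=
  ncard_setOf_neighbours (k := 5) (fun z => #(blocksIn Q z) = k) hx

lemma neighbourCount_zero_eq_zero (h : (blocksIn Q (x.erase a)).Nonempty) :
    neighbourCount Q x a 0 = 0 := by
  obtain ⟨B, hB⟩ := h
  refine card_eq_zero.2 (filter_eq_empty_iff.2 fun _ _ h0 => ?_)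
  exact (card_pos.2 ⟨B, blocksIn_mono (subset_insert _ _) hB⟩).ne' h0

namespace IsBooleanSQS

lemma neighbourCount_three_eq_zero (hQ : IsBooleanSQS Q) (hx : #x = 6) (ha : a ∈ x)
    (h : blocksIn Q (x.erase a) = ∅) : neighbourCount Q x a 3 = 0 :=
  card_eq_zero.2 (filter_eq_empty_iff.2 fun b hb => hQ.card_blocksIn_insert_ne_three
    (by rw [card_erase_of_mem ha, hx]) (fun h' => mem_compl.1 hb (mem_of_mem_erase h')) h)

lemma neighbourCount_zero_add_one_add_three (hQ : IsBooleanSQS Q) (hx : #x = 6) (ha : a ∈ x) :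
    neighbourCount Q x a 0 + neighbourCount Q x a 1 + neighbourCount Q x a 3 = #xᶜ :=
  (card_eq_card_filter_eq_zero_add_one_add_three fun _ hb =>
    hQ.card_blocksIn_eq_zero_or_one_or_three
      ((card_insert_erase ha (mem_compl.1 hb)).trans hx)).symm

lemma neighbourCount_one_add_three_mul (hQ : IsBooleanSQS Q) (hx : #x = 6) (ha : a ∈ x) :
    neighbourCount Q x a 1 + 3 * neighbourCount Q x a 3 + #(blocksIn Q x) +
      3 * #(blocksIn Q (x.erase a)) = #(blocksIn Q (x.erase a)) * #xᶜ + 10 := by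
  have h := hQ.sum_card_blocksIn_insert (x.erase a)
  rw [compl_erase, sum_insert (notMem_compl.2 ha), insert_erase ha,
    card_insert_of_notMem (notMem_compl.2 ha), card_erase_of_mem ha, hx,
    sum_eq_card_filter_eq_one_add_three_mul fun _ hb =>
      hQ.card_blocksIn_eq_zero_or_one_or_three
        ((card_insert_erase ha (mem_compl.1 hb)).trans hx)] at h
  rw [show Nat.choose 5 3 = 10 from rfl, mul_add, mul_one] at h
  unfold neighbourCount
  linarith

lemma neighbourCount_one_of_blocksIn_eq_empty (hQ : IsBooleanSQS Q) (hx : #x = 6)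
    (h0 : blocksIn Q x = ∅) (ha : a ∈ x) : neighbourCount Q x a 1 = 10 := by
  have hy : blocksIn Q (x.erase a) = ∅ := by rw [blocksIn_erase, h0, filter_empty]
  have h3 := hQ.neighbourCount_three_eq_zero hx ha hy
  have hsum := hQ.neighbourCount_one_add_three_mul hx ha
  rw [h0, hy, card_empty] at hsum
  omega

lemma neighbourCount_of_blocksIn_eq_singleton_of_mem (hQ : IsBooleanSQS Q) (hx : #x = 6)
    (h1 : blocksIn Q x = {B}) (ha : a ∈ B) :
    neighbourCount Q x a 0 = #xᶜ - 9 ∧ neighbourCount Q x a 3 = 0 := by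
  have hax : a ∈ x := (mem_blocksIn.1 (h1 ▸ mem_singleton_self B)).2 ha
  have hy : blocksIn Q (x.erase a) = ∅ := by
    rw [blocksIn_erase, h1, filter_singleton, if_neg (not_not.2 ha)]
  have h3 := hQ.neighbourCount_three_eq_zero hx hax hy
  have hsum := hQ.neighbourCount_one_add_three_mul hx hax
  have hall := hQ.neighbourCount_zero_add_one_add_three hx hax
  rw [h1, hy, card_empty, card_singleton] at hsum
  omega

lemma neighbourCount_of_blocksIn_eq_singleton_of_notMem (hQ : IsBooleanSQS Q) (hx : #x = 6)
    (h1 : blocksIn Q x = {B}) (ha : a ∈ x) (haB : a ∉ B) :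
    neighbourCount Q x a 0 = 0 ∧ neighbourCount Q x a 3 = 3 := by
  have hy : blocksIn Q (x.erase a) = {B} := by
    rw [blocksIn_erase, h1, filter_singleton, if_pos haB]
  have h0 := neighbourCount_zero_eq_zero (hy ▸ singleton_nonempty B)
  have hsum := hQ.neighbourCount_one_add_three_mul hx ha
  have hall := hQ.neighbourCount_zero_add_one_add_three hx ha
  rw [h1, hy, card_singleton] at hsum
  omega

lemma neighbourCount_one_of_card_blocksIn_eq_three (hQ : IsBooleanSQS Q) (hx : #x = 6)
    (h3 : #(blocksIn Q x) = 3) (ha : a ∈ x) : neighbourCount Q x a 1 = #xᶜ - 2 := by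
  obtain ⟨B, hB, B', hB', hne⟩ := one_lt_card.1 (by omega : 1 < #(blocksIn Q x))
  obtain ⟨D, hD, haD⟩ := hQ.exists_mem_blocksIn_notMem (w := a) hx hB hB' hne
  have hy : #(blocksIn Q (x.erase a)) = 1 := by
    refine le_antisymm (hQ.card_blocksIn_le_one (by rw [card_erase_of_mem ha, hx])) ?_
    exact card_pos.2 ⟨D, by rw [blocksIn_erase]; exact mem_filter.2 ⟨hD, haD⟩⟩
  have h0 : neighbourCount Q x a 0 = 0 := neighbourCount_zero_eq_zero (card_pos.1 (by omega))
  have hsum := hQ.neighbourCount_one_add_three_mul hx ha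
  have hall := hQ.neighbourCount_zero_add_one_add_three hx ha
  rw [h3, hy] at hsum
  omega

lemma sum_neighbourCount_one_of_blocksIn_eq_empty (hQ : IsBooleanSQS Q) (hx : #x = 6)
    (h0 : blocksIn Q x = ∅) : ∑ a ∈ x, neighbourCount Q x a 1 = 60 := by
  rw [sum_congr rfl fun a ha => hQ.neighbourCount_one_of_blocksIn_eq_empty hx h0 ha, sum_const,
    hx, smul_eq_mul]

lemma sum_neighbourCount_zero_of_blocksIn_eq_singleton (hQ : IsBooleanSQS Q) (hx : #x = 6)
    (h1 : blocksIn Q x = {B}) : ∑ a ∈ x, neighbourCount Q x a 0 = 4 * (#xᶜ - 9) := by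
  obtain ⟨hBQ, hBx⟩ := mem_blocksIn.1 (h1 ▸ mem_singleton_self B)
  rw [← sum_sdiff hBx, sum_eq_zero fun a ha =>
      (hQ.neighbourCount_of_blocksIn_eq_singleton_of_notMem hx h1 (mem_sdiff.1 ha).1
        (mem_sdiff.1 ha).2).1,
    sum_congr rfl fun a ha => (hQ.neighbourCount_of_blocksIn_eq_singleton_of_mem hx h1 ha).1,
    sum_const, hQ.card_eq_four B hBQ, smul_eq_mul, zero_add]

lemma sum_neighbourCount_three_of_blocksIn_eq_singleton (hQ : IsBooleanSQS Q) (hx : #x = 6)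
    (h1 : blocksIn Q x = {B}) : ∑ a ∈ x, neighbourCount Q x a 3 = 6 := by
  obtain ⟨hBQ, hBx⟩ := mem_blocksIn.1 (h1 ▸ mem_singleton_self B)
  rw [← sum_sdiff hBx, sum_congr rfl fun a ha =>
      (hQ.neighbourCount_of_blocksIn_eq_singleton_of_notMem hx h1 (mem_sdiff.1 ha).1
        (mem_sdiff.1 ha).2).2,
    sum_eq_zero fun a ha => (hQ.neighbourCount_of_blocksIn_eq_singleton_of_mem hx h1 ha).2,
    sum_const, card_sdiff_of_subset hBx, hx, hQ.card_eq_four B hBQ, smul_eq_mul]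
  rfl

lemma sum_neighbourCount_one_of_card_blocksIn_eq_three (hQ : IsBooleanSQS Q) (hx : #x = 6)
    (h3 : #(blocksIn Q x) = 3) : ∑ a ∈ x, neighbourCount Q x a 1 = 6 * (#xᶜ - 2) := by
  rw [sum_congr rfl fun a ha => hQ.neighbourCount_one_of_card_blocksIn_eq_three hx h3 ha,
    sum_const, hx, smul_eq_mul]

end IsBooleanSQS

end neighbourCount

lemma isBooleanSQS_of_weight_four_codewords [DecidableEq α] {Q : Set (Finset α)}
    (H : Submodule (ZMod 2) (α → ZMod 2))
    (hQ : ∀ B : Finset α,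
      B ∈ Q ↔ #B = 4 ∧ (fun i => if i ∈ B then (1 : ZMod 2) else 0) ∈ H)
    (hSQS : ∀ t : Finset α, #t = 3 → ∃! B, B ∈ Q ∧ t ⊆ B) : IsBooleanSQS Q where
  card_eq_four B hB := ((hQ B).1 hB).1
  existsUnique := hSQS
  symmDiff_mem B hB B' hB' h2 := by
    rw [hQ] at hB hB' ⊢
    refine ⟨?_, ?_⟩
    · have := card_union_add_card_inter B B'
      rw [symmDiff_eq_sup_sdiff_inf, sup_eq_union, inf_eq_inter,
        card_sdiff_of_subset inter_subset_union]
      omega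
    · convert H.add_mem hB.2 hB'.2 using 1
      funext i
      by_cases h1 : i ∈ B <;> by_cases h1' : i ∈ B' <;>
        simp [mem_symmDiff, h1, h1', CharTwo.add_self_eq_zero]

theorem stmt8_general (n : ℕ)
    (H : Submodule (ZMod 2) (Fin n → ZMod 2))
    (Q : Set (Finset (Fin n)))
    (hQ : ∀ B : Finset (Fin n),
      B ∈ Q ↔ B.card = 4 ∧ (fun i => if i ∈ B then (1 : ZMod 2) else 0) ∈ H)
    (hSQS : ∀ s : Finset (Fin n), s.card = 3 → ∃! B, B ∈ Q ∧ s ⊆ B) :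
    (∀ x : Finset (Fin n), x.card = 6 → {B ∈ Q | B ⊆ x}.ncard = 0 →
      ∀ z : Finset (Fin n), z.card = 6 → {B ∈ Q | B ⊆ z}.ncard = 3 →
        (x ∩ z).card ≠ 5) ∧
    (∀ x : Finset (Fin n), x.card = 6 → {B ∈ Q | B ⊆ x}.ncard = 0 →
      {z : Finset (Fin n) | z.card = 6 ∧ {B ∈ Q | B ⊆ z}.ncard = 1 ∧
        (x ∩ z).card = 5}.ncard = 60) ∧
    (∀ x : Finset (Fin n), x.card = 6 → {B ∈ Q | B ⊆ x}.ncard = 1 →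
      {z : Finset (Fin n) | z.card = 6 ∧ {B ∈ Q | B ⊆ z}.ncard = 0 ∧
        (x ∩ z).card = 5}.ncard = 4 * (n - 15) ∧
      {z : Finset (Fin n) | z.card = 6 ∧ {B ∈ Q | B ⊆ z}.ncard = 3 ∧
        (x ∩ z).card = 5}.ncard = 6) ∧
    (∀ x : Finset (Fin n), x.card = 6 → {B ∈ Q | B ⊆ x}.ncard = 3 →
      {z : Finset (Fin n) | z.card = 6 ∧ {B ∈ Q | B ⊆ z}.ncard = 1 ∧
        (x ∩ z).card = 5}.ncard = 6 * (n - 8)) := by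
  have hBool := isBooleanSQS_of_weight_four_codewords H hQ hSQS
  have hcompl : ∀ x : Finset (Fin n), #x = 6 → #xᶜ = n - 6 := fun x hx => by
    rw [card_compl, Fintype.card_fin, hx]
  simp only [ncard_setOf_mem_subset]
  refine ⟨fun x hx h0 z hz h3 =>
      hBool.card_inter_ne_five_of_blocksIn_eq_empty hx (card_eq_zero.1 h0) hz h3,
    fun x hx h0 => ?_, fun x hx h1 => ?_, fun x hx h3 => ?_⟩
  · rw [ncard_neighbours_eq_sum_neighbourCount Q hx,
      hBool.sum_neighbourCount_one_of_blocksIn_eq_empty hx (card_eq_zero.1 h0)]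
  · obtain ⟨B, hB⟩ := card_eq_one.1 h1
    rw [ncard_neighbours_eq_sum_neighbourCount Q hx, ncard_neighbours_eq_sum_neighbourCount Q hx,
      hBool.sum_neighbourCount_zero_of_blocksIn_eq_singleton hx hB,
      hBool.sum_neighbourCount_three_of_blocksIn_eq_singleton hx hB, hcompl x hx]
    omega
  · rw [ncard_neighbours_eq_sum_neighbourCount Q hx,
      hBool.sum_neighbourCount_one_of_card_blocksIn_eq_three hx h3, hcompl x hx]
    omega

/-- Let `Q` be the Steiner quadruple system of weight-4 codewords of the
extended binary Hamming code of length `n ≥ 16` (a linear code of minimum distance 4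
whose weight-4 supports form a 3-(n,4,1) design). The code `C⁰` of 6-subsets containing
no block of `Q` is completely regular in the Johnson graph `J(n,6)` with covering
radius 2 and intersection array `{60, 6; 4(n−15), 6(n−8)}`: with `C¹` and `C²` the
6-subsets containing exactly 1 and exactly 3 blocks respectively, there are no edges
between `C⁰` and `C²`, each vertex of `C⁰` has 60 neighbors in `C¹`, each vertex of
`C¹` has `4(n−15)` neighbors in `C⁰` and 6 neighbors in `C²`, and each vertex of `C²`
has `6(n−8)` neighbors in `C¹`. -/
theorem stmt8 (n : ℕ) (hn : 16 ≤ n)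
    (H : Submodule (ZMod 2) (Fin n → ZMod 2))
    (hmin : ∀ c ∈ H, c ≠ 0 → 4 ≤ (Finset.univ.filter (fun i => c i ≠ 0)).card)
    (Q : Set (Finset (Fin n)))
    (hQ : ∀ B : Finset (Fin n),
      B ∈ Q ↔ B.card = 4 ∧ (fun i => if i ∈ B then (1 : ZMod 2) else 0) ∈ H)
    (hSQS : ∀ s : Finset (Fin n), s.card = 3 → ∃! B, B ∈ Q ∧ s ⊆ B) :
    (∀ x : Finset (Fin n), x.card = 6 → {B ∈ Q | B ⊆ x}.ncard = 0 →
      ∀ z : Finset (Fin n), z.card = 6 → {B ∈ Q | B ⊆ z}.ncard = 3 →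
        (x ∩ z).card ≠ 5) ∧
    (∀ x : Finset (Fin n), x.card = 6 → {B ∈ Q | B ⊆ x}.ncard = 0 →
      {z : Finset (Fin n) | z.card = 6 ∧ {B ∈ Q | B ⊆ z}.ncard = 1 ∧
        (x ∩ z).card = 5}.ncard = 60) ∧
    (∀ x : Finset (Fin n), x.card = 6 → {B ∈ Q | B ⊆ x}.ncard = 1 →
      {z : Finset (Fin n) | z.card = 6 ∧ {B ∈ Q | B ⊆ z}.ncard = 0 ∧
        (x ∩ z).card = 5}.ncard = 4 * (n - 15) ∧
      {z : Finset (Fin n) | z.card = 6 ∧ {B ∈ Q | B ⊆ z}.ncard = 3 ∧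
        (x ∩ z).card = 5}.ncard = 6) ∧
    (∀ x : Finset (Fin n), x.card = 6 → {B ∈ Q | B ⊆ x}.ncard = 3 →
      {z : Finset (Fin n) | z.card = 6 ∧ {B ∈ Q | B ⊆ z}.ncard = 1 ∧
        (x ∩ z).card = 5}.ncard = 6 * (n - 8)) :=
  stmt8_general n H Q hQ hSQS
end

section
/- Let L be the Desarguesian 2-spread of F_q^n (n even, n ≥ 6). Let C¹ be the set of 4-dimensional subspaces containing exactly one member of L, and C² the set of 4-dimensional subspaces containing q²+1 members of L. Then every U ∈ C¹ is adjacent in the Grassmann graph J_q(n,4) to exactly q+1 subspaces of C². -/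
/-!
Write `K = F'` and `q = |F|`. The spread lines `aK` partition `E \ {0}` into blocks of size
`q² - 1`, so a 4-space contains `q² + 1` of them exactly when it is a `K`-subspace. Let `X₀` be
the unique spread line in `U`. Every `K`-subspace `V` of dimension 4 with `dim (U ⊓ V) = 3`
contains `X₀`, because a 3-dimensional subspace of a 2-dimensional `K`-space always contains a
spread line (counting points), and that line lies in `U`. Hence `V = X₀ ⊔ uK` for every
`u ∈ (U ⊓ V) \ X₀`, and `u ↦ X₀ ⊔ uK` maps the `q⁴ - q²` points of `U \ X₀` onto these
subspaces with fibres `(U ⊓ V) \ X₀` of size `q³ - q²`; so there are `q + 1` of them.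
-/

open Module Set

theorem Set.ncard_le_ncard_image_mul {α β : Type*} {s : Set α} (hs : s.Finite) (f : α → β)
    {k : ℕ} (h : ∀ a ∈ s, {b ∈ s | f b = f a}.ncard ≤ k) : s.ncard ≤ (f '' s).ncard * k := by
  classical
  obtain ⟨t, rfl⟩ := hs.exists_finset_coe
  rw [← Finset.coe_image, ncard_coe_finset, ncard_coe_finset, mul_comm]
  refine Finset.card_le_mul_card_image t k fun b hb => ?_
  obtain ⟨a, ha, rfl⟩ := Finset.mem_image.mp hb
  simpa [← Finset.coe_filter] using h a ha

theorem Set.ncard_image_mul_le_ncard {α β : Type*} {s : Set α} (hs : s.Finite) (f : α → β)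
    {k : ℕ} (h : ∀ a ∈ s, k ≤ {b ∈ s | f b = f a}.ncard) : (f '' s).ncard * k ≤ s.ncard := by
  classical
  obtain ⟨t, rfl⟩ := hs.exists_finset_coe
  rw [← Finset.coe_image, ncard_coe_finset, ncard_coe_finset, mul_comm]
  refine Finset.mul_card_image_le_card t k fun b hb => ?_
  obtain ⟨a, ha, rfl⟩ := Finset.mem_image.mp hb
  simpa [← Finset.coe_filter] using h a ha

theorem Set.ncard_eq_ncard_image_mul {α β : Type*} {s : Set α} (hs : s.Finite) (f : α → β)
    {k : ℕ} (h : ∀ a ∈ s, {b ∈ s | f b = f a}.ncard = k) : s.ncard = (f '' s).ncard * k :=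
  le_antisymm (ncard_le_ncard_image_mul hs f fun a ha => (h a ha).le)
    (ncard_image_mul_le_ncard hs f fun a ha => (h a ha).ge)

section FiniteModule

variable {F M : Type*} [Field F] [AddCommGroup M] [Module F M] [Finite M]

theorem Submodule.ncard_coe (W : Submodule F M) :
    (W : Set M).ncard = Nat.card F ^ finrank F W := by
  rw [← Nat.card_coe_set_eq]
  exact Module.natCard_eq_pow_finrank

theorem Submodule.ncard_coe_sdiff {W X : Submodule F M} (h : X ≤ W) :
    ((W : Set M) \ X).ncard = Nat.card F ^ finrank F W - Nat.card F ^ finrank F X := by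
  rw [ncard_sdiff h, ncard_coe, ncard_coe]

theorem Submodule.ncard_coe_sdiff_zero (W : Submodule F M) :
    ((W : Set M) \ {0}).ncard = Nat.card F ^ finrank F W - 1 := by
  simpa using ncard_coe_sdiff (bot_le (a := W))

end FiniteModule

section Spread

variable {F E : Type*} [Field F] [Field E] [Algebra F E] (K : Subalgebra F E)

def spreadLine (a : E) : Submodule F E :=
  (Subalgebra.toSubmodule K).map (LinearMap.mulLeft F a)

def spread : Set (Submodule F E) :=
  spreadLine K '' {a | a ≠ 0}

/-- Equivalently, `V` is closed under multiplication by `K`, i.e. it is a `K`-subspace. -/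
def IsSpreadClosed (V : Submodule F E) : Prop :=
  ∀ v ∈ V, spreadLine K v ≤ V

variable {K}

theorem mem_spreadLine {a x : E} : x ∈ spreadLine K a ↔ ∃ s ∈ K, a * s = x := by
  simp [spreadLine]

theorem coe_spreadLine (a : E) : (spreadLine K a : Set E) = (a * ·) '' K :=
  Submodule.map_coe _ _

theorem mem_spread_iff {X : Submodule F E} :
    X ∈ spread K ↔ ∃ a : E, a ≠ 0 ∧ (X : Set E) = (a * ·) '' K := by
  constructor
  · rintro ⟨a, ha, rfl⟩
    exact ⟨a, ha, coe_spreadLine a⟩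
  · rintro ⟨a, ha, h⟩
    exact ⟨a, ha, SetLike.coe_injective ((coe_spreadLine a).trans h.symm)⟩

theorem self_mem_spreadLine (a : E) : a ∈ spreadLine K a :=
  mem_spreadLine.mpr ⟨1, K.one_mem, mul_one a⟩

theorem spreadLine_mem_spread {a : E} (ha : a ≠ 0) : spreadLine K a ∈ spread K :=
  ⟨a, ha, rfl⟩

theorem spreadLine_le_of_mem {a x : E} (hx : x ∈ spreadLine K a) :
    spreadLine K x ≤ spreadLine K a := by
  obtain ⟨s, hs, rfl⟩ := mem_spreadLine.mp hx
  intro y hy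
  obtain ⟨t, ht, rfl⟩ := mem_spreadLine.mp hy
  exact mem_spreadLine.mpr ⟨s * t, K.mul_mem hs ht, (mul_assoc a s t).symm⟩

theorem spreadLine_zero_le (V : Submodule F E) : spreadLine K 0 ≤ V := by
  intro x hx
  obtain ⟨s, -, rfl⟩ := mem_spreadLine.mp hx
  rw [zero_mul]
  exact V.zero_mem

theorem isSpreadClosed_spreadLine (a : E) : IsSpreadClosed K (spreadLine K a) :=
  fun _ => spreadLine_le_of_mem

theorem IsSpreadClosed.sup {V W : Submodule F E} (hV : IsSpreadClosed K V)
    (hW : IsSpreadClosed K W) : IsSpreadClosed K (V ⊔ W) := by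
  intro v hv z hz
  obtain ⟨x, hx, y, hy, rfl⟩ := Submodule.mem_sup.mp hv
  obtain ⟨s, hs, rfl⟩ := mem_spreadLine.mp hz
  rw [add_mul]
  exact Submodule.add_mem_sup (hV x hx (mem_spreadLine.mpr ⟨s, hs, rfl⟩))
    (hW y hy (mem_spreadLine.mpr ⟨s, hs, rfl⟩))

theorem finrank_spreadLine {a : E} (ha : a ≠ 0) :
    finrank F (spreadLine K a) = finrank F K := by
  have hinj : Function.Injective (LinearMap.mulLeft F a) := mul_right_injective₀ ha
  rw [spreadLine, ← (Submodule.equivMapOfInjective _ hinj _).finrank_eq,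
    Subalgebra.finrank_toSubmodule]

variable [Algebra.IsAlgebraic F E]

/-- Over an algebraic extension `K` is a field, so the spread partitions `E \ {0}`. -/
theorem spreadLine_eq_of_mem {a x : E} (hx : x ∈ spreadLine K a) (hx0 : x ≠ 0) :
    spreadLine K x = spreadLine K a := by
  refine le_antisymm (spreadLine_le_of_mem hx) (spreadLine_le_of_mem ?_)
  obtain ⟨s, hs, rfl⟩ := mem_spreadLine.mp hx
  have hs0 : s ≠ 0 := right_ne_zero_of_mul hx0
  have hsinv : s⁻¹ ∈ K :=
    K.inv_mem_of_algebraic (x := ⟨s, hs⟩) (Algebra.IsAlgebraic.isAlgebraic s)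
  exact mem_spreadLine.mpr ⟨s⁻¹, hsinv, by rw [mul_assoc, mul_inv_cancel₀ hs0, mul_one]⟩

theorem spreadLine_inf_spreadLine_eq_bot {a u : E} (hu : u ∉ spreadLine K a) :
    spreadLine K a ⊓ spreadLine K u = ⊥ := by
  refine (Submodule.eq_bot_iff _).mpr fun z hz => ?_
  by_contra hz0
  rw [Submodule.mem_inf] at hz
  exact hu (spreadLine_eq_of_mem hz.1 hz0 ▸ spreadLine_eq_of_mem hz.2 hz0 ▸ self_mem_spreadLine u)

variable [FiniteDimensional F K]

instance (a : E) : FiniteDimensional F (spreadLine K a) :=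
  have : FiniteDimensional F (Subalgebra.toSubmodule K) := ‹FiniteDimensional F K›
  Module.Finite.map _ _

theorem finrank_spreadLine_sup_spreadLine {a u : E} (ha : a ≠ 0) (hu : u ∉ spreadLine K a) :
    finrank F (spreadLine K a ⊔ spreadLine K u : Submodule F E) = 2 * finrank F K := by
  have hu0 : u ≠ 0 := fun h => hu (h ▸ (spreadLine K a).zero_mem)
  have := Submodule.finrank_sup_add_finrank_inf_eq (spreadLine K a) (spreadLine K u)
  rw [spreadLine_inf_spreadLine_eq_bot hu, finrank_bot, finrank_spreadLine ha,
    finrank_spreadLine hu0] at this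
  omega

theorem spreadLine_sup_spreadLine_eq {V : Submodule F E} (hV : IsSpreadClosed K V)
    (hVdim : finrank F V = 2 * finrank F K) {a u : E} (ha : a ≠ 0) (haV : spreadLine K a ≤ V)
    (huV : u ∈ V) (hu : u ∉ spreadLine K a) : spreadLine K a ⊔ spreadLine K u = V := by
  have : FiniteDimensional F V :=
    Module.finite_of_finrank_pos (hVdim ▸ Nat.mul_pos two_pos finrank_pos)
  exact Submodule.eq_of_le_of_finrank_eq (sup_le haV (hV u huV))
    (by rw [finrank_spreadLine_sup_spreadLine ha hu, hVdim])

end Spread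

section Counting

variable {F E : Type*} [Field F] [Field E] [Algebra F E] [Finite E] {K : Subalgebra F E}

theorem ncard_spread_le_mul (V : Submodule F E) :
    {X ∈ spread K | X ≤ V}.ncard * (Nat.card F ^ finrank F K - 1) =
      {v : E | v ≠ 0 ∧ spreadLine K v ≤ V}.ncard := by
  set B := {v : E | v ≠ 0 ∧ spreadLine K v ≤ V}
  have himage : spreadLine K '' B = {X ∈ spread K | X ≤ V} := by
    ext X
    constructor
    · rintro ⟨v, ⟨hv0, hvV⟩, rfl⟩
      exact ⟨spreadLine_mem_spread hv0, hvV⟩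
    · rintro ⟨⟨v, hv0, rfl⟩, hvV⟩
      exact ⟨v, ⟨hv0, hvV⟩, rfl⟩
  have hfiber : ∀ v ∈ B, {w ∈ B | spreadLine K w = spreadLine K v}.ncard =
      Nat.card F ^ finrank F K - 1 := by
    rintro v ⟨hv0, hvV⟩
    have : {w ∈ B | spreadLine K w = spreadLine K v} = (spreadLine K v : Set E) \ {0} := by
      ext w
      constructor
      · rintro ⟨⟨hw0, -⟩, hw⟩
        exact ⟨hw ▸ self_mem_spreadLine w, hw0⟩
      · rintro ⟨hw, hw0 : w ≠ 0⟩
        have := spreadLine_eq_of_mem hw hw0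
        exact ⟨⟨hw0, this ▸ hvV⟩, this⟩
    rw [this, Submodule.ncard_coe_sdiff_zero, finrank_spreadLine hv0]
  rw [← himage, ← ncard_eq_ncard_image_mul (toFinite B) _ hfiber]

theorem isSpreadClosed_iff_ncard (V : Submodule F E) :
    IsSpreadClosed K V ↔ {X ∈ spread K | X ≤ V}.ncard * (Nat.card F ^ finrank F K - 1) =
      Nat.card F ^ finrank F V - 1 := by
  have hsub : {v : E | v ≠ 0 ∧ spreadLine K v ≤ V} ⊆ (V : Set E) \ {0} :=
    fun v ⟨hv0, hvV⟩ => ⟨hvV (self_mem_spreadLine v), hv0⟩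
  rw [ncard_spread_le_mul, ← Submodule.ncard_coe_sdiff_zero]
  constructor
  · intro hV
    congr 1
    exact hsub.antisymm fun v ⟨hv, hv0⟩ => ⟨hv0, hV v hv⟩
  · intro hcard v hv
    by_cases hv0 : v = 0
    · exact hv0 ▸ spreadLine_zero_le V
    · have hB := eq_of_subset_of_ncard_le hsub hcard.ge
      have : v ∈ {v : E | v ≠ 0 ∧ spreadLine K v ≤ V} := hB ▸ ⟨hv, hv0⟩
      exact this.2

theorem isSpreadClosed_iff_ncard_eq (hK : finrank F K = 2) {V : Submodule F E}
    (hV : finrank F V = 4) :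
    IsSpreadClosed K V ↔ {X ∈ spread K | X ≤ V}.ncard = Nat.card F ^ 2 + 1 := by
  have : Finite F := Finite.of_injective _ (algebraMap F E).injective
  have hq : 1 < Nat.card F := Finite.one_lt_card
  have hq2 : Nat.card F ^ 2 - 1 ≠ 0 := by
    have := Nat.one_lt_pow two_ne_zero hq
    omega
  have h4 : Nat.card F ^ 4 - 1 = (Nat.card F ^ 2 + 1) * (Nat.card F ^ 2 - 1) := by
    rw [← Nat.sq_sub_sq, one_pow, ← pow_mul]
  rw [isSpreadClosed_iff_ncard, hK, hV, h4, mul_left_inj' hq2]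

theorem exists_spread_le_of_finrank_eq_three (hK : finrank F K = 2) {V W : Submodule F E}
    (hV : IsSpreadClosed K V) (hV4 : finrank F V = 4) (hWV : W ≤ V) (hW : finrank F W = 3) :
    ∃ X ∈ spread K, X ≤ W := by
  have : Finite F := Finite.of_injective _ (algebraMap F E).injective
  set q := Nat.card F with hq_def
  have hq : 1 < q := Finite.one_lt_card
  by_contra! hnone
  have hfiber : ∀ w ∈ (W : Set E) \ {0},
      {w' ∈ (W : Set E) \ {0} | spreadLine K w' = spreadLine K w}.ncard ≤ q - 1 := by
    rintro w ⟨-, hw0 : w ≠ 0⟩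
    have hlt : finrank F (spreadLine K w ⊓ W : Submodule F E) < 2 := by
      rw [← hK, ← finrank_spreadLine hw0]
      refine Submodule.finrank_lt_finrank_of_lt (inf_le_left.lt_of_ne fun h => ?_)
      exact hnone _ (spreadLine_mem_spread hw0) (h ▸ inf_le_right)
    calc _ ≤ (((spreadLine K w ⊓ W : Submodule F E) : Set E) \ {0}).ncard :=
          ncard_le_ncard <| by
            rintro w' ⟨⟨hw'W, hw'0⟩, hw'⟩
            exact ⟨⟨hw' ▸ self_mem_spreadLine w', hw'W⟩, hw'0⟩
      _ ≤ q - 1 := by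
          rw [Submodule.ncard_coe_sdiff_zero, ← hq_def]
          have := Nat.pow_le_pow_right hq.le (Nat.lt_succ_iff.mp hlt)
          rw [pow_one] at this
          omega
  have himage : spreadLine K '' ((W : Set E) \ {0}) ⊆ {X ∈ spread K | X ≤ V} := by
    rintro _ ⟨w, ⟨hw, hw0 : w ≠ 0⟩, rfl⟩
    exact ⟨spreadLine_mem_spread hw0, hV w (hWV hw)⟩
  have hcount := (ncard_le_ncard_image_mul (toFinite _) _ hfiber).trans
    (Nat.mul_le_mul_right (q - 1) ((ncard_le_ncard himage).trans
      ((isSpreadClosed_iff_ncard_eq hK hV4).mp hV).le))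
  rw [Submodule.ncard_coe_sdiff_zero, hW, ← hq_def] at hcount
  -- `q³ - 1 ≤ (q² + 1)(q - 1)` fails since `q < q²`.
  have hq3 : 1 ≤ q ^ 3 := Nat.one_le_pow _ _ (by omega)
  zify [hq.le, hq3] at hcount
  nlinarith

variable {U : Submodule F E} {a : E}

theorem finrank_inf_spreadLine_sup_spreadLine (hK : finrank F K = 2) (ha : a ≠ 0)
    (haU : spreadLine K a ≤ U) (huniq : ∀ X ∈ spread K, X ≤ U → X = spreadLine K a) {u : E}
    (huU : u ∈ U) (hu : u ∉ spreadLine K a) :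
    finrank F (U ⊓ (spreadLine K a ⊔ spreadLine K u) : Submodule F E) = 3 := by
  have hu0 : u ≠ 0 := fun h => hu (h ▸ (spreadLine K a).zero_mem)
  have hlower : spreadLine K a ⊔ Submodule.span F {u} ≤ U ⊓ (spreadLine K a ⊔ spreadLine K u) :=
    sup_le (le_inf haU le_sup_left) <| (Submodule.span_singleton_le_iff_mem _ _).mpr
      ⟨huU, Submodule.mem_sup_right (self_mem_spreadLine u)⟩
  have hupper : U ⊓ (spreadLine K a ⊔ spreadLine K u) < spreadLine K a ⊔ spreadLine K u := by
    refine inf_le_right.lt_of_ne fun h => hu ?_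
    have hle : spreadLine K u ≤ U := le_sup_right.trans (h ▸ inf_le_left)
    exact huniq _ (spreadLine_mem_spread hu0) hle ▸ self_mem_spreadLine u
  have h₁ := Submodule.finrank_mono hlower
  have h₂ := Submodule.finrank_lt_finrank_of_lt hupper
  rw [Submodule.finrank_sup_span_singleton hu, finrank_spreadLine ha, hK] at h₁
  rw [finrank_spreadLine_sup_spreadLine ha hu, hK] at h₂
  omega

theorem spreadLine_le_of_finrank_inf_eq_three (hK : finrank F K = 2)
    (huniq : ∀ X ∈ spread K, X ≤ U → X = spreadLine K a) {V : Submodule F E}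
    (hV : IsSpreadClosed K V) (hV4 : finrank F V = 4)
    (hUV : finrank F (U ⊓ V : Submodule F E) = 3) : spreadLine K a ≤ V := by
  obtain ⟨X, hX, hXUV⟩ := exists_spread_le_of_finrank_eq_three hK hV hV4 inf_le_right hUV
  exact huniq X hX (hXUV.trans inf_le_left) ▸ hXUV.trans inf_le_right

theorem ncard_isSpreadClosed_inf_eq_three (hK : finrank F K = 2) (hU : finrank F U = 4)
    (ha : a ≠ 0) (haU : spreadLine K a ≤ U) (huniq : ∀ X ∈ spread K, X ≤ U → X = spreadLine K a) :
    {V : Submodule F E | finrank F V = 4 ∧ IsSpreadClosed K V ∧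
      finrank F (U ⊓ V : Submodule F E) = 3}.ncard = Nat.card F + 1 := by
  have : Finite F := Finite.of_injective _ (algebraMap F E).injective
  set q := Nat.card F
  have hq : 1 < q := Finite.one_lt_card
  set X₀ := spreadLine K a
  set S := {V : Submodule F E | finrank F V = 4 ∧ IsSpreadClosed K V ∧
      finrank F (U ⊓ V : Submodule F E) = 3}
  set s := (U : Set E) \ X₀
  set P : E → Submodule F E := fun u => X₀ ⊔ spreadLine K u
  have hPS : ∀ u ∈ s, P u ∈ S := fun u ⟨huU, hu⟩ =>
    ⟨by rw [finrank_spreadLine_sup_spreadLine ha hu, hK],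
      (isSpreadClosed_spreadLine a).sup (isSpreadClosed_spreadLine u),
      finrank_inf_spreadLine_sup_spreadLine hK ha haU huniq huU hu⟩
  have hPeq : ∀ V ∈ S, ∀ u ∈ ((U ⊓ V : Submodule F E) : Set E) \ X₀, P u = V :=
    fun V ⟨hV4, hV, hUV⟩ u ⟨hu, hu'⟩ => spreadLine_sup_spreadLine_eq hV (by rw [hV4, hK]) ha
      (spreadLine_le_of_finrank_inf_eq_three hK huniq hV hV4 hUV) hu.2 hu'
  have himage : P '' s = S := by
    refine (MapsTo.image_subset hPS).antisymm fun V hV => ?_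
    obtain ⟨u, hu, hu'⟩ := SetLike.not_le_iff_exists.mp fun h : U ⊓ V ≤ X₀ => by
      have := Submodule.finrank_mono h
      rw [hV.2.2, finrank_spreadLine ha, hK] at this
      omega
    exact ⟨u, ⟨hu.1, hu'⟩, hPeq V hV u ⟨hu, hu'⟩⟩
  have hfiber : ∀ u ∈ s, {u' ∈ s | P u' = P u}.ncard = q ^ 3 - q ^ 2 := by
    intro u hu
    have : {u' ∈ s | P u' = P u} = ((U ⊓ P u : Submodule F E) : Set E) \ X₀ := by
      ext u'
      constructor
      · rintro ⟨⟨hu'U, hu'⟩, hP⟩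
        exact ⟨⟨hu'U, hP ▸ Submodule.mem_sup_right (self_mem_spreadLine u')⟩, hu'⟩
      · rintro ⟨hu'UP, hu'⟩
        exact ⟨⟨hu'UP.1, hu'⟩, hPeq _ (hPS u hu) u' ⟨hu'UP, hu'⟩⟩
    rw [this, Submodule.ncard_coe_sdiff (le_inf haU le_sup_left), (hPS u hu).2.2,
      finrank_spreadLine ha, hK]
  have hcount := ncard_eq_ncard_image_mul (toFinite s) P hfiber
  rw [himage, Submodule.ncard_coe_sdiff haU, hU, finrank_spreadLine ha, hK] at hcount
  have h23 : q ^ 2 < q ^ 3 := Nat.pow_lt_pow_right hq (by norm_num)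
  have h24 : q ^ 2 ≤ q ^ 4 := Nat.pow_le_pow_right (by omega) (by norm_num)
  have hfactor : q ^ 4 - q ^ 2 = (q + 1) * (q ^ 3 - q ^ 2) := by
    zify [h23.le, h24]
    ring
  exact ((mul_left_inj' (Nat.sub_ne_zero_of_lt h23)).mp (hcount.symm.trans hfactor))

end Counting

theorem stmt12_general (F E : Type*) [Field F] [Fintype F] [Field E] [Algebra F E]
    (n : ℕ) (hn6 : 6 ≤ n) (hdim : Module.finrank F E = n)
    (F' : Subalgebra F E) (hF' : Module.finrank F F' = 2)
    (L : Set (Submodule F E))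
    (hL : ∀ X : Submodule F E,
      X ∈ L ↔ ∃ a : E, a ≠ 0 ∧ (X : Set E) = (fun x => a * x) '' (F' : Set E))
    (U : Submodule F E) (hU4 : Module.finrank F U = 4)
    (hU1 : {X ∈ L | X ≤ U}.ncard = 1) :
    {V : Submodule F E | Module.finrank F V = 4 ∧
      {X ∈ L | X ≤ V}.ncard = Fintype.card F ^ 2 + 1 ∧
      Module.finrank F (U ⊓ V : Submodule F E) = 3}.ncard = Fintype.card F + 1 := by
  have : FiniteDimensional F E := Module.finite_of_finrank_pos (by omega)
  have : Finite E := Module.finite_of_finite F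
  obtain rfl : L = spread F' := Set.ext fun X => (hL X).trans mem_spread_iff.symm
  obtain ⟨X₀, hX₀⟩ := ncard_eq_one.mp hU1
  obtain ⟨⟨a, ha, rfl⟩, haU⟩ : X₀ ∈ {X ∈ spread F' | X ≤ U} := hX₀ ▸ rfl
  have huniq : ∀ X ∈ spread F', X ≤ U → X = spreadLine F' a := fun X hX hXU =>
    (hX₀ ▸ ⟨hX, hXU⟩ : X ∈ ({spreadLine F' a} : Set _))
  rw [← Nat.card_eq_fintype_card, ← ncard_isSpreadClosed_inf_eq_three hF' hU4 ha haU huniq]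
  congr 1
  ext V
  exact and_congr_right fun hV4 => and_congr_left' (isSpreadClosed_iff_ncard_eq hF' hV4).symm

/-- Let `L` be the Desarguesian 2-spread of `F_q^n ≅ E = F_{q^n}`
(n even, n ≥ 6), arising from the subfield `F'` of order `q²`. Every 4-dimensional
subspace `U` containing exactly one member of `L` is adjacent in the Grassmann graph
`J_q(n,4)` to exactly `q+1` of the 4-dimensional subspaces containing `q²+1` members
of `L`. -/
theorem stmt12 (F E : Type*) [Field F] [Fintype F] [Field E] [Algebra F E]
    (n : ℕ) (hn : Even n) (hn6 : 6 ≤ n) (hdim : Module.finrank F E = n)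
    (F' : Subalgebra F E) (hF' : Module.finrank F F' = 2)
    (L : Set (Submodule F E))
    (hL : ∀ X : Submodule F E,
      X ∈ L ↔ ∃ a : E, a ≠ 0 ∧ (X : Set E) = (fun x => a * x) '' (F' : Set E))
    (U : Submodule F E) (hU4 : Module.finrank F U = 4)
    (hU1 : {X ∈ L | X ≤ U}.ncard = 1) :
    {V : Submodule F E | Module.finrank F V = 4 ∧
      {X ∈ L | X ≤ V}.ncard = Fintype.card F ^ 2 + 1 ∧
      Module.finrank F (U ⊓ V : Submodule F E) = 3}.ncard = Fintype.card F + 1 :=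
  stmt12_general F E n hn6 hdim F' hF' L hL U hU4 hU1
end

section
/- Let L be the Desarguesian 2-spread of F_q^n (n even, n ≥ 8). The set C⁰ of 4-dimensional subspaces of F_q^n containing no member of L is a completely regular code in the Grassmann graph J_q(n,4) with covering radius 2 and intersection array {[4]_q[3]_q, q+1; q⁵(q+1)[n−6]_q, q[4]_q[n−4]_q}, where [m]_q = (q^m − 1)/(q − 1). -/
set_option linter.unusedSectionVars false
set_option linter.unusedVariables false
set_option maxHeartbeats 1000000
open Module Set Submodule


section Counting

variable {F M : Type*} [Field F] [Fintype F] [AddCommGroup M] [Module F M]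
  [FiniteDimensional F M] {q : ℕ}

private lemma ncard_submodule (hq : q = Fintype.card F) (W : Submodule F M) :
    (W : Set M).ncard = q ^ finrank F W := by
  have hfin : Finite M := Module.finite_of_finite F
  have h1 : (W : Set M).ncard = Nat.card ↥W := (Nat.card_coe_set_eq _).symm
  haveI := Fintype.ofFinite ↥W
  rw [h1, Nat.card_eq_fintype_card, hq]
  exact Module.card_eq_pow_finrank (K := F) (V := ↥W)

private lemma ncard_submodule_sdiff (hq : q = Fintype.card F) (W : Submodule F M) :
    ((W : Set M) \ {0}).ncard = q ^ finrank F W - 1 := by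
  have hfin : Finite M := Module.finite_of_finite F
  rw [Set.ncard_diff_singleton_of_mem W.zero_mem, ncard_submodule hq W]

end Counting

section Counting2

variable {F M : Type*} [Field F] [Fintype F] [AddCommGroup M] [Module F M]
  [FiniteDimensional F M] {q : ℕ}

private lemma fiberCount' {α β : Type*} (S : Set α) (hS : S.Finite) (g : α → β) (k : ℕ)
    (h : ∀ a ∈ S, {x ∈ S | g x = g a}.ncard = k) : S.ncard = (g '' S).ncard * k := by
  classical
  have hSs : S = ↑hS.toFinset := (Set.Finite.coe_toFinset hS).symm
  set s := hS.toFinset with hs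
  set t := s.image g with ht
  have h1 : s.card = ∑ b ∈ t, (s.filter (fun x => g x = b)).card :=
    Finset.card_eq_sum_card_fiberwise (fun x hx => Finset.mem_image_of_mem g hx)
  have h2 : ∀ b ∈ t, (s.filter (fun x => g x = b)).card = k := by
    intro b hb
    obtain ⟨a, ha, rfl⟩ := Finset.mem_image.mp hb
    have ha' : a ∈ S := by rwa [hS.mem_toFinset] at ha
    rw [← h a ha']
    have : {x ∈ S | g x = g a} = ↑(s.filter (fun x => g x = g a)) := by
      ext x; simp [hs, hS.mem_toFinset]
    rw [this, Set.ncard_coe_finset]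
  have h3 : s.card = t.card * k := by
    rw [h1, Finset.sum_congr rfl h2, Finset.sum_const, smul_eq_mul]
  have h4 : S.ncard = s.card := by rw [hSs, Set.ncard_coe_finset]
  have h5 : (g '' S).ncard = t.card := by
    have : g '' S = ↑t := by rw [hSs]; simp [ht]
    rw [this, Set.ncard_coe_finset]
  rw [h4, h5, h3]

private lemma pts_le_count (hq : q = Fintype.card F) (W : Submodule F M) :
    {P : Submodule F M | P ≤ W ∧ finrank F P = 1}.ncard * (q - 1)
      = q ^ finrank F W - 1 := by
  have hfin : Finite M := Module.finite_of_finite F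
  set S : Set M := (W : Set M) \ {0} with hS
  have key := fiberCount' S (Set.toFinite _) (fun m => (span F {m} : Submodule F M)) (q - 1) ?_
  · have himg : (fun m => (span F {m} : Submodule F M)) '' S
        = {P : Submodule F M | P ≤ W ∧ finrank F P = 1} := by
      ext P
      constructor
      · rintro ⟨m, ⟨hmW, hm0⟩, rfl⟩
        have hm0' : m ≠ 0 := by simpa using hm0
        exact ⟨span_le.mpr (Set.singleton_subset_iff.mpr hmW), finrank_span_singleton hm0'⟩
      · rintro ⟨hPW, hP1⟩
        have hPb : P ≠ ⊥ := by
          intro h; rw [h, finrank_bot] at hP1; exact absurd hP1 (by norm_num)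
        obtain ⟨m, hmP, hm0⟩ := (Submodule.ne_bot_iff P).mp hPb
        refine ⟨m, ⟨hPW hmP, by simpa using hm0⟩, ?_⟩
        have hle : span F {m} ≤ P := span_le.mpr (Set.singleton_subset_iff.mpr hmP)
        exact eq_of_le_of_finrank_le hle (by rw [hP1, finrank_span_singleton hm0])
    rw [himg] at key
    rw [← key, hS, ncard_submodule_sdiff hq W]
  · intro a ha
    obtain ⟨haW, ha0⟩ := ha
    have ha0' : a ≠ 0 := by simpa using ha0
    have hfib : {x ∈ S | (span F {x} : Submodule F M) = span F {a}}
        = ((span F {a} : Submodule F M) : Set M) \ {0} := by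
      ext x
      constructor
      · rintro ⟨⟨hxW, hx0⟩, hsp⟩
        exact ⟨hsp ▸ Submodule.mem_span_singleton_self x, hx0⟩
      · rintro ⟨hxs, hx0⟩
        have hx0' : x ≠ 0 := by simpa using hx0
        obtain ⟨c, rfl⟩ := Submodule.mem_span_singleton.mp hxs
        have hc : c ≠ 0 := by rintro rfl; simp at hx0'
        have hspan : (span F {c • a} : Submodule F M) = span F {a} :=
          Submodule.span_singleton_smul_eq (IsUnit.mk0 c hc) a
        exact ⟨⟨W.smul_mem c haW, hx0⟩, hspan⟩
    rw [hfib, ncard_submodule_sdiff hq, finrank_span_singleton ha0', pow_one]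

end Counting2

section CountingC

variable {F M : Type*} [Field F] [Fintype F] [AddCommGroup M] [Module F M]
  [FiniteDimensional F M] {q : ℕ}

private lemma finrank_sup_succ {W : Submodule F M} {x : M} (hxW : x ∉ W) :
    finrank F ↥(W ⊔ span F {x}) = finrank F W + 1 := by
  have hx0 : x ≠ 0 := fun h => hxW (h ▸ W.zero_mem)
  have hinf : W ⊓ span F {x} = ⊥ := by
    by_contra hne
    have hle : W ⊓ span F {x} ≤ span F {x} := inf_le_right
    have h1 : 1 ≤ finrank F ↥(W ⊓ span F {x}) := by
      rw [Nat.one_le_iff_ne_zero]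
      intro h0
      exact hne (Submodule.finrank_eq_zero.mp h0)
    have := eq_of_le_of_finrank_le hle (by rw [finrank_span_singleton hx0]; exact h1)
    have hxmem : x ∈ W ⊓ span F {x} := this.symm ▸ Submodule.mem_span_singleton_self x
    exact hxW hxmem.1
  have := Submodule.finrank_sup_add_finrank_inf_eq W (span F {x})
  rw [hinf, finrank_bot, add_zero, finrank_span_singleton hx0] at this
  exact this

private lemma ext_step (hq : q = Fintype.card F) {W Y : Submodule F M} (hWY : W ≤ Y) :
    {V : Submodule F M | W ≤ V ∧ V ≤ Y ∧ finrank F V = finrank F W + 1}.ncard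
      * (q ^ finrank F W * (q - 1)) = q ^ finrank F Y - q ^ finrank F W := by
  have hfin : Finite M := Module.finite_of_finite F
  have hq1 : 1 ≤ q := by rw [hq]; exact Fintype.card_pos
  set S : Set M := (Y : Set M) \ (W : Set M) with hS
  have hgood : ∀ x ∈ S, W ⊔ span F {x} ≤ Y ∧ finrank F ↥(W ⊔ span F {x}) = finrank F W + 1 := by
    rintro x ⟨hxY, hxW⟩
    exact ⟨sup_le hWY (span_le.mpr (Set.singleton_subset_iff.mpr hxY)), finrank_sup_succ hxW⟩
  have key := fiberCount' S (Set.toFinite _) (fun m => W ⊔ span F {m}) (q ^ finrank F W * (q - 1)) ?_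
  · have himg : (fun m => W ⊔ span F {m}) '' S
        = {V : Submodule F M | W ≤ V ∧ V ≤ Y ∧ finrank F V = finrank F W + 1} := by
      ext V
      constructor
      · rintro ⟨m, hm, rfl⟩
        exact ⟨le_sup_left, (hgood m hm).1, (hgood m hm).2⟩
      · rintro ⟨hWV, hVY, hV⟩
        have hlt : W < V := lt_of_le_of_ne hWV (by intro h; rw [← h] at hV; omega)
        obtain ⟨m, hmV, hmW⟩ := SetLike.exists_of_lt hlt
        refine ⟨m, ⟨hVY hmV, hmW⟩, ?_⟩
        have hle : W ⊔ span F {m} ≤ V :=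
          sup_le hWV (span_le.mpr (Set.singleton_subset_iff.mpr hmV))
        exact eq_of_le_of_finrank_le hle (by rw [hV, finrank_sup_succ hmW])
    rw [himg] at key
    rw [← key, hS, Set.ncard_diff (SetLike.coe_subset_coe.mpr hWY) (Set.toFinite _),
      ncard_submodule hq, ncard_submodule hq]
  · intro a ha
    have hfib : {x ∈ S | W ⊔ span F {x} = W ⊔ span F {a}}
        = ((W ⊔ span F {a} : Submodule F M) : Set M) \ (W : Set M) := by
      ext x
      constructor
      · rintro ⟨⟨hxY, hxW⟩, hsp⟩
        refine ⟨hsp ▸ Submodule.mem_sup_right (Submodule.mem_span_singleton_self x), hxW⟩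
      · rintro ⟨hxs, hxW⟩
        have hxY : x ∈ Y := (hgood a ha).1 hxs
        refine ⟨⟨hxY, hxW⟩, ?_⟩
        have hle : W ⊔ span F {x} ≤ W ⊔ span F {a} :=
          sup_le le_sup_left (span_le.mpr (Set.singleton_subset_iff.mpr hxs))
        exact eq_of_le_of_finrank_le hle
          (by rw [finrank_sup_succ hxW, (hgood a ha).2])
    rw [hfib, Set.ncard_diff (SetLike.coe_subset_coe.mpr le_sup_left) (Set.toFinite _),
      ncard_submodule hq, ncard_submodule hq, (hgood a ha).2]
    rw [pow_succ]
    rw [Nat.mul_sub]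
    ring_nf
end CountingC

section CountingD

variable {F M : Type*} [Field F] [Fintype F] [AddCommGroup M] [Module F M]
  [FiniteDimensional F M] {q : ℕ}

private lemma pts_count (hq : q = Fintype.card F) :
    {P : Submodule F M | finrank F P = 1}.ncard * (q - 1) = q ^ finrank F M - 1 := by
  have h := pts_le_count hq (⊤ : Submodule F M)
  rw [finrank_top] at h
  rw [← h]
  congr 2
  ext P
  simp

private lemma hyp3_count (hq : q = Fintype.card F) (h4 : finrank F M = 4) :
    {H : Submodule F M | finrank F H = 3}.ncard * (q - 1) = q ^ 4 - 1 := by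
  have hann : ∀ H : Submodule F M,
      finrank F ↥(Submodule.dualAnnihilator H) + finrank F H = 4 := by
    intro H
    have h := Subspace.finrank_add_finrank_dualCoannihilator_eq (W := H.dualAnnihilator)
    rw [Subspace.dualAnnihilator_dualCoannihilator_eq, h4] at h
    exact h
  have hinj : Function.Injective (Submodule.dualAnnihilator : Submodule F M → _) := by
    intro H1 H2 h
    have := congrArg Submodule.dualCoannihilator h
    rwa [Subspace.dualAnnihilator_dualCoannihilator_eq,
      Subspace.dualAnnihilator_dualCoannihilator_eq] at this
  have himg : (Submodule.dualAnnihilator : Submodule F M → _) '' {H | finrank F H = 3}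
      = {P : Submodule F (Module.Dual F M) | finrank F P = 1} := by
    ext P
    constructor
    · rintro ⟨H, hH3, rfl⟩
      have := hann H
      simp only [Set.mem_setOf_eq] at hH3 ⊢
      omega
    · intro hP1
      refine ⟨P.dualCoannihilator, ?_, Subspace.dualCoannihilator_dualAnnihilator_eq⟩
      have h := Subspace.finrank_add_finrank_dualCoannihilator_eq (W := P)
      rw [h4] at h
      simp only [Set.mem_setOf_eq] at hP1 ⊢
      omega
  have := Set.ncard_image_of_injective {H : Submodule F M | finrank F H = 3} hinj
  rw [himg] at this
  rw [← this]
  have hd : finrank F (Module.Dual F M) = 4 := by rw [Subspace.dual_finrank_eq, h4]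
  rw [← hd]
  exact pts_count hq

end CountingD


namespace Stmt13Aux

variable {F E : Type*} [Field F] [Fintype F] [Field E] [Algebra F E]
  [FiniteDimensional F E] {q : ℕ} (F' : Subalgebra F E)

/-- The spread member through `a`. -/
noncomputable def lineOf (a : E) : Submodule F E :=
  (Subalgebra.toSubmodule F').map (LinearMap.mulLeft F a)

lemma mem_lineOf {a x : E} : x ∈ lineOf F' a ↔ ∃ f ∈ F', a * f = x := by
  simp [lineOf, Submodule.mem_map, LinearMap.mulLeft_apply]

lemma coe_lineOf (a : E) : (lineOf F' a : Set E) = (fun x => a * x) '' (F' : Set E) := by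
  ext x
  rw [SetLike.mem_coe, mem_lineOf]
  constructor
  · rintro ⟨f, hf, rfl⟩; exact ⟨f, hf, rfl⟩
  · rintro ⟨f, hf, rfl⟩; exact ⟨f, hf, rfl⟩

lemma self_mem_lineOf (a : E) : a ∈ lineOf F' a :=
  (mem_lineOf F').mpr ⟨1, F'.one_mem, mul_one a⟩

lemma lineOf_mul_mem {a c x : E} (hc : c ∈ F') (hx : x ∈ lineOf F' a) :
    c * x ∈ lineOf F' a := by
  obtain ⟨f, hf, rfl⟩ := (mem_lineOf F').mp hx
  exact (mem_lineOf F').mpr ⟨f * c, F'.mul_mem hf hc, by ring⟩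

lemma finrank_lineOf (hF'2 : finrank F ↥F' = 2) {a : E} (ha : a ≠ 0) :
    finrank F ↥(lineOf F' a) = 2 := by
  have hinj : Function.Injective (LinearMap.mulLeft F a) := by
    intro x y h
    exact mul_left_cancel₀ ha h
  have e := Submodule.equivMapOfInjective (LinearMap.mulLeft F a) hinj
    (Subalgebra.toSubmodule F')
  have h := (LinearEquiv.finrank_eq e).symm
  rw [show lineOf F' a = (Subalgebra.toSubmodule F').map (LinearMap.mulLeft F a) from rfl, h]
  exact hF'2

/-- inverses inside F' -/
lemma exists_inv_mem {f : E} (hf : f ∈ F') (hf0 : f ≠ 0) :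
    ∃ g ∈ F', f * g = 1 := by
  have hE : Finite E := Module.finite_of_finite F
  have hfin : Finite ↥F' := Subtype.finite
  set φ : ↥F' → ↥F' := fun x => ⟨f * x, F'.mul_mem hf x.2⟩ with hφ
  have hinj : Function.Injective φ := by
    intro x y h
    have : f * (x : E) = f * (y : E) := congrArg Subtype.val h
    exact Subtype.ext (mul_left_cancel₀ hf0 this)
  have hsurj : Function.Surjective φ := Finite.surjective_of_injective hinj
  obtain ⟨g, hg⟩ := hsurj ⟨1, F'.one_mem⟩
  exact ⟨g, g.2, congrArg Subtype.val hg⟩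

lemma lineOf_eq_of_mem {a e : E} (ha : a ≠ 0) (he0 : e ≠ 0)
    (he : e ∈ lineOf F' a) : lineOf F' e = lineOf F' a := by
  obtain ⟨f, hf, rfl⟩ := (mem_lineOf F').mp he
  have hf0 : f ≠ 0 := by rintro rfl; simp at he0
  obtain ⟨g, hg, hfg⟩ := exists_inv_mem F' hf hf0
  apply le_antisymm
  · intro x hx
    obtain ⟨h, hh, rfl⟩ := (mem_lineOf F').mp hx
    exact (mem_lineOf F').mpr ⟨f * h, F'.mul_mem hf hh, by ring⟩
  · intro x hx
    obtain ⟨h, hh, rfl⟩ := (mem_lineOf F').mp hx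
    refine (mem_lineOf F').mpr ⟨g * h, F'.mul_mem hg hh, ?_⟩
    have : a * f * (g * h) = (f * g) * (a * h) := by ring
    rw [this, hfg, one_mul]

variable {L : Set (Submodule F E)}

lemma mem_L_iff
    (hL : ∀ X : Submodule F E, X ∈ L ↔ ∃ a : E, a ≠ 0 ∧ (X : Set E) = (fun x => a * x) '' (F' : Set E))
    {X : Submodule F E} : X ∈ L ↔ ∃ a : E, a ≠ 0 ∧ X = lineOf F' a := by
  rw [hL X]
  constructor
  · rintro ⟨a, ha, hset⟩
    exact ⟨a, ha, SetLike.coe_injective (by rw [hset, coe_lineOf])⟩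
  · rintro ⟨a, ha, rfl⟩
    exact ⟨a, ha, coe_lineOf F' a⟩

lemma lineOf_mem_L
    (hL : ∀ X : Submodule F E, X ∈ L ↔ ∃ a : E, a ≠ 0 ∧ (X : Set E) = (fun x => a * x) '' (F' : Set E))
    {a : E} (ha : a ≠ 0) : lineOf F' a ∈ L :=
  (mem_L_iff F' hL).mpr ⟨a, ha, rfl⟩

lemma eq_lineOf_of_mem_L
    (hL : ∀ X : Submodule F E, X ∈ L ↔ ∃ a : E, a ≠ 0 ∧ (X : Set E) = (fun x => a * x) '' (F' : Set E))
    {X : Submodule F E} (hX : X ∈ L) {e : E} (he : e ∈ X) (he0 : e ≠ 0) :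
    X = lineOf F' e := by
  obtain ⟨a, ha, rfl⟩ := (mem_L_iff F' hL).mp hX
  exact (lineOf_eq_of_mem F' ha he0 he).symm

lemma L_disjoint
    (hL : ∀ X : Submodule F E, X ∈ L ↔ ∃ a : E, a ≠ 0 ∧ (X : Set E) = (fun x => a * x) '' (F' : Set E))
    {X X' : Submodule F E} (hX : X ∈ L) (hX' : X' ∈ L) (hne : X ≠ X') :
    X ⊓ X' = ⊥ := by
  by_contra h
  obtain ⟨e, he, he0⟩ := (Submodule.ne_bot_iff _).mp h
  exact hne ((eq_lineOf_of_mem_L F' hL hX he.1 he0).trans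
    (eq_lineOf_of_mem_L F' hL hX' he.2 he0).symm)

lemma finrank_sup_L (hF'2 : finrank F ↥F' = 2)
    (hL : ∀ X : Submodule F E, X ∈ L ↔ ∃ a : E, a ≠ 0 ∧ (X : Set E) = (fun x => a * x) '' (F' : Set E))
    {X X' : Submodule F E} (hX : X ∈ L) (hX' : X' ∈ L) (hne : X ≠ X') :
    finrank F ↥(X ⊔ X') = 4 := by
  obtain ⟨a, ha, rfl⟩ := (mem_L_iff F' hL).mp hX
  obtain ⟨b, hb, rfl⟩ := (mem_L_iff F' hL).mp hX'
  have h := Submodule.finrank_sup_add_finrank_inf_eq (lineOf F' a) (lineOf F' b)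
  rw [L_disjoint F' hL hX hX' hne, finrank_bot, add_zero,
    finrank_lineOf F' hF'2 ha, finrank_lineOf F' hF'2 hb] at h
  exact h

/-- closure under multiplication by elements of `F'` -/
def IsCl (V : Submodule F E) : Prop := ∀ c ∈ F', ∀ v ∈ V, c * v ∈ V

lemma isCl_lineOf (a : E) : IsCl F' (lineOf F' a) := fun c hc v hv =>
  lineOf_mul_mem F' hc hv

lemma isCl_inf {V V' : Submodule F E} (h : IsCl F' V) (h' : IsCl F' V') :
    IsCl F' (V ⊓ V') := fun c hc v hv => ⟨h c hc v hv.1, h' c hc v hv.2⟩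

lemma isCl_sup {V V' : Submodule F E} (h : IsCl F' V) (h' : IsCl F' V') :
    IsCl F' (V ⊔ V') := by
  intro c hc v hv
  obtain ⟨x, hx, y, hy, rfl⟩ := Submodule.mem_sup.mp hv
  rw [mul_add]
  exact Submodule.add_mem_sup (h c hc x hx) (h' c hc y hy)

lemma isCl_lineOf_le {V : Submodule F E} (h : IsCl F' V) {e : E} (he : e ∈ V) :
    lineOf F' e ≤ V := by
  intro x hx
  obtain ⟨f, hf, rfl⟩ := (mem_lineOf F').mp hx
  rw [mul_comm]
  exact h f hf e he

/-- an element of `F'` outside the prime field line. -/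
lemma exists_f (hF'2 : finrank F ↥F' = 2) :
    ∃ f : E, f ∈ F' ∧ f ∉ (Submodule.span F {(1 : E)}) := by
  by_contra h
  push_neg at h
  have hle : Subalgebra.toSubmodule F' ≤ Submodule.span F {(1 : E)} := fun x hx => h x hx
  have := Submodule.finrank_mono hle
  rw [show finrank F ↥(Subalgebra.toSubmodule F') = 2 from hF'2,
    finrank_span_singleton (one_ne_zero)] at this
  omega

lemma F'_eq_span (hF'2 : finrank F ↥F' = 2) {f : E} (hf : f ∈ F')
    (hf1 : f ∉ (Submodule.span F {(1 : E)})) :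
    Subalgebra.toSubmodule F' = Submodule.span F {(1 : E), f} := by
  have hle : Submodule.span F {(1 : E), f} ≤ Subalgebra.toSubmodule F' := by
    rw [Submodule.span_le]
    rintro x (rfl | rfl)
    · exact F'.one_mem
    · exact hf
  have hlt : Submodule.span F {(1 : E)} < Submodule.span F {(1 : E), f} := by
    refine lt_of_le_of_ne (Submodule.span_mono (by simp)) ?_
    intro h
    exact hf1 (h ▸ Submodule.subset_span (by simp))
  have h1 : finrank F ↥(Submodule.span F {(1 : E)}) = 1 := finrank_span_singleton one_ne_zero
  have h2 := Submodule.finrank_lt_finrank_of_lt hlt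
  rw [h1] at h2
  exact (eq_of_le_of_finrank_le hle (by
    rw [show finrank F ↥(Subalgebra.toSubmodule F') = 2 from hF'2]; omega)).symm

lemma lineOf_le_of_pair (hF'2 : finrank F ↥F' = 2) {f : E} (hf : f ∈ F')
    (hf1 : f ∉ (Submodule.span F {(1 : E)})) {W : Submodule F E} {w : E}
    (hw : w ∈ W) (hfw : f * w ∈ W) : lineOf F' w ≤ W := by
  intro x hx
  obtain ⟨h, hh, rfl⟩ := (mem_lineOf F').mp hx
  have hh' : h ∈ Submodule.span F {(1 : E), f} := by
    rw [← F'_eq_span F' hF'2 hf hf1]; exact hh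
  obtain ⟨c, d, hcd⟩ := Submodule.mem_span_pair.mp hh'
  have : w * h = c • w + d • (f * w) := by
    rw [← hcd]; rw [mul_add]
    rw [mul_smul_comm, mul_smul_comm, mul_one, mul_comm]
  rw [this]
  exact W.add_mem (W.smul_mem c hw) (W.smul_mem d hfw)

/-- Key existence: a 3-dimensional subspace of a closed 4-dimensional space
contains a spread line through some nonzero vector, in fact: there is a nonzero
`w ∈ W` with `lineOf w ≤ W`. -/
lemma exists_line_le (hF'2 : finrank F ↥F' = 2) {V W : Submodule F E}
    (hV : IsCl F' V) (hWV : W ≤ V) (hW3 : finrank F ↥W = 3) (hV4 : finrank F ↥V = 4) :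
    ∃ w : E, w ≠ 0 ∧ w ∈ W ∧ lineOf F' w ≤ W := by
  obtain ⟨f, hf, hf1⟩ := exists_f F' hF'2
  have hf0 : f ≠ 0 := by rintro rfl; exact hf1 (Submodule.zero_mem _)
  obtain ⟨g, hg, hfg⟩ := exists_inv_mem F' hf hf0
  set σ : E →ₗ[F] E := LinearMap.mulLeft F f with hσ
  have hinj : Function.Injective σ := fun x y h => mul_left_cancel₀ hf0 h
  have hsurj : Function.Surjective σ := (LinearMap.injective_iff_surjective).mp hinj
  set eσ : E ≃ₗ[F] E := LinearEquiv.ofBijective σ ⟨hinj, hsurj⟩ with heσ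
  have hcomap : Submodule.comap σ W = Submodule.map (eσ.symm : E →ₗ[F] E) W := by
    ext x
    simp only [Submodule.mem_comap, Submodule.mem_map]
    constructor
    · intro hx
      exact ⟨σ x, hx, eσ.symm_apply_apply x⟩
    · rintro ⟨y, hy, rfl⟩
      have h2 : σ ((eσ.symm : E →ₗ[F] E) y) = y := eσ.apply_symm_apply y
      rw [h2]; exact hy
  have hcrank : finrank F ↥(Submodule.comap σ W) = 3 := by
    rw [hcomap, LinearEquiv.finrank_map_eq, hW3]
  have hcle : Submodule.comap σ W ≤ V := by
    intro x hx
    have h1 : f * x ∈ V := hWV hx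
    have h2 : g * (f * x) ∈ V := hV g hg _ h1
    have : g * (f * x) = x := by
      rw [← mul_assoc, mul_comm g f, hfg, one_mul]
    rwa [this] at h2
  have hsuple : W ⊔ Submodule.comap σ W ≤ V := sup_le hWV hcle
  have hsup4 : finrank F ↥(W ⊔ Submodule.comap σ W) ≤ 4 := by
    rw [← hV4]; exact Submodule.finrank_mono hsuple
  have hsum := Submodule.finrank_sup_add_finrank_inf_eq W (Submodule.comap σ W)
  rw [hW3, hcrank] at hsum
  have hipos : 0 < finrank F ↥(W ⊓ Submodule.comap σ W) := by omega
  have hibot : W ⊓ Submodule.comap σ W ≠ ⊥ := by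
    intro h
    rw [h, finrank_bot] at hipos; omega
  obtain ⟨w, hwmem, hw0⟩ := (Submodule.ne_bot_iff _).mp hibot
  exact ⟨w, hw0, hwmem.1, lineOf_le_of_pair F' hF'2 hf hf1 hwmem.1 hwmem.2⟩

/-- a closed subspace of dimension 3 is impossible -/
lemma not_isCl_dim3 (hF'2 : finrank F ↥F' = 2)
    (hL : ∀ X : Submodule F E, X ∈ L ↔ ∃ a : E, a ≠ 0 ∧ (X : Set E) = (fun x => a * x) '' (F' : Set E))
    {W : Submodule F E} (hW : IsCl F' W) (hW3 : finrank F ↥W = 3) : False := by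
  have hWb : W ≠ ⊥ := by intro h; rw [h, finrank_bot] at hW3; omega
  obtain ⟨e, he, he0⟩ := (Submodule.ne_bot_iff _).mp hWb
  have hX1 : lineOf F' e ≤ W := isCl_lineOf_le F' hW he
  have hlt : lineOf F' e < W := by
    refine lt_of_le_of_ne hX1 ?_
    intro h
    rw [← h, finrank_lineOf F' hF'2 he0] at hW3; omega
  obtain ⟨w, hwW, hwX⟩ := SetLike.exists_of_lt hlt
  have hw0 : w ≠ 0 := by rintro rfl; exact hwX (Submodule.zero_mem _)
  have hX2 : lineOf F' w ≤ W := isCl_lineOf_le F' hW hwW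
  have hne : lineOf F' e ≠ lineOf F' w := by
    intro h
    exact hwX (h ▸ self_mem_lineOf F' w)
  have h4 := finrank_sup_L F' hF'2 hL (lineOf_mem_L F' hL he0) (lineOf_mem_L F' hL hw0) hne
  have hle : lineOf F' e ⊔ lineOf F' w ≤ W := sup_le hX1 hX2
  have := Submodule.finrank_mono hle
  rw [h4, hW3] at this
  omega

lemma hq2 (hq : q = Fintype.card F) : 2 ≤ q := by
  rw [hq]; exact Fintype.one_lt_card

lemma finite_submodule : Finite (Submodule F E) := by
  have hE : Finite E := Module.finite_of_finite F
  exact Finite.of_injective (fun W : Submodule F E => (W : Set E)) SetLike.coe_injective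

lemma isCl_of_mem_L
    (hL : ∀ X : Submodule F E, X ∈ L ↔ ∃ a : E, a ≠ 0 ∧ (X : Set E) = (fun x => a * x) '' (F' : Set E))
    {X : Submodule F E} (hX : X ∈ L) : IsCl F' X := by
  obtain ⟨a, ha, rfl⟩ := (mem_L_iff F' hL).mp hX
  exact isCl_lineOf F' a

lemma isCl_of_two_lines (hF'2 : finrank F ↥F' = 2)
    (hL : ∀ X : Submodule F E, X ∈ L ↔ ∃ a : E, a ≠ 0 ∧ (X : Set E) = (fun x => a * x) '' (F' : Set E))
    {V X X' : Submodule F E} (hV4 : finrank F ↥V = 4) (hX : X ∈ L) (hX' : X' ∈ L)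
    (hne : X ≠ X') (h1 : X ≤ V) (h2 : X' ≤ V) : IsCl F' V := by
  have hsup : X ⊔ X' = V := by
    refine eq_of_le_of_finrank_le (sup_le h1 h2) ?_
    rw [finrank_sup_L F' hF'2 hL hX hX' hne, hV4]
  rw [← hsup]
  exact isCl_sup F' (isCl_of_mem_L F' hL hX) (isCl_of_mem_L F' hL hX')

/-- claim B : number of lines inside a closed 4-dimensional space -/
lemma lines_count_closed (hq : q = Fintype.card F) (hF'2 : finrank F ↥F' = 2)
    (hL : ∀ X : Submodule F E, X ∈ L ↔ ∃ a : E, a ≠ 0 ∧ (X : Set E) = (fun x => a * x) '' (F' : Set E))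
    {V : Submodule F E} (hV : IsCl F' V) (hV4 : finrank F ↥V = 4) :
    {X ∈ L | X ≤ V}.ncard = q ^ 2 + 1 := by
  have hE : Finite E := Module.finite_of_finite F
  set S : Set E := (V : Set E) \ {0} with hS
  have key := fiberCount' S (Set.toFinite _) (fun e => lineOf F' e) (q ^ 2 - 1) ?_
  · have himg : (fun e => lineOf F' e) '' S = {X ∈ L | X ≤ V} := by
      ext X
      constructor
      · rintro ⟨e, ⟨heV, he0⟩, rfl⟩
        have he0' : e ≠ 0 := by simpa using he0
        exact ⟨lineOf_mem_L F' hL he0', isCl_lineOf_le F' hV heV⟩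
      · rintro ⟨hXL, hXV⟩
        obtain ⟨a, ha, rfl⟩ := (mem_L_iff F' hL).mp hXL
        exact ⟨a, ⟨hXV (self_mem_lineOf F' a), by simpa using ha⟩, rfl⟩
    rw [himg] at key
    rw [hS, ncard_submodule_sdiff hq V, hV4] at key
    -- key : q ^ 4 - 1 = {X ∈ L | X ≤ V}.ncard * (q ^ 2 - 1)
    have hq2' := hq2 (q := q) hq
    have e2 : 2 ≤ q ^ 2 := by nlinarith
    have e4 : q ^ 4 = q ^ 2 * q ^ 2 := by ring
    set t := {X ∈ L | X ≤ V}.ncard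
    have hle1 : (q ^ 2 + 1) * 1 ≤ (q ^ 2 + 1) * q ^ 2 := by nlinarith
    have hle2 : 1 ≤ q ^ 2 * q ^ 2 := by nlinarith
    have : (q ^ 2 + 1) * (q ^ 2 - 1) = q ^ 4 - 1 := by
      rw [Nat.mul_sub, e4]; zify [hle1, hle2]; ring
    have h2 : t * (q ^ 2 - 1) = (q ^ 2 + 1) * (q ^ 2 - 1) := by omega
    exact Nat.eq_of_mul_eq_mul_right (by omega) h2
  · intro a ha
    obtain ⟨haV, ha0⟩ := ha
    have ha0' : a ≠ 0 := by simpa using ha0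
    have hfib : {x ∈ S | lineOf F' x = lineOf F' a} = ((lineOf F' a : Set E)) \ {0} := by
      ext x
      constructor
      · rintro ⟨⟨hxV, hx0⟩, hsp⟩
        exact ⟨hsp ▸ self_mem_lineOf F' x, hx0⟩
      · rintro ⟨hxs, hx0⟩
        have hx0' : x ≠ 0 := by simpa using hx0
        refine ⟨⟨isCl_lineOf_le F' hV haV hxs, hx0⟩, lineOf_eq_of_mem F' ha0' hx0' hxs⟩
    rw [hfib, ncard_submodule_sdiff hq, finrank_lineOf F' hF'2 ha0']

lemma inf_ne_bot_of {X W V : Submodule F E} (hXV : X ≤ V) (hWV : W ≤ V)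
    (h : finrank F ↥V < finrank F ↥X + finrank F ↥W) : X ⊓ W ≠ ⊥ := by
  intro hb
  have hs := Submodule.finrank_sup_add_finrank_inf_eq X W
  rw [hb, finrank_bot, add_zero] at hs
  have := Submodule.finrank_mono (sup_le hXV hWV)
  omega

lemma finrank_inf_line (hF'2 : finrank F ↥F' = 2)
    (hL : ∀ X : Submodule F E, X ∈ L ↔ ∃ a : E, a ≠ 0 ∧ (X : Set E) = (fun x => a * x) '' (F' : Set E))
    {X W : Submodule F E} (hX : X ∈ L) (hnle : ¬ X ≤ W) (hnb : X ⊓ W ≠ ⊥) :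
    finrank F ↥(X ⊓ W) = 1 := by
  obtain ⟨a, ha, rfl⟩ := (mem_L_iff F' hL).mp hX
  have h2 : finrank F ↥(lineOf F' a) = 2 := finrank_lineOf F' hF'2 ha
  have hle : finrank F ↥(lineOf F' a ⊓ W) ≤ 2 := h2 ▸ Submodule.finrank_mono inf_le_left
  have hge : 1 ≤ finrank F ↥(lineOf F' a ⊓ W) := by
    rw [Nat.one_le_iff_ne_zero]
    intro h0
    exact hnb (Submodule.finrank_eq_zero.mp h0)
  interval_cases h : finrank F ↥(lineOf F' a ⊓ W)
  · rfl
  · exfalso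
    have := eq_of_le_of_finrank_le (inf_le_left : lineOf F' a ⊓ W ≤ lineOf F' a) (by omega)
    exact hnle (this ▸ (inf_le_right : lineOf F' a ⊓ W ≤ W))

lemma lambda_count (hq : q = Fintype.card F) (hF'2 : finrank F ↥F' = 2)
    (hL : ∀ X : Submodule F E, X ∈ L ↔ ∃ a : E, a ≠ 0 ∧ (X : Set E) = (fun x => a * x) '' (F' : Set E))
    {W : Submodule F E} (hW3 : finrank F ↥W = 3) (hnl : ∀ X ∈ L, ¬ X ≤ W) :
    {X | X ∈ L ∧ X ⊓ W ≠ ⊥}.ncard * (q - 1) = q ^ 3 - 1 := by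
  have hinj : Set.InjOn (fun X => X ⊓ W) {X | X ∈ L ∧ X ⊓ W ≠ ⊥} := by
    rintro X ⟨hXL, hXb⟩ X' ⟨hX'L, hX'b⟩ h
    obtain ⟨e, he, he0⟩ := (Submodule.ne_bot_iff _).mp hXb
    simp only at h
    have he' : e ∈ X' ⊓ W := h ▸ he
    exact (eq_lineOf_of_mem_L F' hL hXL he.1 he0).trans
      (eq_lineOf_of_mem_L F' hL hX'L he'.1 he0).symm
  have himg : (fun X => X ⊓ W) '' {X | X ∈ L ∧ X ⊓ W ≠ ⊥}
      = {P : Submodule F E | P ≤ W ∧ finrank F ↥P = 1} := by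
    ext P
    constructor
    · rintro ⟨X, ⟨hXL, hXb⟩, rfl⟩
      exact ⟨inf_le_right, finrank_inf_line F' hF'2 hL hXL (hnl X hXL) hXb⟩
    · rintro ⟨hPW, hP1⟩
      have hPb : P ≠ ⊥ := by
        intro h; rw [h, finrank_bot] at hP1; omega
      obtain ⟨e, heP, he0⟩ := (Submodule.ne_bot_iff _).mp hPb
      have hXL : lineOf F' e ∈ L := lineOf_mem_L F' hL he0
      have hXb : lineOf F' e ⊓ W ≠ ⊥ := by
        intro h
        have : e ∈ lineOf F' e ⊓ W := ⟨self_mem_lineOf F' e, hPW heP⟩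
        rw [h] at this
        exact he0 this
      refine ⟨lineOf F' e, ⟨hXL, hXb⟩, ?_⟩
      have hPle : P ≤ lineOf F' e ⊓ W := by
        have : P = Submodule.span F {e} := by
          refine (eq_of_le_of_finrank_le (Submodule.span_le.mpr
            (Set.singleton_subset_iff.mpr heP)) ?_).symm
          rw [hP1, finrank_span_singleton he0]
        rw [this, Submodule.span_le, Set.singleton_subset_iff]
        exact ⟨self_mem_lineOf F' e, hPW heP⟩
      refine (eq_of_le_of_finrank_le hPle ?_).symm
      rw [hP1, finrank_inf_line F' hF'2 hL hXL (hnl _ hXL) hXb]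
  have := Set.ncard_image_of_injOn hinj
  rw [himg] at this
  rw [← this] at *
  have h := pts_le_count hq W
  rw [hW3] at h
  rw [this, h]

lemma hyp_le_count (hq : q = Fintype.card F) {U : Submodule F E} (hU4 : finrank F ↥U = 4) :
    {W : Submodule F E | W ≤ U ∧ finrank F ↥W = 3}.ncard * (q - 1) = q ^ 4 - 1 := by
  have h := hyp3_count (M := ↥U) hq hU4
  have hinj : Function.Injective (Submodule.map U.subtype) :=
    Submodule.map_injective_of_injective U.injective_subtype
  have himg : (Submodule.map U.subtype) '' {H : Submodule F ↥U | finrank F ↥H = 3}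
      = {W : Submodule F E | W ≤ U ∧ finrank F ↥W = 3} := by
    ext W
    constructor
    · rintro ⟨H, hH, rfl⟩
      refine ⟨Submodule.map_subtype_le U H, ?_⟩
      rw [Submodule.finrank_map_subtype_eq]
      exact hH
    · rintro ⟨hWU, hW3⟩
      refine ⟨W.comap U.subtype, ?_, ?_⟩
      · have e := Submodule.comapSubtypeEquivOfLe hWU
        simp only [Set.mem_setOf_eq]
        rw [LinearEquiv.finrank_eq e]
        exact hW3
      · rw [Submodule.map_comap_subtype, inf_eq_right.mpr hWU]
  rw [← himg, Set.ncard_image_of_injective _ hinj]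
  exact h

lemma tset_empty (hL : ∀ X : Submodule F E, X ∈ L ↔ ∃ a : E, a ≠ 0 ∧ (X : Set E) = (fun x => a * x) '' (F' : Set E))
    {U : Submodule F E} (h0 : {X ∈ L | X ≤ U}.ncard = 0) : ∀ X ∈ L, ¬ X ≤ U := by
  have : Finite (Submodule F E) := finite_submodule (F := F) (E := E)
  have hemp := (Set.ncard_eq_zero (Set.toFinite _)).mp h0
  intro X hX hXU
  have : X ∈ ({X | X ∈ L ∧ X ≤ U} : Set _) := ⟨hX, hXU⟩
  rw [hemp] at this
  exact this

lemma isCl_of_ncard_big (hq : q = Fintype.card F) (hF'2 : finrank F ↥F' = 2)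
    (hL : ∀ X : Submodule F E, X ∈ L ↔ ∃ a : E, a ≠ 0 ∧ (X : Set E) = (fun x => a * x) '' (F' : Set E))
    {V : Submodule F E} (hV4 : finrank F ↥V = 4)
    (hVq : {X ∈ L | X ≤ V}.ncard = q ^ 2 + 1) : IsCl F' V := by
  have : Finite (Submodule F E) := finite_submodule (F := F) (E := E)
  have hq2' := hq2 (q := q) hq
  have h1 : 1 < ({X | X ∈ L ∧ X ≤ V} : Set _).ncard := by rw [hVq]; nlinarith
  obtain ⟨X, X', hX, hX', hne⟩ := (Set.one_lt_ncard_iff (Set.toFinite _)).mp h1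
  exact isCl_of_two_lines F' hF'2 hL hV4 hX.1 hX'.1 hne hX.2 hX'.2

/-- Part 1: no edges between C⁰ and C². -/
lemma part1 (hq : q = Fintype.card F) (hF'2 : finrank F ↥F' = 2)
    (hL : ∀ X : Submodule F E, X ∈ L ↔ ∃ a : E, a ≠ 0 ∧ (X : Set E) = (fun x => a * x) '' (F' : Set E))
    {U V : Submodule F E} (hU4 : finrank F ↥U = 4)
    (hU0 : {X ∈ L | X ≤ U}.ncard = 0) (hV4 : finrank F ↥V = 4)
    (hVq : {X ∈ L | X ≤ V}.ncard = q ^ 2 + 1) :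
    finrank F ↥(U ⊓ V) ≠ 3 := by
  intro h3
  have hVcl := isCl_of_ncard_big F' hq hF'2 hL hV4 hVq
  obtain ⟨w, hw0, hwW, hwle⟩ := exists_line_le F' hF'2 hVcl (inf_le_right : U ⊓ V ≤ V) h3 hV4
  exact tset_empty F' hL hU0 (lineOf F' w) (lineOf_mem_L F' hL hw0)
    (hwle.trans inf_le_left)

lemma finrank_L (hF'2 : finrank F ↥F' = 2)
    (hL : ∀ X : Submodule F E, X ∈ L ↔ ∃ a : E, a ≠ 0 ∧ (X : Set E) = (fun x => a * x) '' (F' : Set E))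
    {X : Submodule F E} (hX : X ∈ L) : finrank F ↥X = 2 := by
  obtain ⟨a, ha, rfl⟩ := (mem_L_iff F' hL).mp hX
  exact finrank_lineOf F' hF'2 ha

lemma sup_line_dim4 (hF'2 : finrank F ↥F' = 2)
    (hL : ∀ X : Submodule F E, X ∈ L ↔ ∃ a : E, a ≠ 0 ∧ (X : Set E) = (fun x => a * x) '' (F' : Set E))
    {W X : Submodule F E} (hW3 : finrank F ↥W = 3) (hX : X ∈ L)
    (hnle : ¬ X ≤ W) (hXb : X ⊓ W ≠ ⊥) : finrank F ↥(W ⊔ X) = 4 := by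
  have h := Submodule.finrank_sup_add_finrank_inf_eq W X
  rw [hW3, finrank_L F' hF'2 hL hX] at h
  have h1 : finrank F ↥(W ⊓ X) = 1 := by
    rw [inf_comm]
    exact finrank_inf_line F' hF'2 hL hX hnle hXb
  omega

lemma tset_sup_singleton (hq : q = Fintype.card F) (hF'2 : finrank F ↥F' = 2)
    (hL : ∀ X : Submodule F E, X ∈ L ↔ ∃ a : E, a ≠ 0 ∧ (X : Set E) = (fun x => a * x) '' (F' : Set E))
    {W X : Submodule F E} (hW3 : finrank F ↥W = 3) (hnoW : ∀ X ∈ L, ¬ X ≤ W)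
    (hX : X ∈ L) (hXb : X ⊓ W ≠ ⊥) :
    {X' ∈ L | X' ≤ W ⊔ X} = {X} := by
  have h4 : finrank F ↥(W ⊔ X) = 4 := sup_line_dim4 F' hF'2 hL hW3 hX (hnoW X hX) hXb
  ext X'
  simp only [Set.mem_setOf_eq, Set.mem_singleton_iff]
  constructor
  · rintro ⟨hX'L, hX'le⟩
    by_contra hne
    have hcl : IsCl F' (W ⊔ X) :=
      isCl_of_two_lines F' hF'2 hL h4 hX'L hX hne hX'le le_sup_right
    obtain ⟨w, hw0, hwW, hwle⟩ := exists_line_le F' hF'2 hcl le_sup_left hW3 h4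
    exact hnoW _ (lineOf_mem_L F' hL hw0) hwle
  · rintro rfl
    exact ⟨hX, le_sup_right⟩

lemma sup_injOn (hq : q = Fintype.card F) (hF'2 : finrank F ↥F' = 2)
    (hL : ∀ X : Submodule F E, X ∈ L ↔ ∃ a : E, a ≠ 0 ∧ (X : Set E) = (fun x => a * x) '' (F' : Set E))
    {W : Submodule F E} (hW3 : finrank F ↥W = 3) (hnoW : ∀ X ∈ L, ¬ X ≤ W) :
    Set.InjOn (fun X => W ⊔ X) {X | X ∈ L ∧ X ⊓ W ≠ ⊥} := by
  rintro X ⟨hXL, hXb⟩ X' ⟨hX'L, hX'b⟩ h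
  simp only at h
  have h1 := tset_sup_singleton F' hq hF'2 hL hW3 hnoW hXL hXb
  have h2 := tset_sup_singleton F' hq hF'2 hL hW3 hnoW hX'L hX'b
  rw [← h] at h2
  have : X ∈ ({X'} : Set (Submodule F E)) := by
    rw [← h2]; exact ⟨hXL, le_sup_right⟩
  simpa using this

/-- Part 2: each vertex of C⁰ has gb4 * gb3 neighbours in C¹. -/
lemma part2 (hq : q = Fintype.card F) (hF'2 : finrank F ↥F' = 2)
    (hL : ∀ X : Submodule F E, X ∈ L ↔ ∃ a : E, a ≠ 0 ∧ (X : Set E) = (fun x => a * x) '' (F' : Set E))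
    (gb : ℕ → ℕ) (hgb : ∀ m : ℕ, gb m * (q - 1) = q ^ m - 1)
    {U : Submodule F E} (hU4 : finrank F ↥U = 4)
    (hU0 : {X ∈ L | X ≤ U}.ncard = 0) :
    {V : Submodule F E | finrank F ↥V = 4 ∧ {X ∈ L | X ≤ V}.ncard = 1 ∧
      finrank F ↥(U ⊓ V) = 3}.ncard = gb 4 * gb 3 := by
  have hfinsub : Finite (Submodule F E) := finite_submodule (F := F) (E := E)
  have hq2' := hq2 (q := q) hq
  have hnoU : ∀ X ∈ L, ¬ X ≤ U := tset_empty F' hL hU0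
  set A := {V : Submodule F E | finrank F ↥V = 4 ∧ {X ∈ L | X ≤ V}.ncard = 1 ∧
      finrank F ↥(U ⊓ V) = 3} with hA
  -- per-hyperplane analysis
  have hWfacts : ∀ W : Submodule F E, W ≤ U → finrank F ↥W = 3 →
      {V' ∈ A | U ⊓ V' = W} = (fun X => W ⊔ X) '' {X | X ∈ L ∧ X ⊓ W ≠ ⊥} := by
    intro W hWU hW3
    have hnoW : ∀ X ∈ L, ¬ X ≤ W := fun X hX h => hnoU X hX (h.trans hWU)
    ext V
    constructor
    · rintro ⟨⟨hV4, hV1, hV3⟩, hVW⟩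
      obtain ⟨X, hXs⟩ := (Set.ncard_eq_one).mp hV1
      have hXmem : X ∈ {X ∈ L | X ≤ V} := by rw [hXs]; rfl
      obtain ⟨hXL, hXV⟩ := hXmem
      have hXb : X ⊓ W ≠ ⊥ := by
        refine inf_ne_bot_of (V := V) hXV (hVW ▸ inf_le_right) ?_
        rw [hV4, finrank_L F' hF'2 hL hXL, hW3]; omega
      refine ⟨X, ⟨hXL, hXb⟩, ?_⟩
      simp only
      refine eq_of_le_of_finrank_le (sup_le (hVW ▸ inf_le_right) hXV) ?_
      rw [hV4, sup_line_dim4 F' hF'2 hL hW3 hXL (hnoW X hXL) hXb]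
    · rintro ⟨X, ⟨hXL, hXb⟩, rfl⟩
      simp only
      have h4 : finrank F ↥(W ⊔ X) = 4 := sup_line_dim4 F' hF'2 hL hW3 hXL (hnoW X hXL) hXb
      have hinfW : U ⊓ (W ⊔ X) = W := by
        have hle1 : W ≤ U ⊓ (W ⊔ X) := le_inf hWU le_sup_left
        have hle2 : finrank F ↥(U ⊓ (W ⊔ X)) ≤ 4 := by
          rw [← h4]; exact Submodule.finrank_mono inf_le_right
        have hge : 3 ≤ finrank F ↥(U ⊓ (W ⊔ X)) := by
          rw [← hW3]; exact Submodule.finrank_mono hle1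
        rcases Nat.lt_or_ge (finrank F ↥(U ⊓ (W ⊔ X))) 4 with hlt | hge4
        · exact (eq_of_le_of_finrank_le hle1 (by omega)).symm
        · exfalso
          have : U ⊓ (W ⊔ X) = W ⊔ X :=
            eq_of_le_of_finrank_le inf_le_right (by omega)
          have hXU : X ≤ U := le_sup_right.trans (this ▸ inf_le_left)
          exact hnoU X hXL hXU
      refine ⟨⟨h4, ?_, by rw [hinfW]; exact hW3⟩, hinfW⟩
      rw [tset_sup_singleton F' hq hF'2 hL hW3 hnoW hXL hXb]
      exact Set.ncard_singleton X
  have key := fiberCount' A (Set.toFinite _) (fun V => U ⊓ V) (gb 3) ?_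
  · -- image is the full set of hyperplanes of U
    have hgb3pos : 0 < gb 3 := by
      have hq3 : q ≤ q ^ 3 := Nat.le_self_pow (by norm_num) q
      have h3 := hgb 3
      rcases Nat.eq_zero_or_pos (gb 3) with h | h
      · rw [h, zero_mul] at h3; omega
      · exact h
    have himg : (fun V => U ⊓ V) '' A = {W : Submodule F E | W ≤ U ∧ finrank F ↥W = 3} := by
      ext W
      constructor
      · rintro ⟨V, ⟨hV4, hV1, hV3⟩, rfl⟩
        exact ⟨inf_le_left, hV3⟩
      · rintro ⟨hWU, hW3⟩
        have hnoW : ∀ X ∈ L, ¬ X ≤ W := fun X hX h => hnoU X hX (h.trans hWU)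
        have hlam : {X | X ∈ L ∧ X ⊓ W ≠ ⊥}.ncard * (q - 1) = q ^ 3 - 1 :=
          lambda_count F' hq hF'2 hL hW3 hnoW
        have hlamnc : {X | X ∈ L ∧ X ⊓ W ≠ ⊥}.ncard = gb 3 := by
          have h3 := hgb 3
          exact Nat.eq_of_mul_eq_mul_right (show 0 < q - 1 by omega) (hlam.trans h3.symm)
        have hne : {X | X ∈ L ∧ X ⊓ W ≠ ⊥}.Nonempty := by
          rw [← Set.ncard_pos (Set.toFinite _), hlamnc]; omega
        obtain ⟨X, hX⟩ := hne
        have := hWfacts W hWU hW3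
        have hmem : W ⊔ X ∈ {V' ∈ A | U ⊓ V' = W} := by
          rw [this]; exact ⟨X, hX, rfl⟩
        exact ⟨W ⊔ X, hmem.1, hmem.2⟩
    rw [himg] at key
    have hhyp := hyp_le_count (q := q) hq hU4
    have hhypcard : {W : Submodule F E | W ≤ U ∧ finrank F ↥W = 3}.ncard = gb 4 := by
      have h4 := hgb 4
      exact Nat.eq_of_mul_eq_mul_right (show 0 < q - 1 by omega) (hhyp.trans h4.symm)
    rw [hhypcard] at key
    exact key
  · -- fibers
    intro V hV
    obtain ⟨hV4, hV1, hV3⟩ := hV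
    set W := U ⊓ V with hW
    have hWU : W ≤ U := inf_le_left
    have hW3 : finrank F ↥W = 3 := hV3
    have hnoW : ∀ X ∈ L, ¬ X ≤ W := fun X hX h => hnoU X hX (h.trans hWU)
    have hfib := hWfacts W hWU hW3
    have : {x ∈ A | U ⊓ x = U ⊓ V} = {V' ∈ A | U ⊓ V' = W} := rfl
    rw [this, hfib, Set.ncard_image_of_injOn (sup_injOn F' hq hF'2 hL hW3 hnoW)]
    have hlam := lambda_count F' hq hF'2 hL hW3 hnoW
    have h3 := hgb 3
    exact Nat.eq_of_mul_eq_mul_right (show 0 < q - 1 by omega) (hlam.trans h3.symm)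

/-- Part 4: each vertex of C² has q·gb4·gb(n-4) neighbours, all in C¹. -/
lemma part4 (hq : q = Fintype.card F) (hF'2 : finrank F ↥F' = 2)
    (hL : ∀ X : Submodule F E, X ∈ L ↔ ∃ a : E, a ≠ 0 ∧ (X : Set E) = (fun x => a * x) '' (F' : Set E))
    (gb : ℕ → ℕ) (hgb : ∀ m : ℕ, gb m * (q - 1) = q ^ m - 1)
    {n : ℕ} (hn8 : 8 ≤ n) (hdim : finrank F E = n)
    {U : Submodule F E} (hU4 : finrank F ↥U = 4)
    (hUq : {X ∈ L | X ≤ U}.ncard = q ^ 2 + 1) :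
    {V : Submodule F E | finrank F ↥V = 4 ∧ {X ∈ L | X ≤ V}.ncard = 1 ∧
      finrank F ↥(U ⊓ V) = 3}.ncard = q * (gb 4 * gb (n - 4)) := by
  have hfinsub : Finite (Submodule F E) := finite_submodule (F := F) (E := E)
  have hq2' := hq2 (q := q) hq
  have hUcl := isCl_of_ncard_big F' hq hF'2 hL hU4 hUq
  -- the set equals the set of all neighbours
  have hAeq : {V : Submodule F E | finrank F ↥V = 4 ∧ {X ∈ L | X ≤ V}.ncard = 1 ∧
      finrank F ↥(U ⊓ V) = 3}
      = {V : Submodule F E | finrank F ↥V = 4 ∧ finrank F ↥(U ⊓ V) = 3} := by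
    ext V
    simp only [Set.mem_setOf_eq]
    constructor
    · rintro ⟨h1, h2, h3⟩; exact ⟨h1, h3⟩
    · rintro ⟨hV4, hV3⟩
      refine ⟨hV4, ?_, hV3⟩
      obtain ⟨w, hw0, hwW, hwle⟩ :=
        exists_line_le F' hF'2 hUcl (inf_le_left : U ⊓ V ≤ U) hV3 hU4
      have hsing : {X ∈ L | X ≤ V} = {lineOf F' w} := by
        ext X'
        simp only [Set.mem_setOf_eq, Set.mem_singleton_iff]
        constructor
        · rintro ⟨hX'L, hX'V⟩
          by_contra hne
          have hwL : lineOf F' w ∈ L := lineOf_mem_L F' hL hw0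
          have hwV : lineOf F' w ≤ V := hwle.trans inf_le_right
          have hVcl : IsCl F' V :=
            isCl_of_two_lines F' hF'2 hL hV4 hX'L hwL hne hX'V hwV
          exact not_isCl_dim3 F' hF'2 hL (isCl_inf F' hUcl hVcl) hV3
        · rintro rfl
          exact ⟨lineOf_mem_L F' hL hw0, hwle.trans inf_le_right⟩
      rw [hsing, Set.ncard_singleton]
  rw [hAeq]
  set B := {V : Submodule F E | finrank F ↥V = 4 ∧ finrank F ↥(U ⊓ V) = 3} with hB
  have hWfacts : ∀ W : Submodule F E, W ≤ U → finrank F ↥W = 3 →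
      {V' ∈ B | U ⊓ V' = W}
        = {V : Submodule F E | W ≤ V ∧ V ≤ ⊤ ∧ finrank F ↥V = finrank F ↥W + 1} \ {U} := by
    intro W hWU hW3
    rw [hW3]
    ext V
    simp only [Set.mem_setOf_eq, Set.mem_diff, Set.mem_singleton_iff]
    constructor
    · rintro ⟨⟨hV4, hV3⟩, hVW⟩
      refine ⟨⟨hVW ▸ inf_le_right, le_top, by omega⟩, ?_⟩
      rintro rfl
      rw [inf_idem] at hVW
      rw [hVW] at hU4
      omega
    · rintro ⟨⟨hWV, _, hV4⟩, hVU⟩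
      have hle1 : W ≤ U ⊓ V := le_inf hWU hWV
      have hge : 3 ≤ finrank F ↥(U ⊓ V) := by
        rw [← hW3]; exact Submodule.finrank_mono hle1
      have hle2 : finrank F ↥(U ⊓ V) ≤ 4 := by
        rw [show (4 : ℕ) = finrank F ↥V by omega]
        exact Submodule.finrank_mono inf_le_right
      rcases Nat.lt_or_ge (finrank F ↥(U ⊓ V)) 4 with hlt | hge4
      · have hVW : U ⊓ V = W := (eq_of_le_of_finrank_le hle1 (by omega)).symm
        exact ⟨⟨by omega, by rw [hVW]; exact hW3⟩, hVW⟩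
      · exfalso
        have h1 : U ⊓ V = V := eq_of_le_of_finrank_le inf_le_right (by omega)
        have hVU' : V ≤ U := h1 ▸ inf_le_left
        exact hVU (eq_of_le_of_finrank_le hVU' (by omega))
  -- value of the per-hyperplane extension count
  have hext : ∀ W : Submodule F E, finrank F ↥W = 3 →
      {V : Submodule F E | W ≤ V ∧ V ≤ ⊤ ∧ finrank F ↥V = finrank F ↥W + 1}.ncard
        * (q - 1) = q ^ (n - 3) - 1 := by
    intro W hW3
    have h := ext_step (M := E) hq (le_top : W ≤ ⊤)
    rw [hW3, finrank_top, hdim] at h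
    have hq3 : (0 : ℕ) < q ^ 3 := by positivity
    have hpow : q ^ n = q ^ 3 * q ^ (n - 3) := by
      rw [← pow_add]; congr 1; omega
    have h2 : q ^ n - q ^ 3 = q ^ 3 * (q ^ (n - 3) - 1) := by
      rw [Nat.mul_sub, hpow, mul_one]
    rw [h2] at h
    apply Nat.eq_of_mul_eq_mul_left hq3
    calc q ^ 3 * ({V : Submodule F E | W ≤ V ∧ V ≤ ⊤ ∧ finrank F ↥V = finrank F ↥W + 1}.ncard * (q - 1))
        = {V : Submodule F E | W ≤ V ∧ V ≤ ⊤ ∧ finrank F ↥V = finrank F ↥W + 1}.ncard * (q ^ 3 * (q - 1)) := by ring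
      _ = q ^ 3 * (q ^ (n - 3) - 1) := by rw [← hW3] at h ⊢; exact h
  -- fiber cardinality
  have hfibval : ∀ W : Submodule F E, W ≤ U → finrank F ↥W = 3 →
      {V' ∈ B | U ⊓ V' = W}.ncard = q * gb (n - 4) := by
    intro W hWU hW3
    rw [hWfacts W hWU hW3]
    have hUmem : U ∈ {V : Submodule F E | W ≤ V ∧ V ≤ ⊤ ∧ finrank F ↥V = finrank F ↥W + 1} := by
      exact ⟨hWU, le_top, by omega⟩
    rw [Set.ncard_diff_singleton_of_mem hUmem]
    have h := hext W hW3
    have hn3 : q ≤ q ^ (n - 3) := Nat.le_self_pow (by omega) q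
    have hpow : q ^ (n - 3) = q ^ (n - 4) * q := by rw [← pow_succ]; congr 1; omega
    have hkey : (q * gb (n - 4)) * (q - 1) = q ^ (n - 3) - q := by
      have hg := hgb (n - 4)
      have : q * gb (n - 4) * (q - 1) = q * (gb (n - 4) * (q - 1)) := by ring
      rw [this, hg, Nat.mul_sub, mul_one, mul_comm q (q ^ (n - 4)), ← hpow]
    have hsub : ({V : Submodule F E | W ≤ V ∧ V ≤ ⊤ ∧ finrank F ↥V = finrank F ↥W + 1}.ncard - 1)
        * (q - 1) = q ^ (n - 3) - q := by
      rw [tsub_mul, h, one_mul]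
      omega
    exact Nat.eq_of_mul_eq_mul_right (show 0 < q - 1 by omega) (hsub.trans hkey.symm)
  have key := fiberCount' B (Set.toFinite _) (fun V => U ⊓ V) (q * gb (n - 4)) ?_
  · have hkpos : 0 < q * gb (n - 4) := by
      have hg := hgb (n - 4)
      have hle : q ≤ q ^ (n - 4) := Nat.le_self_pow (by omega) q
      rcases Nat.eq_zero_or_pos (gb (n - 4)) with h | h
      · rw [h, zero_mul] at hg; omega
      · positivity
    have himg : (fun V => U ⊓ V) '' B = {W : Submodule F E | W ≤ U ∧ finrank F ↥W = 3} := by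
      ext W
      constructor
      · rintro ⟨V, ⟨hV4, hV3⟩, rfl⟩
        exact ⟨inf_le_left, hV3⟩
      · rintro ⟨hWU, hW3⟩
        have hne : {V' ∈ B | U ⊓ V' = W}.Nonempty := by
          rw [← Set.ncard_pos (Set.toFinite _), hfibval W hWU hW3]
          exact hkpos
        obtain ⟨V, hV, hVW⟩ := hne
        exact ⟨V, hV, hVW⟩
    rw [himg] at key
    have hhyp := hyp_le_count (q := q) hq hU4
    have h4 := hgb 4
    have hhypcard : {W : Submodule F E | W ≤ U ∧ finrank F ↥W = 3}.ncard = gb 4 :=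
      Nat.eq_of_mul_eq_mul_right (show 0 < q - 1 by omega) (hhyp.trans h4.symm)
    rw [hhypcard] at key
    rw [key]; ring
  · intro V hV
    obtain ⟨hV4, hV3⟩ := hV
    exact hfibval (U ⊓ V) inf_le_left hV3

lemma hyp0_val (hq : q = Fintype.card F) {U X₀ : Submodule F E} (hU4 : finrank F ↥U = 4)
    (hX0U : X₀ ≤ U) (hX0dim : finrank F ↥X₀ = 2) :
    {W : Submodule F E | W ≤ U ∧ finrank F ↥W = 3 ∧ X₀ ≤ W}.ncard = q + 1 := by
  have hq2' := hq2 (q := q) hq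
  have h := ext_step (M := E) hq hX0U
  rw [hX0dim, hU4] at h
  have hseteq : {V : Submodule F E | X₀ ≤ V ∧ V ≤ U ∧ finrank F ↥V = 2 + 1}
      = {W : Submodule F E | W ≤ U ∧ finrank F ↥W = 3 ∧ X₀ ≤ W} := by
    ext V
    simp only [Set.mem_setOf_eq]
    constructor
    · rintro ⟨h1, h2, h3⟩; exact ⟨h2, h3, h1⟩
    · rintro ⟨h1, h2, h3⟩; exact ⟨h3, h1, h2⟩
  rw [hseteq] at h
  have hid : (q + 1) * (q ^ 2 * (q - 1)) = q ^ 4 - q ^ 2 := by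
    have h1 : q ^ 2 ≤ q ^ 4 := Nat.pow_le_pow_right (by omega) (by omega)
    zify [show 1 ≤ q by omega, h1]
    ring
  exact Nat.eq_of_mul_eq_mul_right
    (Nat.mul_pos (by positivity) (show 0 < q - 1 by omega)) (h.trans hid.symm)

/-- Part 3b: each vertex of C¹ has q+1 neighbours in C². -/
lemma part3b (hq : q = Fintype.card F) (hF'2 : finrank F ↥F' = 2)
    (hL : ∀ X : Submodule F E, X ∈ L ↔ ∃ a : E, a ≠ 0 ∧ (X : Set E) = (fun x => a * x) '' (F' : Set E))
    {U : Submodule F E} (hU4 : finrank F ↥U = 4)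
    (hU1 : {X ∈ L | X ≤ U}.ncard = 1) :
    {V : Submodule F E | finrank F ↥V = 4 ∧ {X ∈ L | X ≤ V}.ncard = q ^ 2 + 1 ∧
      finrank F ↥(U ⊓ V) = 3}.ncard = q + 1 := by
  have hfinsub : Finite (Submodule F E) := finite_submodule (F := F) (E := E)
  have hq2' := hq2 (q := q) hq
  obtain ⟨X₀, hX0s⟩ := Set.ncard_eq_one.mp hU1
  have hX0mem : X₀ ∈ {X ∈ L | X ≤ U} := by rw [hX0s]; rfl
  obtain ⟨hX0L, hX0U⟩ := hX0mem
  have huniq : ∀ X ∈ L, X ≤ U → X = X₀ := by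
    intro X hXL hXU
    have : X ∈ ({X₀} : Set (Submodule F E)) := by rw [← hX0s]; exact ⟨hXL, hXU⟩
    simpa using this
  have hX0dim : finrank F ↥X₀ = 2 := finrank_L F' hF'2 hL hX0L
  set A2 := {V : Submodule F E | finrank F ↥V = 4 ∧ {X ∈ L | X ≤ V}.ncard = q ^ 2 + 1 ∧
      finrank F ↥(U ⊓ V) = 3} with hA2
  -- key fact : X₀ ≤ U ⊓ V for V ∈ A2
  have hX0le : ∀ V ∈ A2, X₀ ≤ U ⊓ V := by
    rintro V ⟨hV4, hVq, hV3⟩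
    have hVcl := isCl_of_ncard_big F' hq hF'2 hL hV4 hVq
    obtain ⟨w, hw0, hwW, hwle⟩ :=
      exists_line_le F' hF'2 hVcl (inf_le_right : U ⊓ V ≤ V) hV3 hV4
    have : lineOf F' w = X₀ :=
      huniq _ (lineOf_mem_L F' hL hw0) (hwle.trans inf_le_left)
    rw [← this]
    exact hwle
  -- injectivity
  have hinj : Set.InjOn (fun V => U ⊓ V) A2 := by
    intro V hV V' hV' h
    simp only at h
    obtain ⟨hV4, hVq, hV3⟩ := hV
    obtain ⟨hV'4, hV'q, hV'3⟩ := hV'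
    have hVcl := isCl_of_ncard_big F' hq hF'2 hL hV4 hVq
    have hV'cl := isCl_of_ncard_big F' hq hF'2 hL hV'4 hV'q
    have hX0W : X₀ ≤ U ⊓ V := hX0le V ⟨hV4, hVq, hV3⟩
    have hlt : X₀ < U ⊓ V := by
      refine lt_of_le_of_ne hX0W ?_
      intro hcon
      rw [← hcon, hX0dim] at hV3; omega
    obtain ⟨w₁, hw₁W, hw₁X⟩ := SetLike.exists_of_lt hlt
    have hw₁0 : w₁ ≠ 0 := fun hcon => hw₁X (hcon ▸ X₀.zero_mem)
    have hw₁V : lineOf F' w₁ ≤ V := isCl_lineOf_le F' hVcl hw₁W.2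
    have hw₁V' : lineOf F' w₁ ≤ V' := by
      refine isCl_lineOf_le F' hV'cl ?_
      have : w₁ ∈ U ⊓ V' := h ▸ hw₁W
      exact this.2
    have hne : X₀ ≠ lineOf F' w₁ := by
      intro hcon
      exact hw₁X (hcon ▸ self_mem_lineOf F' w₁)
    have hZ4 : finrank F ↥(X₀ ⊔ lineOf F' w₁) = 4 :=
      finrank_sup_L F' hF'2 hL hX0L (lineOf_mem_L F' hL hw₁0) hne
    have hZV : X₀ ⊔ lineOf F' w₁ ≤ V := sup_le (hX0W.trans inf_le_right) hw₁V
    have hZV' : X₀ ⊔ lineOf F' w₁ ≤ V' := by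
      refine sup_le ?_ hw₁V'
      have := (hX0le V' ⟨hV'4, hV'q, hV'3⟩).trans inf_le_right
      exact this
    have e1 : X₀ ⊔ lineOf F' w₁ = V := eq_of_le_of_finrank_le hZV (by omega)
    have e2 : X₀ ⊔ lineOf F' w₁ = V' := eq_of_le_of_finrank_le hZV' (by omega)
    rw [← e1, ← e2]
  -- image
  have himg : (fun V => U ⊓ V) '' A2
      = {W : Submodule F E | W ≤ U ∧ finrank F ↥W = 3 ∧ X₀ ≤ W} := by
    ext W
    constructor
    · rintro ⟨V, hV, rfl⟩
      exact ⟨inf_le_left, hV.2.2, hX0le V hV⟩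
    · rintro ⟨hWU, hW3, hX0W⟩
      have hlt : X₀ < W := by
        refine lt_of_le_of_ne hX0W ?_
        intro hcon
        rw [← hcon, hX0dim] at hW3; omega
      obtain ⟨w₁, hw₁W, hw₁X⟩ := SetLike.exists_of_lt hlt
      have hw₁0 : w₁ ≠ 0 := fun hcon => hw₁X (hcon ▸ X₀.zero_mem)
      have hne : X₀ ≠ lineOf F' w₁ := by
        intro hcon
        exact hw₁X (hcon ▸ self_mem_lineOf F' w₁)
      set Z := X₀ ⊔ lineOf F' w₁ with hZ
      have hZ4 : finrank F ↥Z = 4 :=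
        finrank_sup_L F' hF'2 hL hX0L (lineOf_mem_L F' hL hw₁0) hne
      have hZcl : IsCl F' Z :=
        isCl_sup F' (isCl_of_mem_L F' hL hX0L) (isCl_lineOf F' w₁)
      have hZq : {X ∈ L | X ≤ Z}.ncard = q ^ 2 + 1 :=
        lines_count_closed F' hq hF'2 hL hZcl hZ4
      -- W ≤ Z
      have hWeq : X₀ ⊔ Submodule.span F {w₁} = W := by
        refine eq_of_le_of_finrank_le
          (sup_le hX0W (Submodule.span_le.mpr (Set.singleton_subset_iff.mpr hw₁W))) ?_
        rw [finrank_sup_succ hw₁X, hX0dim, hW3]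
      have hWZ : W ≤ Z := by
        rw [← hWeq]
        refine sup_le le_sup_left ?_
        refine le_trans ?_ (le_sup_right : lineOf F' w₁ ≤ Z)
        rw [Submodule.span_le, Set.singleton_subset_iff]
        exact self_mem_lineOf F' w₁
      -- U ⊓ Z = W
      have hUZ : U ⊓ Z = W := by
        have hle1 : W ≤ U ⊓ Z := le_inf hWU hWZ
        have hge : 3 ≤ finrank F ↥(U ⊓ Z) := by
          rw [← hW3]; exact Submodule.finrank_mono hle1
        rcases Nat.lt_or_ge (finrank F ↥(U ⊓ Z)) 4 with hlt4 | hge4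
        · exact (eq_of_le_of_finrank_le hle1 (by omega)).symm
        · exfalso
          have h1 : U ⊓ Z = Z := by
            refine eq_of_le_of_finrank_le inf_le_right ?_
            rw [hZ4]; exact hge4
          have hZU : Z ≤ U := h1 ▸ inf_le_left
          have : Z = U := eq_of_le_of_finrank_le hZU (by rw [hZ4, hU4])
          rw [this] at hZq
          rw [hU1] at hZq
          have hq2pos : 0 < q ^ 2 := by positivity
          omega
      exact ⟨Z, ⟨hZ4, hZq, by rw [hUZ]; exact hW3⟩, hUZ⟩
  have := Set.ncard_image_of_injOn hinj
  rw [himg] at this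
  rw [← this, hyp0_val (q := q) hq hU4 hX0U hX0dim]

/-- Part 3a: each vertex of C¹ has q⁵(q+1)·gb(n-6) neighbours in C⁰. -/
lemma part3a (hq : q = Fintype.card F) (hF'2 : finrank F ↥F' = 2)
    (hL : ∀ X : Submodule F E, X ∈ L ↔ ∃ a : E, a ≠ 0 ∧ (X : Set E) = (fun x => a * x) '' (F' : Set E))
    (gb : ℕ → ℕ) (hgb : ∀ m : ℕ, gb m * (q - 1) = q ^ m - 1)
    {n : ℕ} (hn8 : 8 ≤ n) (hdim : finrank F E = n)
    {U : Submodule F E} (hU4 : finrank F ↥U = 4)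
    (hU1 : {X ∈ L | X ≤ U}.ncard = 1) :
    {V : Submodule F E | finrank F ↥V = 4 ∧ {X ∈ L | X ≤ V}.ncard = 0 ∧
      finrank F ↥(U ⊓ V) = 3}.ncard = q ^ 5 * (q + 1) * gb (n - 6) := by
  have hfinsub : Finite (Submodule F E) := finite_submodule (F := F) (E := E)
  have hq2' := hq2 (q := q) hq
  obtain ⟨X₀, hX0s⟩ := Set.ncard_eq_one.mp hU1
  have hX0mem : X₀ ∈ {X ∈ L | X ≤ U} := by rw [hX0s]; rfl
  obtain ⟨hX0L, hX0U⟩ := hX0mem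
  have huniq : ∀ X ∈ L, X ≤ U → X = X₀ := by
    intro X hXL hXU
    have : X ∈ ({X₀} : Set (Submodule F E)) := by rw [← hX0s]; exact ⟨hXL, hXU⟩
    simpa using this
  have hX0dim : finrank F ↥X₀ = 2 := finrank_L F' hF'2 hL hX0L
  set A0 := {V : Submodule F E | finrank F ↥V = 4 ∧ {X ∈ L | X ≤ V}.ncard = 0 ∧
      finrank F ↥(U ⊓ V) = 3} with hA0
  -- extension count
  have hext : ∀ W : Submodule F E, finrank F ↥W = 3 →
      {V : Submodule F E | W ≤ V ∧ V ≤ ⊤ ∧ finrank F ↥V = finrank F ↥W + 1}.ncard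
        * (q - 1) = q ^ (n - 3) - 1 := by
    intro W hW3
    have h := ext_step (M := E) hq (le_top : W ≤ ⊤)
    rw [hW3, finrank_top, hdim] at h
    have hq3 : (0 : ℕ) < q ^ 3 := by positivity
    have hpow : q ^ n = q ^ 3 * q ^ (n - 3) := by
      rw [← pow_add]; congr 1; omega
    have h2 : q ^ n - q ^ 3 = q ^ 3 * (q ^ (n - 3) - 1) := by
      rw [Nat.mul_sub, hpow, mul_one]
    rw [h2] at h
    apply Nat.eq_of_mul_eq_mul_left hq3
    calc q ^ 3 * ({V : Submodule F E | W ≤ V ∧ V ≤ ⊤ ∧ finrank F ↥V = finrank F ↥W + 1}.ncard * (q - 1))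
        = {V : Submodule F E | W ≤ V ∧ V ≤ ⊤ ∧ finrank F ↥V = finrank F ↥W + 1}.ncard * (q ^ 3 * (q - 1)) := by ring
      _ = q ^ 3 * (q ^ (n - 3) - 1) := by rw [← hW3] at h ⊢; exact h
  -- per-hyperplane fiber value
  have hfibval : ∀ W : Submodule F E, W ≤ U → finrank F ↥W = 3 → ¬ X₀ ≤ W →
      {V' ∈ A0 | U ⊓ V' = W}.ncard = q ^ 3 * gb (n - 6) := by
    intro W hWU hW3 hX0W
    have hnoW : ∀ X ∈ L, ¬ X ≤ W := by
      intro X hXL h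
      exact hX0W ((huniq X hXL (h.trans hWU)) ▸ h)
    have hX0b : X₀ ⊓ W ≠ ⊥ := by
      refine inf_ne_bot_of hX0U hWU ?_
      rw [hU4, hX0dim, hW3]; omega
    have hUeq : W ⊔ X₀ = U := by
      refine eq_of_le_of_finrank_le (sup_le hWU hX0U) ?_
      rw [hU4, sup_line_dim4 F' hF'2 hL hW3 hX0L (hnoW X₀ hX0L) hX0b]
    have hfibeq : {V' ∈ A0 | U ⊓ V' = W}
        = {V : Submodule F E | W ≤ V ∧ V ≤ ⊤ ∧ finrank F ↥V = finrank F ↥W + 1}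
          \ ((fun X => W ⊔ X) '' {X | X ∈ L ∧ X ⊓ W ≠ ⊥}) := by
      ext V
      constructor
      · rintro ⟨hVA, hVW⟩
        obtain ⟨hV4, hV0, hV3⟩ := hVA
        have hnoV := tset_empty F' hL hV0
        refine ⟨⟨hVW ▸ inf_le_right, le_top, by rw [hW3, hV4]⟩, ?_⟩
        intro hcon
        obtain ⟨X, ⟨hXL, hXb⟩, hXeq⟩ := hcon
        exact hnoV X hXL (hXeq ▸ le_sup_right)
      · rintro ⟨⟨hWV, -, hV4'⟩, hVimg⟩
        have hV4 : finrank F ↥V = 4 := by rw [hW3] at hV4'; omega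
        have htset : {X ∈ L | X ≤ V} = ∅ := by
          rw [Set.eq_empty_iff_forall_notMem]
          rintro X ⟨hXL, hXV⟩
          have hnle : ¬ X ≤ W := hnoW X hXL
          have hXb : X ⊓ W ≠ ⊥ := by
            refine inf_ne_bot_of hXV hWV ?_
            rw [hV4, finrank_L F' hF'2 hL hXL, hW3]; omega
          have hVX : W ⊔ X = V := by
            refine eq_of_le_of_finrank_le (sup_le hWV hXV) ?_
            rw [hV4, sup_line_dim4 F' hF'2 hL hW3 hXL hnle hXb]
          exact hVimg ⟨X, ⟨hXL, hXb⟩, hVX⟩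
        have hUV : U ⊓ V = W := by
          have hle1 : W ≤ U ⊓ V := le_inf hWU hWV
          have hge : 3 ≤ finrank F ↥(U ⊓ V) := by
            rw [← hW3]; exact Submodule.finrank_mono hle1
          rcases Nat.lt_or_ge (finrank F ↥(U ⊓ V)) 4 with hlt4 | hge4
          · exact (eq_of_le_of_finrank_le hle1 (by omega)).symm
          · exfalso
            have h1 : U ⊓ V = V := by
              refine eq_of_le_of_finrank_le inf_le_right ?_
              rw [hV4]; exact hge4
            have hVU : V ≤ U := h1 ▸ inf_le_left
            have hVeq : V = U := eq_of_le_of_finrank_le hVU (by rw [hV4, hU4])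
            exact hVimg ⟨X₀, ⟨hX0L, hX0b⟩, hUeq.trans hVeq.symm⟩
        exact ⟨⟨hV4, by rw [htset]; exact Set.ncard_empty _, by rw [hUV]; exact hW3⟩, hUV⟩
    rw [hfibeq]
    have himgsub : (fun X => W ⊔ X) '' {X | X ∈ L ∧ X ⊓ W ≠ ⊥}
        ⊆ {V : Submodule F E | W ≤ V ∧ V ≤ ⊤ ∧ finrank F ↥V = finrank F ↥W + 1} := by
      rintro V ⟨X, ⟨hXL, hXb⟩, rfl⟩
      refine ⟨le_sup_left, le_top, ?_⟩
      rw [sup_line_dim4 F' hF'2 hL hW3 hXL (hnoW X hXL) hXb, hW3]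
    rw [Set.ncard_diff himgsub (Set.toFinite _),
      Set.ncard_image_of_injOn (sup_injOn F' hq hF'2 hL hW3 hnoW)]
    have hec := hext W hW3
    have hlam := lambda_count F' hq hF'2 hL hW3 hnoW
    have h1 : q ^ 3 ≤ q ^ (n - 3) := Nat.pow_le_pow_right (by omega) (by omega)
    have hg := hgb (n - 6)
    have hpow : q ^ (n - 3) = q ^ 3 * q ^ (n - 6) := by
      rw [← pow_add]; congr 1; omega
    have hkey : (q ^ 3 * gb (n - 6)) * (q - 1) = q ^ (n - 3) - q ^ 3 := by
      calc (q ^ 3 * gb (n - 6)) * (q - 1) = q ^ 3 * (gb (n - 6) * (q - 1)) := by ring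
        _ = q ^ 3 * (q ^ (n - 6) - 1) := by rw [hg]
        _ = q ^ (n - 3) - q ^ 3 := by rw [Nat.mul_sub, mul_one, ← hpow]
    have hsub : ({V : Submodule F E | W ≤ V ∧ V ≤ ⊤ ∧ finrank F ↥V = finrank F ↥W + 1}.ncard
        - {X | X ∈ L ∧ X ⊓ W ≠ ⊥}.ncard) * (q - 1) = q ^ (n - 3) - q ^ 3 := by
      rw [tsub_mul, hec, hlam]
      have h2 : 1 ≤ q ^ 3 := Nat.one_le_pow _ _ (by omega)
      omega
    exact Nat.eq_of_mul_eq_mul_right (show 0 < q - 1 by omega) (hsub.trans hkey.symm)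
  -- fiber counting
  have key := fiberCount' A0 (Set.toFinite _) (fun V => U ⊓ V) (q ^ 3 * gb (n - 6)) ?_
  · have hkpos : 0 < q ^ 3 * gb (n - 6) := by
      have hg := hgb (n - 6)
      have hle : q ≤ q ^ (n - 6) := Nat.le_self_pow (by omega) q
      rcases Nat.eq_zero_or_pos (gb (n - 6)) with h | h
      · rw [h, zero_mul] at hg; omega
      · positivity
    have himg : (fun V => U ⊓ V) '' A0
        = {W : Submodule F E | W ≤ U ∧ finrank F ↥W = 3} \
          {W : Submodule F E | W ≤ U ∧ finrank F ↥W = 3 ∧ X₀ ≤ W} := by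
      ext W
      simp only [Set.mem_diff, Set.mem_setOf_eq]
      constructor
      · rintro ⟨V, ⟨hV4, hV0, hV3⟩, rfl⟩
        refine ⟨⟨inf_le_left, hV3⟩, ?_⟩
        rintro ⟨-, -, hX0W⟩
        exact tset_empty F' hL hV0 X₀ hX0L ((hX0W).trans inf_le_right)
      · rintro ⟨⟨hWU, hW3⟩, hno⟩
        have hX0W : ¬ X₀ ≤ W := fun h => hno ⟨hWU, hW3, h⟩
        have hne : {V' ∈ A0 | U ⊓ V' = W}.Nonempty := by
          rw [← Set.ncard_pos (Set.toFinite _), hfibval W hWU hW3 hX0W]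
          exact hkpos
        obtain ⟨V, hV, hVW⟩ := hne
        exact ⟨V, hV, hVW⟩
    rw [himg] at key
    have hdiffsub : {W : Submodule F E | W ≤ U ∧ finrank F ↥W = 3 ∧ X₀ ≤ W}
        ⊆ {W : Submodule F E | W ≤ U ∧ finrank F ↥W = 3} := by
      rintro W ⟨h1, h2, h3⟩; exact ⟨h1, h2⟩
    rw [Set.ncard_diff hdiffsub (Set.toFinite _)] at key
    have hhyp := hyp_le_count (q := q) hq hU4
    have h4 := hgb 4
    have hhypcard : {W : Submodule F E | W ≤ U ∧ finrank F ↥W = 3}.ncard = gb 4 :=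
      Nat.eq_of_mul_eq_mul_right (show 0 < q - 1 by omega) (hhyp.trans h4.symm)
    have hgb4val : gb 4 = q ^ 3 + q ^ 2 + q + 1 := by
      have hid : (q ^ 3 + q ^ 2 + q + 1) * (q - 1) = q ^ 4 - 1 := by
        have h1 : 1 ≤ q ^ 4 := Nat.one_le_pow _ _ (by omega)
        zify [show 1 ≤ q by omega, h1]
        ring
      exact Nat.eq_of_mul_eq_mul_right (show 0 < q - 1 by omega) (h4.trans hid.symm)
    rw [hhypcard, hgb4val, hyp0_val (q := q) hq hU4 hX0U hX0dim] at key
    rw [key]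
    have hsub : q ^ 3 + q ^ 2 + q + 1 - (q + 1) = q ^ 3 + q ^ 2 := by omega
    rw [hsub]
    ring
  · intro V hV
    obtain ⟨hV4, hV0, hV3⟩ := hV
    have hX0W : ¬ X₀ ≤ U ⊓ V := by
      intro h
      exact tset_empty F' hL hV0 X₀ hX0L (h.trans inf_le_right)
    exact hfibval (U ⊓ V) inf_le_left hV3 hX0W

end Stmt13Aux


/-- Let `L` be the Desarguesian 2-spread of `F_q^n ≅ E = F_{q^n}`
(n even, n ≥ 8), arising from the subfield `F'` of order `q²`. The set `C⁰` of
4-dimensional subspaces containing no member of `L` is a completely regular code in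
the Grassmann graph `J_q(n,4)` with covering radius 2 and intersection array
`{[4]_q[3]_q, q+1; q⁵(q+1)[n−6]_q, q[4]_q[n−4]_q}`, where `[m]_q = (q^m−1)/(q−1)`:
with `C¹` and `C²` the 4-subspaces containing exactly 1, resp. `q²+1`, members of `L`,
there are no edges between `C⁰` and `C²`, each vertex of `C⁰` has `[4]_q[3]_q`
neighbors in `C¹`, each vertex of `C¹` has `q⁵(q+1)[n−6]_q` neighbors in `C⁰` and
`q+1` neighbors in `C²`, and each vertex of `C²` has `q[4]_q[n−4]_q` neighbors
in `C¹`. -/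
theorem stmt13 (F E : Type*) [Field F] [Fintype F] [Field E] [Algebra F E]
    (q : ℕ) (hq : q = Fintype.card F)
    (n : ℕ) (hn : Even n) (hn8 : 8 ≤ n) (hdim : Module.finrank F E = n)
    (F' : Subalgebra F E) (hF' : Module.finrank F F' = 2)
    (L : Set (Submodule F E))
    (hL : ∀ X : Submodule F E,
      X ∈ L ↔ ∃ a : E, a ≠ 0 ∧ (X : Set E) = (fun x => a * x) '' (F' : Set E))
    (gb : ℕ → ℕ) (hgb : ∀ m : ℕ, gb m * (q - 1) = q ^ m - 1) :
    (∀ U : Submodule F E, Module.finrank F U = 4 → {X ∈ L | X ≤ U}.ncard = 0 →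
      ∀ V : Submodule F E, Module.finrank F V = 4 →
        {X ∈ L | X ≤ V}.ncard = q ^ 2 + 1 →
        Module.finrank F (U ⊓ V : Submodule F E) ≠ 3) ∧
    (∀ U : Submodule F E, Module.finrank F U = 4 → {X ∈ L | X ≤ U}.ncard = 0 →
      {V : Submodule F E | Module.finrank F V = 4 ∧ {X ∈ L | X ≤ V}.ncard = 1 ∧
        Module.finrank F (U ⊓ V : Submodule F E) = 3}.ncard = gb 4 * gb 3) ∧
    (∀ U : Submodule F E, Module.finrank F U = 4 → {X ∈ L | X ≤ U}.ncard = 1 →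
      {V : Submodule F E | Module.finrank F V = 4 ∧ {X ∈ L | X ≤ V}.ncard = 0 ∧
        Module.finrank F (U ⊓ V : Submodule F E) = 3}.ncard
          = q ^ 5 * (q + 1) * gb (n - 6) ∧
      {V : Submodule F E | Module.finrank F V = 4 ∧
        {X ∈ L | X ≤ V}.ncard = q ^ 2 + 1 ∧
        Module.finrank F (U ⊓ V : Submodule F E) = 3}.ncard = q + 1) ∧
    (∀ U : Submodule F E, Module.finrank F U = 4 →
      {X ∈ L | X ≤ U}.ncard = q ^ 2 + 1 →
      {V : Submodule F E | Module.finrank F V = 4 ∧ {X ∈ L | X ≤ V}.ncard = 1 ∧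
        Module.finrank F (U ⊓ V : Submodule F E) = 3}.ncard
          = q * (gb 4 * gb (n - 4))) := by
  have hfd : FiniteDimensional F E :=
    Module.finite_of_finrank_pos (by rw [hdim]; omega)
  refine ⟨?_, ?_, ?_, ?_⟩
  · intro U hU4 hU0 V hV4 hVq
    exact Stmt13Aux.part1 F' hq hF' hL hU4 hU0 hV4 hVq
  · intro U hU4 hU0
    exact Stmt13Aux.part2 F' hq hF' hL gb hgb hU4 hU0
  · intro U hU4 hU1
    exact ⟨Stmt13Aux.part3a F' hq hF' hL gb hgb hn8 hdim hU4 hU1,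
      Stmt13Aux.part3b F' hq hF' hL hU4 hU1⟩
  · intro U hU4 hUq
    exact Stmt13Aux.part4 F' hq hF' hL gb hgb hn8 hdim hU4 hUq
end

section
/- Any (k−1)-(n,k,λ) design D, viewed as a set of vertices of the Johnson graph J(n,k), is a completely regular code with covering radius 1: there exist constants β₀ and γ₁ ≥ 1 such that every block of D has exactly β₀ neighbors outside D and every k-subset not in D has exactly γ₁ neighbors in D. -/
/-! Group the neighbours `y` of a `k`-set `x` by the `(k-1)`-set `x ∩ y`. Those with
`x ∩ y = s` are the `k`-supersets of `s` other than `x`; there are `n - k + 1` such supersets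
and exactly `λ` of them lie in `D`. So every block has `k (n - k + 1 - λ)` neighbours outside
`D`, and every other `k`-set has `k λ` neighbours in `D`. -/

open Finset

section

variable {α : Type*} [DecidableEq α]

theorem inter_eq_of_subset_of_card_eq_succ {s x y : Finset α} (hsx : s ⊆ x) (hsy : s ⊆ y)
    (hx : #x = #s + 1) (hy : #y = #x) (hne : y ≠ x) : x ∩ y = s := by
  have hlt : #(x ∩ y) < #x := by
    refine card_lt_card <|
      Finset.ssubset_iff_subset_ne.mpr ⟨inter_subset_left, fun hxy => hne ?_⟩
    exact (eq_of_subset_of_card_le (inter_eq_left.mp hxy) hy.le).symm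
  exact (eq_of_subset_of_card_le (subset_inter hsx hsy) (by omega)).symm

variable [Fintype α]

theorem card_filter_supset_card_succ (s : Finset α) :
    #{t : Finset α | s ⊆ t ∧ #t = #s + 1} = Fintype.card α - #s := by
  have himage : ({t : Finset α | s ⊆ t ∧ #t = #s + 1} : Finset (Finset α))
      = sᶜ.image (insert · s) := by
    ext t
    simp only [mem_filter, mem_univ, true_and, mem_image, mem_compl]
    constructor
    · rintro ⟨hst, ht⟩
      obtain ⟨a, has, rfl⟩ := exists_eq_insert_iff.mpr ⟨hst, ht.symm⟩
      exact ⟨a, has, rfl⟩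
    · rintro ⟨a, has, rfl⟩
      exact ⟨subset_insert a s, card_insert_of_notMem has⟩
  rw [himage, card_image_of_injOn fun a ha b _ hab => (insert_inj (mem_compl.mp ha)).mp hab,
    card_compl]

theorem card_neighbors_filter_eq_mul {m c : ℕ} {x : Finset α} (hx : #x = m + 1)
    (P : Finset α → Prop) [DecidablePred P] (hPx : ¬ P x)
    (hfiber : ∀ s ⊆ x, #s = m → #{y | s ⊆ y ∧ #y = m + 1 ∧ P y} = c) :
    #{y | #y = m + 1 ∧ #(x ∩ y) = m ∧ P y} = (m + 1) * c := by
  rw [card_eq_sum_card_fiberwise (f := (x ∩ ·)) (t := x.powersetCard m)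
    fun y hy => mem_powersetCard.mpr ⟨inter_subset_left, (mem_filter.mp hy).2.2.1⟩]
  rw [sum_const_nat fun s hs => ?_, card_powersetCard, hx, Nat.choose_succ_self_right]
  obtain ⟨hsx, hs⟩ := mem_powersetCard.mp hs
  rw [← hfiber s hsx hs, filter_filter]
  congr 1
  refine filter_congr fun y _ => ⟨?_, ?_⟩
  · rintro ⟨⟨hy, -, hPy⟩, rfl⟩
    exact ⟨inter_subset_right, hy, hPy⟩
  · rintro ⟨hsy, hy, hPy⟩
    have hxy : x ∩ y = s := inter_eq_of_subset_of_card_eq_succ hsx hsy (by omega) (by omega)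
      (by rintro rfl; exact hPx hPy)
    exact ⟨⟨hy, hxy ▸ hs, hPy⟩, hxy⟩

theorem card_filter_supset_mem {m : ℕ} (D : Set (Finset α)) [DecidablePred (· ∈ D)]
    (hD : ∀ B ∈ D, #B = m + 1) (s : Finset α) :
    #{y | s ⊆ y ∧ #y = m + 1 ∧ y ∈ D} = #{B | B ∈ D ∧ s ⊆ B} :=
  congrArg card <| filter_congr fun y _ =>
    ⟨fun h => ⟨h.2.2, h.1⟩, fun h => ⟨h.2, hD y h.1, h.1⟩⟩

theorem card_filter_supset_not_mem {m : ℕ} (D : Set (Finset α)) [DecidablePred (· ∈ D)]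
    (hD : ∀ B ∈ D, #B = m + 1) {s : Finset α} (hs : #s = m) :
    #{y | s ⊆ y ∧ #y = m + 1 ∧ y ∉ D}
      = Fintype.card α - m - #{B | B ∈ D ∧ s ⊆ B} := by
  have hsplit := card_filter_add_card_filter_not (s := {t | s ⊆ t ∧ #t = #s + 1}) (· ∈ D)
  rw [filter_filter, filter_filter, card_filter_supset_card_succ, hs] at hsplit
  simp only [and_assoc] at hsplit
  rw [card_filter_supset_mem D hD] at hsplit
  omega

end

theorem stmt16_general (n k lam : ℕ) (hk : 1 ≤ k) (hlam : 1 ≤ lam)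
    (D : Set (Finset (Fin n)))
    (hDk : ∀ B ∈ D, B.card = k)
    (hdes : ∀ s : Finset (Fin n), s.card = k - 1 → {B ∈ D | s ⊆ B}.ncard = lam) :
    ∃ β₀ γ₁ : ℕ, 1 ≤ γ₁ ∧
      (∀ x ∈ D, {y : Finset (Fin n) | y.card = k ∧ (x ∩ y).card = k - 1 ∧
        y ∉ D}.ncard = β₀) ∧
      (∀ x : Finset (Fin n), x.card = k → x ∉ D →
        {y ∈ D | (x ∩ y).card = k - 1}.ncard = γ₁) := by
  classical
  obtain ⟨m, rfl⟩ : ∃ m, k = m + 1 := ⟨k - 1, by omega⟩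
  simp only [Nat.add_sub_cancel, Set.ncard_eq_toFinset_card', Set.toFinset_ofPred] at hdes ⊢
  refine ⟨(m + 1) * (n - m - lam), (m + 1) * lam, Nat.mul_pos m.succ_pos hlam, ?_, ?_⟩
  · intro x hxD
    rw [card_neighbors_filter_eq_mul (hDk x hxD) (· ∉ D) (not_not.mpr hxD) fun s _ hs => by
      rw [card_filter_supset_not_mem D hDk hs, hdes s hs, Fintype.card_fin]]
  · intro x hx hxD
    have hneighbors : #{y | y ∈ D ∧ #(x ∩ y) = m}
        = #{y | #y = m + 1 ∧ #(x ∩ y) = m ∧ y ∈ D} :=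
      congrArg card <| filter_congr fun y _ =>
        ⟨fun h => ⟨hDk y h.1, h.2, h.1⟩, fun h => ⟨h.2.2, h.2.1⟩⟩
    rw [hneighbors, card_neighbors_filter_eq_mul hx (· ∈ D) hxD fun s _ hs => by
      rw [card_filter_supset_mem D hDk, hdes s hs]]

/-- Any `(k−1)-(n,k,λ)` design `D`, viewed as a set of vertices of the
Johnson graph `J(n,k)`, is a completely regular code with covering radius 1: there
exist constants `β₀` and `γ₁ ≥ 1` such that every block of `D` has exactly `β₀`
neighbors outside `D` and every `k`-subset not in `D` has exactly `γ₁` neighbors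
in `D`. -/
theorem stmt16 (n k lam : ℕ) (hk : 1 ≤ k) (hkn : k + 1 ≤ n) (hlam : 1 ≤ lam)
    (D : Set (Finset (Fin n)))
    (hDk : ∀ B ∈ D, B.card = k)
    (hdes : ∀ s : Finset (Fin n), s.card = k - 1 → {B ∈ D | s ⊆ B}.ncard = lam) :
    ∃ β₀ γ₁ : ℕ, 1 ≤ γ₁ ∧
      (∀ x ∈ D, {y : Finset (Fin n) | y.card = k ∧ (x ∩ y).card = k - 1 ∧
        y ∉ D}.ncard = β₀) ∧
      (∀ x : Finset (Fin n), x.card = k → x ∉ D →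
        {y ∈ D | (x ∩ y).card = k - 1}.ncard = γ₁) :=
  stmt16_general n k lam hk hlam D hDk hdes
end
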